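/- arXiv:1305.2902 — 13 statements merged into one kernel-verified Lean document; each statement's English description precedes it below -/
import Mathlib

section
/- Let q ≥ 1 and Δ ≥ 3 be integers and let B be a symmetric q×q real matrix with nonnegative entries having at least one positive entry. Then the supremum of Υ₂(γ,δ,y) over all triples (γ,δ,y) that are feasible for the second moment is finite, is attained, and equals exactly twice the supremum of Υ₁(α,β,x) over all triples (α,β,x) that are feasible for the first moment (which is likewise finite and attained). -/
/-!
Both moments are governed by the potential `Φ_C(b) = ∑ᵢ (∑ⱼ C i j * b j ^ t) ^ Δ`,
`t = (Δ-1)/Δ`, on the simplex. Rewriting `Υ₁ = Δ ∑ x i j * log (C i j * α i ^ t * β j ^ t / x i j)`,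
Gibbs' inequality and Hölder's inequality give `Υ₁ (α, β, x) ≤ log Φ_B(β)`. Conversely, for every
`b` in the simplex the coupling `x i j ∝ B i j * r i ^ (Δ-1) * b j ^ t` with `r = B b^t` has value
`log Φ_B(b) + (Δ-1) KL(β ‖ b) ≥ log Φ_B(b)`, so `max Υ₁ = log max Φ_B`.

The second moment is the first moment of the Kronecker square `B ⊗ B`, hence
`max Υ₂ ≤ log max Φ_{B⊗B}`. The bound `Φ_C ≤ K` on the simplex says that
`‖C u‖_Δ ^ Δ ≤ K ‖u‖_p ^ Δ` for `u ≥ 0` and `p = Δ/(Δ-1)`, and Minkowski's inequality in `ℓ^p`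
makes this bound submultiplicative under Kronecker products: `max Φ_{B⊗B} ≤ (max Φ_B)²`.
The tensor square of an optimal first-moment triple attains `2 max Υ₁`.
-/

open Finset Real Matrix
open scoped Kronecker

namespace SpinSystem

variable {ι κ I J I' J' : Type*} [Fintype ι] [Fintype κ] [Fintype I] [Fintype J]
  [Fintype I'] [Fintype J']

theorem sum_pos_of_sum_eq_one {x w : ι → ℝ} (hx : ∑ k, x k = 1) (hw : ∀ k, 0 ≤ w k)
    (hxw : ∀ k, 0 < x k → 0 < w k) : 0 < ∑ k, w k := by
  obtain ⟨k, -, hk⟩ := exists_lt_of_sum_lt (f := 0) (g := x) (s := univ) (by simp [hx])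
  exact sum_pos' (fun k _ => hw k) ⟨k, mem_univ k, hxw k hk⟩

theorem sum_mul_log_sub_log_le_log_sum {x w : ι → ℝ} (hx : ∀ k, 0 ≤ x k) (hx1 : ∑ k, x k = 1)
    (hw : ∀ k, 0 ≤ w k) (hxw : ∀ k, 0 < x k → 0 < w k) :
    ∑ k, x k * (log (w k) - log (x k)) ≤ log (∑ k, w k) := by
  set S := ∑ k, w k
  have hS : 0 < S := sum_pos_of_sum_eq_one hx1 hw hxw
  have hterm : ∀ k, x k * (log (w k) - log (x k)) ≤ w k / S - x k + x k * log S := by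
    intro k
    rcases (hx k).eq_or_lt with hxk | hxk
    · simpa [← hxk] using div_nonneg (hw k) hS.le
    have hwk := hxw k hxk
    have h := mul_le_mul_of_nonneg_left
      (log_le_sub_one_of_pos (show 0 < w k / (x k * S) by positivity)) hxk.le
    rw [log_div hwk.ne' (by positivity), log_mul hxk.ne' hS.ne',
      show x k * (w k / (x k * S) - 1) = w k / S - x k by field_simp] at h
    linear_combination h
  calc ∑ k, x k * (log (w k) - log (x k)) ≤ ∑ k, (w k / S - x k + x k * log S) :=
        sum_le_sum fun k _ => hterm k
    _ = log S := by
        rw [sum_add_distrib, sum_sub_distrib, ← sum_div, ← sum_mul, hx1, div_self hS.ne']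
        ring

theorem rpow_sum_sum_mul_le {p : ℝ} (hp : 1 ≤ p) {c : κ → ℝ} (hc : ∀ l, 0 ≤ c l)
    {V : ι → κ → ℝ} (hV : ∀ j l, 0 ≤ V j l) :
    (∑ j, (∑ l, c l * V j l) ^ p) ^ p⁻¹ ≤ ∑ l, c l * (∑ j, V j l ^ p) ^ p⁻¹ := by
  have : Fact (1 ≤ ENNReal.ofReal p) := ⟨ENNReal.one_le_ofReal.2 hp⟩
  have hnorm : ∀ v : ι → ℝ, (∀ j, 0 ≤ v j) →
      ‖WithLp.toLp (ENNReal.ofReal p) v‖ = (∑ j, v j ^ p) ^ p⁻¹ := fun v hv => by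
    rw [PiLp.norm_eq_sum (by rw [ENNReal.toReal_ofReal (by linarith)]; linarith),
      ENNReal.toReal_ofReal (by linarith), one_div]
    simp [abs_of_nonneg (hv _)]
  calc (∑ j, (∑ l, c l * V j l) ^ p) ^ p⁻¹
      = ‖∑ l, c l • WithLp.toLp (ENNReal.ofReal p) fun j => V j l‖ := by
        rw [← hnorm _ fun j => sum_nonneg fun l _ => mul_nonneg (hc l) (hV j l)]
        congr 1
        ext j
        simp
    _ ≤ ∑ l, ‖c l • WithLp.toLp (ENNReal.ofReal p) fun j => V j l‖ := norm_sum_le _ _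
    _ = ∑ l, c l * (∑ j, V j l ^ p) ^ p⁻¹ := by
        simp only [norm_smul, Real.norm_eq_abs, abs_of_nonneg (hc _), hnorm _ fun j => hV j _]

theorem sum_mul_mul_log_mul {f F : ι → ℝ} {g G : κ → ℝ} (hf : ∑ i, f i = 1) (hg : ∑ k, g k = 1)
    (hF : ∀ i, f i ≠ 0 → F i ≠ 0) (hG : ∀ k, g k ≠ 0 → G k ≠ 0) :
    ∑ p : ι × κ, f p.1 * g p.2 * log (F p.1 * G p.2) =
      ∑ i, f i * log (F i) + ∑ k, g k * log (G k) := by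
  have hterm : ∀ i k, f i * g k * log (F i * G k) =
      g k * (f i * log (F i)) + f i * (g k * log (G k)) := by
    intro i k
    by_cases hfi : f i = 0
    · simp [hfi]
    by_cases hgk : g k = 0
    · simp [hgk]
    rw [log_mul (hF i hfi) (hG k hgk)]
    ring
  simp only [Fintype.sum_prod_type, hterm, sum_add_distrib, ← sum_mul, ← mul_sum, hf, hg, one_mul]

noncomputable def potentialExponent (Δ : ℕ) : ℝ := ((Δ : ℝ) - 1) / Δ

theorem potentialExponent_nonneg (Δ : ℕ) : 0 ≤ potentialExponent Δ := by
  rcases Nat.eq_zero_or_pos Δ with rfl | hΔ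
  · simp [potentialExponent]
  · exact div_nonneg (by simp [Nat.one_le_cast.2 hΔ]) (Nat.cast_nonneg Δ)

theorem potentialExponent_pos {Δ : ℕ} (hΔ : 1 < Δ) : 0 < potentialExponent Δ :=
  div_pos (by simp [Nat.one_lt_cast.2 hΔ]) (by positivity)

theorem potentialExponent_le_one (Δ : ℕ) : potentialExponent Δ ≤ 1 :=
  div_le_one_of_le₀ (by linarith) (Nat.cast_nonneg Δ)

theorem cast_mul_potentialExponent {Δ : ℕ} (hΔ : Δ ≠ 0) :
    (Δ : ℝ) * potentialExponent Δ = Δ - 1 :=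
  mul_div_cancel₀ _ (Nat.cast_ne_zero.2 hΔ)

theorem rpow_potentialExponent_pow {Δ : ℕ} (hΔ : Δ ≠ 0) {s : ℝ} (hs : 0 ≤ s) :
    (s ^ potentialExponent Δ) ^ Δ = s ^ (Δ - 1) := by
  rw [← rpow_natCast, ← rpow_mul hs, mul_comm, cast_mul_potentialExponent hΔ, ← rpow_natCast,
    Nat.cast_sub (Nat.one_le_iff_ne_zero.2 hΔ), Nat.cast_one]

theorem holderConjugate_potentialExponent {Δ : ℕ} (hΔ : 1 < Δ) :
    (potentialExponent Δ)⁻¹.HolderConjugate Δ := by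
  have hΔ0 : (0 : ℝ) < Δ := by positivity
  simpa using HolderConjugate.inv_inv (potentialExponent_pos hΔ) (inv_pos.2 hΔ0)
    (by rw [potentialExponent]; field_simp; ring)

theorem sum_rpow_potentialExponent_mul_pow_le {Δ : ℕ} (hΔ : 1 < Δ) {a r : ι → ℝ}
    (ha : ∀ i, 0 ≤ a i) (ha1 : ∑ i, a i = 1) (hr : ∀ i, 0 ≤ r i) :
    (∑ i, a i ^ potentialExponent Δ * r i) ^ Δ ≤ ∑ i, r i ^ Δ := by
  set t := potentialExponent Δ
  have hpq : t⁻¹.HolderConjugate Δ := holderConjugate_potentialExponent hΔ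
  have holder := inner_le_Lp_mul_Lq_of_nonneg univ hpq
    (fun i _ => rpow_nonneg (ha i) t) (fun i _ => hr i)
  have hsum : ∑ i, (a i ^ t) ^ t⁻¹ = 1 := by
    rw [← ha1]
    exact sum_congr rfl fun i _ => by
      rw [← rpow_mul (ha i), mul_inv_cancel₀ (potentialExponent_pos hΔ).ne', rpow_one]
  simp_rw [hsum, one_rpow, one_mul, rpow_natCast] at holder
  have hr' : 0 ≤ ∑ i, r i ^ Δ := sum_nonneg fun i _ => pow_nonneg (hr i) Δ
  calc (∑ i, a i ^ t * r i) ^ Δ ≤ ((∑ i, r i ^ Δ) ^ (1 / (Δ : ℝ))) ^ Δ :=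
        pow_le_pow_left₀ (sum_nonneg fun i _ => mul_nonneg (rpow_nonneg (ha i) t) (hr i)) holder Δ
    _ = ∑ i, r i ^ Δ := by
        rw [← rpow_natCast, ← rpow_mul hr', one_div_mul_cancel (by positivity), rpow_one]

noncomputable def potential (Δ : ℕ) (C : Matrix I J ℝ) (b : J → ℝ) : ℝ :=
  ∑ i, (∑ j, C i j * b j ^ potentialExponent Δ) ^ Δ

noncomputable def firstMomentValue (Δ : ℕ) (C : Matrix I J ℝ) (a : I → ℝ) (b : J → ℝ)
    (x : I → J → ℝ) : ℝ :=
  ((Δ : ℝ) - 1) * ((∑ i, a i * log (a i)) + ∑ j, b j * log (b j))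
    + (Δ : ℝ) * ((∑ i, ∑ j, x i j * log (C i j)) - ∑ i, ∑ j, x i j * log (x i j))

structure IsFirstMomentFeasible (C : Matrix I J ℝ) (a : I → ℝ) (b : J → ℝ) (x : I → J → ℝ) :
    Prop where
  nonneg : ∀ i j, 0 ≤ x i j
  eq_zero_of_eq_zero : ∀ i j, C i j = 0 → x i j = 0
  sum_row : ∀ i, ∑ j, x i j = a i
  sum_col : ∀ j, ∑ i, x i j = b j
  sum_left : ∑ i, a i = 1

namespace IsFirstMomentFeasible

variable {C : Matrix I J ℝ} {a : I → ℝ} {b : J → ℝ} {x : I → J → ℝ}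

theorem left_nonneg (h : IsFirstMomentFeasible C a b x) (i : I) : 0 ≤ a i :=
  h.sum_row i ▸ sum_nonneg fun j _ => h.nonneg i j

theorem right_nonneg (h : IsFirstMomentFeasible C a b x) (j : J) : 0 ≤ b j :=
  h.sum_col j ▸ sum_nonneg fun i _ => h.nonneg i j

theorem sum_sum (h : IsFirstMomentFeasible C a b x) : ∑ i, ∑ j, x i j = 1 := by
  simp only [h.sum_row, h.sum_left]

theorem sum_right (h : IsFirstMomentFeasible C a b x) : ∑ j, b j = 1 := by
  rw [← h.sum_sum, sum_comm]
  simp only [h.sum_col]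

theorem right_mem_stdSimplex (h : IsFirstMomentFeasible C a b x) : b ∈ stdSimplex ℝ J :=
  ⟨h.right_nonneg, h.sum_right⟩

theorem sum_sum_mul_left (h : IsFirstMomentFeasible C a b x) (f : I → ℝ) :
    ∑ i, ∑ j, x i j * f i = ∑ i, a i * f i := by
  simp only [← sum_mul, h.sum_row]

theorem sum_sum_mul_right (h : IsFirstMomentFeasible C a b x) (g : J → ℝ) :
    ∑ i, ∑ j, x i j * g j = ∑ j, b j * g j := by
  rw [sum_comm]
  simp only [← sum_mul, h.sum_col]

theorem left_pos (h : IsFirstMomentFeasible C a b x) {i : I} {j : J} (hx : 0 < x i j) :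
    0 < a i :=
  hx.trans_le (h.sum_row i ▸ single_le_sum (fun j _ => h.nonneg i j) (mem_univ j))

theorem right_pos (h : IsFirstMomentFeasible C a b x) {i : I} {j : J} (hx : 0 < x i j) :
    0 < b j :=
  hx.trans_le (h.sum_col j ▸ single_le_sum (fun i _ => h.nonneg i j) (mem_univ i))

theorem entry_ne_zero (h : IsFirstMomentFeasible C a b x) {i : I} {j : J} (hx : 0 < x i j) :
    C i j ≠ 0 :=
  fun hC => hx.ne' (h.eq_zero_of_eq_zero i j hC)

theorem firstMomentValue_eq {Δ : ℕ} (hΔ : Δ ≠ 0) (h : IsFirstMomentFeasible C a b x) :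
    firstMomentValue Δ C a b x = Δ * ∑ i, ∑ j, x i j *
      (log (C i j * a i ^ potentialExponent Δ * b j ^ potentialExponent Δ) - log (x i j)) := by
  set t := potentialExponent Δ
  have hterm : ∀ i j, x i j * (log (C i j * a i ^ t * b j ^ t) - log (x i j)) =
      x i j * log (C i j) + t * (x i j * log (a i)) + t * (x i j * log (b j))
        - x i j * log (x i j) := by
    intro i j
    rcases (h.nonneg i j).eq_or_lt with hx | hx
    · simp [← hx]
    have ha := h.left_pos hx
    have hb := h.right_pos hx
    rw [log_mul (mul_ne_zero (h.entry_ne_zero hx) (rpow_pos_of_pos ha t).ne')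
      (rpow_pos_of_pos hb t).ne', log_mul (h.entry_ne_zero hx) (rpow_pos_of_pos ha t).ne',
      log_rpow ha, log_rpow hb]
    ring
  simp only [hterm, sum_add_distrib, sum_sub_distrib, ← mul_sum,
    h.sum_sum_mul_left fun i => log (a i), h.sum_sum_mul_right fun j => log (b j)]
  rw [firstMomentValue]
  linear_combination -(∑ i, a i * log (a i) + ∑ j, b j * log (b j)) *
    cast_mul_potentialExponent hΔ

theorem firstMomentValue_le_log {Δ : ℕ} (hΔ : 1 < Δ) (hC : ∀ i j, 0 ≤ C i j)
    (h : IsFirstMomentFeasible C a b x) {K : ℝ} (hK : potential Δ C b ≤ K) :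
    firstMomentValue Δ C a b x ≤ log K := by
  set t := potentialExponent Δ
  set w : I × J → ℝ := fun p => C p.1 p.2 * a p.1 ^ t * b p.2 ^ t
  have hw : ∀ p, 0 ≤ w p := fun p =>
    mul_nonneg (mul_nonneg (hC _ _) (rpow_nonneg (h.left_nonneg _) t))
      (rpow_nonneg (h.right_nonneg _) t)
  have hxw : ∀ p : I × J, 0 < x p.1 p.2 → 0 < w p := fun p hx =>
    mul_pos (mul_pos ((hC _ _).lt_of_ne' (h.entry_ne_zero hx)) (rpow_pos_of_pos (h.left_pos hx) t))
      (rpow_pos_of_pos (h.right_pos hx) t)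
  have hx1 : ∑ p : I × J, x p.1 p.2 = 1 := by rw [Fintype.sum_prod_type]; exact h.sum_sum
  have gibbs := sum_mul_log_sub_log_le_log_sum (x := fun p : I × J => x p.1 p.2)
    (fun p => h.nonneg _ _) hx1 hw hxw
  rw [Fintype.sum_prod_type] at gibbs
  have hS : 0 < ∑ p, w p := sum_pos_of_sum_eq_one hx1 hw hxw
  have holder : (∑ p, w p) ^ Δ ≤ potential Δ C b := by
    have hw_sum : ∑ p, w p = ∑ i, a i ^ t * ∑ j, C i j * b j ^ t := by
      simp only [w, Fintype.sum_prod_type, mul_sum]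
      exact sum_congr rfl fun i _ => sum_congr rfl fun j _ => by ring
    rw [hw_sum]
    exact sum_rpow_potentialExponent_mul_pow_le hΔ h.left_nonneg h.sum_left fun i =>
      sum_nonneg fun j _ => mul_nonneg (hC i j) (rpow_nonneg (h.right_nonneg j) t)
  rw [h.firstMomentValue_eq (by omega)]
  calc (Δ : ℝ) * ∑ i, ∑ j, x i j * (log (C i j * a i ^ t * b j ^ t) - log (x i j))
      ≤ Δ * log (∑ p, w p) := mul_le_mul_of_nonneg_left gibbs (Nat.cast_nonneg Δ)
    _ = log ((∑ p, w p) ^ Δ) := by rw [log_pow]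
    _ ≤ log K := log_le_log (pow_pos hS Δ) (holder.trans hK)


end IsFirstMomentFeasible

theorem continuous_potential (Δ : ℕ) (C : Matrix I J ℝ) : Continuous (potential Δ C) :=
  continuous_finsetSum _ fun _ _ => (continuous_finsetSum _ fun j _ => continuous_const.mul
    ((continuous_rpow_const (potentialExponent_nonneg Δ)).comp (continuous_apply j))).pow Δ

theorem exists_isMaxOn_potential [Nonempty J] (Δ : ℕ) (C : Matrix I J ℝ) :
    ∃ b ∈ stdSimplex ℝ J, IsMaxOn (potential Δ C) (stdSimplex ℝ J) b := by
  classical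
  exact (isCompact_stdSimplex ℝ J).exists_isMaxOn
    ⟨_, single_mem_stdSimplex ℝ (Classical.arbitrary J)⟩ (continuous_potential Δ C).continuousOn

theorem potential_single [DecidableEq J] {Δ : ℕ} (hΔ : 1 < Δ) (C : Matrix I J ℝ) (j : J) :
    potential Δ C (Pi.single j 1) = ∑ i, C i j ^ Δ := by
  have hsingle : ∀ j', (Pi.single j (1 : ℝ) : J → ℝ) j' ^ potentialExponent Δ =
      (Pi.single j (1 : ℝ) : J → ℝ) j' := by
    intro j'
    rcases eq_or_ne j' j with rfl | hj
    · simp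
    · simp [hj, zero_rpow (potentialExponent_pos hΔ).ne']
  simp only [potential, hsingle]
  simp [Pi.single_apply]

theorem potential_pos_of_isMaxOn {Δ : ℕ} (hΔ : 1 < Δ) {C : Matrix I J ℝ} (hC : ∀ i j, 0 ≤ C i j)
    {i₀ : I} {j₀ : J} (hpos : 0 < C i₀ j₀) {b : J → ℝ}
    (hb : IsMaxOn (potential Δ C) (stdSimplex ℝ J) b) : 0 < potential Δ C b := by
  classical
  calc 0 < ∑ i, C i j₀ ^ Δ :=
        sum_pos' (fun i _ => pow_nonneg (hC i j₀) Δ) ⟨i₀, mem_univ _, pow_pos hpos Δ⟩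
    _ = potential Δ C (Pi.single j₀ 1) := (potential_single hΔ C j₀).symm
    _ ≤ potential Δ C b := hb (single_mem_stdSimplex ℝ j₀)

noncomputable def potentialCoupling (Δ : ℕ) (C : Matrix I J ℝ) (b : J → ℝ) (i : I) (j : J) : ℝ :=
  C i j * (∑ j', C i j' * b j' ^ potentialExponent Δ) ^ (Δ - 1) * b j ^ potentialExponent Δ /
    potential Δ C b

theorem isFirstMomentFeasible_potentialCoupling {Δ : ℕ} (hΔ : Δ ≠ 0) {C : Matrix I J ℝ}
    (hC : ∀ i j, 0 ≤ C i j) {b : J → ℝ} (hb : ∀ j, 0 ≤ b j) (hK : 0 < potential Δ C b) :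
    IsFirstMomentFeasible C
      (fun i => (∑ j, C i j * b j ^ potentialExponent Δ) ^ Δ / potential Δ C b)
      (fun j => ∑ i, potentialCoupling Δ C b i j) (potentialCoupling Δ C b) where
  nonneg i j := div_nonneg (mul_nonneg (mul_nonneg (hC i j) (pow_nonneg (sum_nonneg fun j _ =>
    mul_nonneg (hC i j) (rpow_nonneg (hb j) _)) _)) (rpow_nonneg (hb j) _)) hK.le
  eq_zero_of_eq_zero i j h := by simp [potentialCoupling, h]
  sum_row i := by
    simp only [potentialCoupling, ← sum_div]
    rw [← pow_sub_one_mul hΔ, mul_sum]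
    exact congrArg (· / _) (sum_congr rfl fun j _ => by ring)
  sum_col _ := rfl
  sum_left := by rw [← sum_div]; exact div_self hK.ne'

theorem exists_isFirstMomentFeasible_log_potential_le {Δ : ℕ} (hΔ : 1 < Δ) {C : Matrix I J ℝ}
    (hC : ∀ i j, 0 ≤ C i j) {b : J → ℝ} (hb : b ∈ stdSimplex ℝ J) (hK : 0 < potential Δ C b) :
    ∃ a β x, IsFirstMomentFeasible C a β x ∧
      log (potential Δ C b) ≤ firstMomentValue Δ C a β x := by
  have hx := isFirstMomentFeasible_potentialCoupling (by omega) hC hb.1 hK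
  refine ⟨_, _, _, hx, ?_⟩
  set t := potentialExponent Δ with ht_def
  have ht : 0 < t := potentialExponent_pos hΔ
  set K := potential Δ C b
  set r : I → ℝ := fun i => ∑ j, C i j * b j ^ t
  have hr : ∀ i, 0 ≤ r i := fun i =>
    sum_nonneg fun j _ => mul_nonneg (hC i j) (rpow_nonneg (hb.1 j) t)
  set x := potentialCoupling Δ C b
  set β : J → ℝ := fun j => ∑ i, x i j
  have hx_def : ∀ i j, x i j = C i j * r i ^ (Δ - 1) * b j ^ t / K := fun _ _ => rfl
  have hbx : ∀ i j, b j = 0 → x i j = 0 := fun i j h0 => by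
    rw [hx_def, h0, zero_rpow ht.ne', mul_zero, zero_div]
  have hterm : ∀ i j, x i j * (log (C i j * (r i ^ Δ / K) ^ t * β j ^ t) - log (x i j)) =
      x i j * ((1 - t) * log K + t * (log (β j) - log (b j))) := by
    intro i j
    rcases (hx.nonneg i j).eq_or_lt with h0 | hpos
    · simp [← h0]
    have hCij := (hC i j).lt_of_ne' (hx.entry_ne_zero hpos)
    have hbj : 0 < b j := (hb.1 j).lt_of_ne' fun h0 => hpos.ne' (hbx i j h0)
    have hri : 0 < r i := (hr i).lt_of_ne' fun h0 => hpos.ne' (by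
        rw [hx_def, h0, zero_pow (by omega : Δ - 1 ≠ 0), mul_zero, zero_mul, zero_div])
    have hβj := hx.right_pos hpos
    rw [log_mul (by positivity) (by positivity), log_mul (by positivity) (by positivity),
      log_rpow (by positivity), log_rpow hβj, log_div (by positivity) hK.ne', log_pow,
      hx_def, log_div (by positivity) hK.ne',
      log_mul (by positivity) (by positivity), log_mul (by positivity) (by positivity), log_pow,
      log_rpow hbj, Nat.cast_sub (by omega : 1 ≤ Δ), Nat.cast_one]
    linear_combination C i j * r i ^ (Δ - 1) * b j ^ t / K * log (r i) *
      cast_mul_potentialExponent (by omega : Δ ≠ 0)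
  have gibbs : 0 ≤ ∑ j, β j * (log (β j) - log (b j)) := by
    have := sum_mul_log_sub_log_le_log_sum hx.right_nonneg hx.sum_right hb.1 fun j hβ =>
      (hb.1 j).lt_of_ne' fun h0 => hβ.ne' (sum_eq_zero fun i _ => hbx i j h0)
    rw [hb.2, log_one] at this
    simpa [mul_sub, sum_sub_distrib] using this
  rw [hx.firstMomentValue_eq (by omega), ← ht_def,
    sum_congr rfl fun i _ => sum_congr rfl fun j _ => hterm i j,
    hx.sum_sum_mul_right fun j => (1 - t) * log K + t * (log (β j) - log (b j))]
  simp only [mul_add, sum_add_distrib, ← sum_mul, hx.sum_right, one_mul, mul_left_comm (β _) t,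
    ← mul_sum]
  have hgain : 0 ≤ (Δ : ℝ) * (t * ∑ j, β j * (log (β j) - log (b j))) := by positivity
  linear_combination log K * cast_mul_potentialExponent (by omega : Δ ≠ 0) + hgain

theorem potential_smul {Δ : ℕ} (hΔ : Δ ≠ 0) (C : Matrix I J ℝ) {s : ℝ} (hs : 0 ≤ s) {b : J → ℝ}
    (hb : ∀ j, 0 ≤ b j) : potential Δ C (s • b) = s ^ (Δ - 1) * potential Δ C b := by
  have hrow : ∀ i, ∑ j, C i j * (s * b j) ^ potentialExponent Δ =
      s ^ potentialExponent Δ * ∑ j, C i j * b j ^ potentialExponent Δ := fun i => by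
    rw [mul_sum]
    exact sum_congr rfl fun j _ => by rw [mul_rpow hs (hb j)]; ring
  simp only [potential, Pi.smul_apply, smul_eq_mul, hrow, mul_pow,
    rpow_potentialExponent_pow hΔ hs, ← mul_sum]

theorem potential_le_mul_sum_pow {Δ : ℕ} (hΔ : 1 < Δ) {C : Matrix I J ℝ} {K : ℝ}
    (hK : ∀ b ∈ stdSimplex ℝ J, potential Δ C b ≤ K) {b : J → ℝ} (hb : ∀ j, 0 ≤ b j) :
    potential Δ C b ≤ K * (∑ j, b j) ^ (Δ - 1) := by
  set T := ∑ j, b j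
  rcases (sum_nonneg fun j _ => hb j : 0 ≤ T).eq_or_lt with hT | hT
  · have hb0 : ∀ j, b j = 0 := fun j =>
      (sum_eq_zero_iff_of_nonneg fun j _ => hb j).1 hT.symm j (mem_univ j)
    rw [show T = 0 from hT.symm, zero_pow (by omega : Δ - 1 ≠ 0), mul_zero]
    simp [potential, hb0, zero_rpow (potentialExponent_pos hΔ).ne', zero_pow (by omega : Δ ≠ 0)]
  have hmem : T⁻¹ • b ∈ stdSimplex ℝ J :=
    ⟨fun j => mul_nonneg (inv_nonneg.2 hT.le) (hb j), by
      simp only [Pi.smul_apply, smul_eq_mul, ← mul_sum]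
      exact inv_mul_cancel₀ hT.ne'⟩
  calc potential Δ C b = potential Δ C (T • T⁻¹ • b) := by
        rw [smul_smul, mul_inv_cancel₀ hT.ne', one_smul]
    _ = T ^ (Δ - 1) * potential Δ C (T⁻¹ • b) := potential_smul (by omega) C hT.le hmem.1
    _ ≤ K * T ^ (Δ - 1) := by
        rw [mul_comm]
        exact mul_le_mul_of_nonneg_right (hK _ hmem) (pow_nonneg hT.le _)

theorem potential_kronecker_le {Δ : ℕ} (hΔ : 1 < Δ) {A : Matrix I J ℝ} {D : Matrix I' J' ℝ}
    (hD : ∀ k l, 0 ≤ D k l) {K L : ℝ} (hK : 0 ≤ K)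
    (hAK : ∀ b ∈ stdSimplex ℝ J, potential Δ A b ≤ K)
    (hDL : ∀ b ∈ stdSimplex ℝ J', potential Δ D b ≤ L)
    {d : J × J' → ℝ} (hd : d ∈ stdSimplex ℝ (J × J')) : potential Δ (A ⊗ₖ D) d ≤ K * L := by
  set t := potentialExponent Δ with ht_def
  have ht : 0 < t := potentialExponent_pos hΔ
  set w : I' → J → ℝ := fun k j => ∑ l, D k l * d (j, l) ^ t
  have hw : ∀ k j, 0 ≤ w k j := fun k j =>
    sum_nonneg fun l _ => mul_nonneg (hD k l) (rpow_nonneg (hd.1 _) t)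
  set m : J' → ℝ := fun l => ∑ j, d (j, l)
  have hm : m ∈ stdSimplex ℝ J' :=
    ⟨fun l => sum_nonneg fun j _ => hd.1 _, by rw [sum_comm, ← Fintype.sum_prod_type']; exact hd.2⟩
  have hsplit : potential Δ (A ⊗ₖ D) d = ∑ k, potential Δ A fun j => w k j ^ t⁻¹ := by
    have hpow : ∀ k j, (w k j ^ t⁻¹) ^ t = w k j := fun k j => by
      rw [← rpow_mul (hw k j), inv_mul_cancel₀ ht.ne', rpow_one]
    simp only [potential, ← ht_def, hpow, Fintype.sum_prod_type, kroneckerMap_apply, w, mul_sum,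
      mul_assoc]
    exact sum_comm
  -- Minkowski's inequality in `ℓ^{1/t}` for the columns `d (·, l) ^ t`
  have hmink : ∀ k, (∑ j, w k j ^ t⁻¹) ^ t ≤ ∑ l, D k l * m l ^ t := fun k => by
    have := rpow_sum_sum_mul_le ((one_le_inv₀ ht).2 (potentialExponent_le_one Δ)) (hD k)
      (V := fun j l => d (j, l) ^ t) fun j l => rpow_nonneg (hd.1 _) t
    simpa only [inv_inv, ← rpow_mul (hd.1 _), mul_inv_cancel₀ ht.ne', rpow_one] using this
  calc potential Δ (A ⊗ₖ D) d = ∑ k, potential Δ A fun j => w k j ^ t⁻¹ := hsplit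
    _ ≤ ∑ k, K * (∑ j, w k j ^ t⁻¹) ^ (Δ - 1) :=
        sum_le_sum fun k _ => potential_le_mul_sum_pow hΔ hAK fun j => rpow_nonneg (hw k j) _
    _ ≤ ∑ k, K * (∑ l, D k l * m l ^ t) ^ Δ := sum_le_sum fun k _ => by
        rw [← rpow_potentialExponent_pow (by omega) (sum_nonneg fun j _ => rpow_nonneg (hw k j) _)]
        exact mul_le_mul_of_nonneg_left (pow_le_pow_left₀ (rpow_nonneg (sum_nonneg fun j _ =>
          rpow_nonneg (hw k j) _) _) (hmink k) Δ) hK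
    _ = K * potential Δ D m := by rw [potential, mul_sum]
    _ ≤ K * L := mul_le_mul_of_nonneg_left (hDL m hm) hK

theorem firstMomentValue_kronecker {Δ : ℕ} {A : Matrix I J ℝ} {A' : Matrix I' J' ℝ}
    {a : I → ℝ} {b : J → ℝ} {x : I → J → ℝ} {a' : I' → ℝ} {b' : J' → ℝ} {x' : I' → J' → ℝ}
    (h : IsFirstMomentFeasible A a b x) (h' : IsFirstMomentFeasible A' a' b' x') :
    firstMomentValue Δ (A ⊗ₖ A') (fun p => a p.1 * a' p.2) (fun q => b q.1 * b' q.2)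
        (fun p q => x p.1 q.1 * x' p.2 q.2) =
      firstMomentValue Δ A a b x + firstMomentValue Δ A' a' b' x' := by
  have hx : ∀ (F : I → J → ℝ) (F' : I' → J' → ℝ), (∀ i j, x i j ≠ 0 → F i j ≠ 0) →
      (∀ k l, x' k l ≠ 0 → F' k l ≠ 0) →
      ∑ p : I × I', ∑ q : J × J', x p.1 q.1 * x' p.2 q.2 * log (F p.1 q.1 * F' p.2 q.2) =
        ∑ i, ∑ j, x i j * log (F i j) + ∑ k, ∑ l, x' k l * log (F' k l) := by
    intro F F' hF hF'
    rw [← Fintype.sum_prod_type', ← (Equiv.prodProdProdComm I I' J J').symm.sum_comp]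
    refine (sum_mul_mul_log_mul (f := fun p : I × J => x p.1 p.2)
      (g := fun p : I' × J' => x' p.1 p.2) ?_ ?_ (fun p => hF p.1 p.2)
      fun p => hF' p.1 p.2).trans ?_
    · rw [Fintype.sum_prod_type]; exact h.sum_sum
    · rw [Fintype.sum_prod_type]; exact h'.sum_sum
    · simp only [Fintype.sum_prod_type]
  have hsupp : ∀ i j, x i j ≠ 0 → A i j ≠ 0 := fun i j hx hA => hx (h.eq_zero_of_eq_zero i j hA)
  have hsupp' : ∀ k l, x' k l ≠ 0 → A' k l ≠ 0 :=
    fun k l hx hA => hx (h'.eq_zero_of_eq_zero k l hA)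
  simp only [firstMomentValue, kroneckerMap_apply]
  rw [sum_mul_mul_log_mul h.sum_left h'.sum_left (fun _ => id) fun _ => id,
    sum_mul_mul_log_mul h.sum_right h'.sum_right (fun _ => id) fun _ => id,
    hx A A' hsupp hsupp', hx x x' (fun _ _ => id) fun _ _ => id]
  ring

structure IsSecondMomentFeasible (B : Matrix I J ℝ) (γ : I → I → ℝ) (δ : J → J → ℝ)
    (y : I → I → J → J → ℝ) : Prop where
  nonneg : ∀ i k j l, 0 ≤ y i k j l
  eq_zero_of_mul_eq_zero : ∀ i k j l, B i j * B k l = 0 → y i k j l = 0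
  left_eq_sum : ∀ i k, γ i k = ∑ j, ∑ l, y i k j l
  right_eq_sum : ∀ j l, δ j l = ∑ i, ∑ k, y i k j l
  sum_left : ∑ i, ∑ k, γ i k = 1
  left_balanced : ∀ i, ∑ k, γ i k = ∑ k, γ k i
  right_balanced : ∀ j, ∑ l, δ j l = ∑ l, δ l j

noncomputable def secondMomentValue (Δ : ℕ) (B : Matrix I J ℝ) (γ : I → I → ℝ) (δ : J → J → ℝ)
    (y : I → I → J → J → ℝ) : ℝ :=
  ((Δ : ℝ) - 1) * ((∑ i, ∑ k, γ i k * log (γ i k)) + ∑ j, ∑ l, δ j l * log (δ j l))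
    + (Δ : ℝ) * ((∑ i, ∑ k, ∑ j, ∑ l, y i k j l * log (B i j * B k l))
        - ∑ i, ∑ k, ∑ j, ∑ l, y i k j l * log (y i k j l))

theorem secondMomentValue_eq_firstMomentValue_kronecker (Δ : ℕ) (B : Matrix I J ℝ)
    (γ : I → I → ℝ) (δ : J → J → ℝ) (y : I → I → J → J → ℝ) :
    secondMomentValue Δ B γ δ y = firstMomentValue Δ (B ⊗ₖ B) (Function.uncurry γ)
      (Function.uncurry δ) fun p q => y p.1 p.2 q.1 q.2 := by
  simp only [secondMomentValue, firstMomentValue, Fintype.sum_prod_type, kroneckerMap_apply,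
    Function.uncurry_apply_pair]

theorem IsSecondMomentFeasible.isFirstMomentFeasible_kronecker {B : Matrix I J ℝ}
    {γ : I → I → ℝ} {δ : J → J → ℝ} {y : I → I → J → J → ℝ} (h : IsSecondMomentFeasible B γ δ y) :
    IsFirstMomentFeasible (B ⊗ₖ B) (Function.uncurry γ) (Function.uncurry δ)
      fun p q => y p.1 p.2 q.1 q.2 where
  nonneg _ _ := h.nonneg _ _ _ _
  eq_zero_of_eq_zero _ _ := h.eq_zero_of_mul_eq_zero _ _ _ _
  sum_row p := by rw [Fintype.sum_prod_type]; exact (h.left_eq_sum _ _).symm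
  sum_col q := by rw [Fintype.sum_prod_type]; exact (h.right_eq_sum _ _).symm
  sum_left := by rw [Fintype.sum_prod_type]; exact h.sum_left

namespace IsFirstMomentFeasible

variable {B : Matrix I J ℝ} {a : I → ℝ} {b : J → ℝ} {x : I → J → ℝ}

theorem isSecondMomentFeasible_mul (h : IsFirstMomentFeasible B a b x) :
    IsSecondMomentFeasible B (fun i k => a i * a k) (fun j l => b j * b l)
      fun i k j l => x i j * x k l where
  nonneg i k j l := mul_nonneg (h.nonneg i j) (h.nonneg k l)
  eq_zero_of_mul_eq_zero i k j l hB := by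
    rcases mul_eq_zero.1 hB with hB | hB <;> simp [h.eq_zero_of_eq_zero _ _ hB]
  left_eq_sum i k := by rw [← h.sum_row i, ← h.sum_row k, sum_mul_sum]
  right_eq_sum j l := by rw [← h.sum_col j, ← h.sum_col l, sum_mul_sum]
  sum_left := by simp only [← mul_sum, ← sum_mul, h.sum_left, one_mul]
  left_balanced i := by simp only [← mul_sum, ← sum_mul, h.sum_left, one_mul, mul_one]
  right_balanced j := by simp only [← mul_sum, ← sum_mul, h.sum_right, one_mul, mul_one]

theorem secondMomentValue_mul {Δ : ℕ} (h : IsFirstMomentFeasible B a b x) :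
    secondMomentValue Δ B (fun i k => a i * a k) (fun j l => b j * b l)
      (fun i k j l => x i j * x k l) = 2 * firstMomentValue Δ B a b x := by
  rw [secondMomentValue_eq_firstMomentValue_kronecker, two_mul]
  exact firstMomentValue_kronecker h h

end IsFirstMomentFeasible

end SpinSystem

open SpinSystem

theorem second_moment_max_eq_twice_first_moment_max_general
    (q Δ : ℕ) (hΔ : 3 ≤ Δ)
    (B : Matrix (Fin q) (Fin q) ℝ)
    (hBnonneg : ∀ i j, 0 ≤ B i j) (hBpos : ∃ i j, 0 < B i j) :
    ∃ M₁ M₂ : ℝ,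
      IsGreatest { v : ℝ | ∃ (α β : Fin q → ℝ) (x : Fin q → Fin q → ℝ),
          (∀ i, 0 ≤ α i) ∧ (∀ j, 0 ≤ β j) ∧ (∑ i, α i) = 1 ∧ (∑ j, β j) = 1 ∧
          (∀ i j, 0 ≤ x i j) ∧ (∀ i j, B i j = 0 → x i j = 0) ∧
          (∀ i, (∑ j, x i j) = α i) ∧ (∀ j, (∑ i, x i j) = β j) ∧
          v = ((Δ : ℝ) - 1) * ((∑ i, α i * Real.log (α i)) + ∑ j, β j * Real.log (β j))
              + (Δ : ℝ) * ((∑ i, ∑ j, x i j * Real.log (B i j))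
                  - ∑ i, ∑ j, x i j * Real.log (x i j)) } M₁ ∧
      IsGreatest { v : ℝ | ∃ (γ δ : Fin q → Fin q → ℝ)
            (y : Fin q → Fin q → Fin q → Fin q → ℝ),
          (∀ i k j l, 0 ≤ y i k j l) ∧
          (∀ i k j l, B i j * B k l = 0 → y i k j l = 0) ∧
          (∀ i k, γ i k = ∑ j, ∑ l, y i k j l) ∧
          (∀ j l, δ j l = ∑ i, ∑ k, y i k j l) ∧
          (∑ i, ∑ k, γ i k) = 1 ∧
          (∀ i, (∑ k, γ i k) = ∑ k, γ k i) ∧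
          (∀ j, (∑ l, δ j l) = ∑ l, δ l j) ∧
          v = ((Δ : ℝ) - 1) * ((∑ i, ∑ k, γ i k * Real.log (γ i k))
                  + ∑ j, ∑ l, δ j l * Real.log (δ j l))
              + (Δ : ℝ) * ((∑ i, ∑ k, ∑ j, ∑ l, y i k j l * Real.log (B i j * B k l))
                  - ∑ i, ∑ k, ∑ j, ∑ l, y i k j l * Real.log (y i k j l)) } M₂ ∧
      M₂ = 2 * M₁ := by
  have hΔ' : 1 < Δ := by omega
  obtain ⟨i₀, j₀, hpos⟩ := hBpos
  have : Nonempty (Fin q) := ⟨j₀⟩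
  obtain ⟨b, hb, hmax⟩ := exists_isMaxOn_potential Δ B
  set K := potential Δ B b
  have hK : 0 < K := potential_pos_of_isMaxOn hΔ' hBnonneg hpos hmax
  have hKK : ∀ d ∈ stdSimplex ℝ (Fin q × Fin q), potential Δ (B ⊗ₖ B) d ≤ K * K :=
    fun d hd => potential_kronecker_le hΔ' hBnonneg hK.le hmax hmax hd
  obtain ⟨a, β, x, hx, hlog⟩ := exists_isFirstMomentFeasible_log_potential_le hΔ' hBnonneg hb hK
  have hval : firstMomentValue Δ B a β x = log K :=
    (hx.firstMomentValue_le_log hΔ' hBnonneg (hmax hx.right_mem_stdSimplex)).antisymm hlog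
  refine ⟨log K, 2 * log K, ⟨?_, ?_⟩, ⟨?_, ?_⟩, rfl⟩
  · exact ⟨a, β, x, hx.left_nonneg, hx.right_nonneg, hx.sum_left, hx.sum_right, hx.nonneg,
      hx.eq_zero_of_eq_zero, hx.sum_row, hx.sum_col, hval.symm⟩
  · rintro _ ⟨α, β, x, -, hβ, hα1, hβ1, hx, hsupp, hrow, hcol, rfl⟩
    exact IsFirstMomentFeasible.firstMomentValue_le_log hΔ' hBnonneg ⟨hx, hsupp, hrow, hcol, hα1⟩
      (hmax ⟨hβ, hβ1⟩)
  · obtain ⟨h₁, h₂, h₃, h₄, h₅, h₆, h₇⟩ := hx.isSecondMomentFeasible_mul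
    exact ⟨_, _, _, h₁, h₂, h₃, h₄, h₅, h₆, h₇, by rw [← hval, ← hx.secondMomentValue_mul]; rfl⟩
  · rintro _ ⟨γ, δ, y, h₁, h₂, h₃, h₄, h₅, h₆, h₇, rfl⟩
    have hy := (IsSecondMomentFeasible.mk h₁ h₂ h₃ h₄ h₅ h₆ h₇).isFirstMomentFeasible_kronecker
    calc secondMomentValue Δ B γ δ y
        = firstMomentValue Δ (B ⊗ₖ B) _ _ _ := secondMomentValue_eq_firstMomentValue_kronecker ..
      _ ≤ log (K * K) := hy.firstMomentValue_le_log hΔ' (fun _ _ => mul_nonneg (hBnonneg _ _)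
          (hBnonneg _ _)) (hKK _ hy.right_mem_stdSimplex)
      _ = 2 * log K := by rw [log_mul hK.ne' hK.ne', two_mul]

/-- The maximum of the second-moment function Υ₂ over its feasible
region is attained and equals twice the maximum of the first-moment function Υ₁
over its feasible region (which is likewise attained). -/
theorem second_moment_max_eq_twice_first_moment_max
    (q Δ : ℕ) (hq : 1 ≤ q) (hΔ : 3 ≤ Δ)
    (B : Matrix (Fin q) (Fin q) ℝ) (hBsymm : B.IsSymm)
    (hBnonneg : ∀ i j, 0 ≤ B i j) (hBpos : ∃ i j, 0 < B i j) :
    ∃ M₁ M₂ : ℝ,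
      IsGreatest { v : ℝ | ∃ (α β : Fin q → ℝ) (x : Fin q → Fin q → ℝ),
          (∀ i, 0 ≤ α i) ∧ (∀ j, 0 ≤ β j) ∧ (∑ i, α i) = 1 ∧ (∑ j, β j) = 1 ∧
          (∀ i j, 0 ≤ x i j) ∧ (∀ i j, B i j = 0 → x i j = 0) ∧
          (∀ i, (∑ j, x i j) = α i) ∧ (∀ j, (∑ i, x i j) = β j) ∧
          v = ((Δ : ℝ) - 1) * ((∑ i, α i * Real.log (α i)) + ∑ j, β j * Real.log (β j))
              + (Δ : ℝ) * ((∑ i, ∑ j, x i j * Real.log (B i j))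
                  - ∑ i, ∑ j, x i j * Real.log (x i j)) } M₁ ∧
      IsGreatest { v : ℝ | ∃ (γ δ : Fin q → Fin q → ℝ)
            (y : Fin q → Fin q → Fin q → Fin q → ℝ),
          (∀ i k j l, 0 ≤ y i k j l) ∧
          (∀ i k j l, B i j * B k l = 0 → y i k j l = 0) ∧
          (∀ i k, γ i k = ∑ j, ∑ l, y i k j l) ∧
          (∀ j l, δ j l = ∑ i, ∑ k, y i k j l) ∧
          (∑ i, ∑ k, γ i k) = 1 ∧
          (∀ i, (∑ k, γ i k) = ∑ k, γ k i) ∧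
          (∀ j, (∑ l, δ j l) = ∑ l, δ l j) ∧
          v = ((Δ : ℝ) - 1) * ((∑ i, ∑ k, γ i k * Real.log (γ i k))
                  + ∑ j, ∑ l, δ j l * Real.log (δ j l))
              + (Δ : ℝ) * ((∑ i, ∑ k, ∑ j, ∑ l, y i k j l * Real.log (B i j * B k l))
                  - ∑ i, ∑ k, ∑ j, ∑ l, y i k j l * Real.log (y i k j l)) } M₂ ∧
      M₂ = 2 * M₁ :=
  second_moment_max_eq_twice_first_moment_max_general q Δ hΔ B hBnonneg hBpos
end

section
/- Let q ≥ 1 and Δ ≥ 3 be integers and let B be a symmetric q×q real matrix with nonnegative entries having at least one positive entry. Then the supremum of Υ₁(α,β,x) over all triples (α,β,x) feasible for the first moment equals the supremum of Φ(r,c) over all pairs (r,c) of vectors in ℝ^q with nonnegative entries satisfying rᵀBc > 0. -/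
open Matrix Finset

/-- Gibbs / log-sum inequality. -/
lemma gibbs_aux {ι : Type*} [Fintype ι] (w y : ι → ℝ)
    (hw : ∀ i, 0 ≤ w i) (hy : ∀ i, 0 ≤ y i)
    (hwy : ∀ i, 0 < w i → 0 < y i)
    (hsum : ∑ i, w i = 1) (hT : 0 < ∑ i, y i) :
    ∑ i, w i * Real.log (y i) - ∑ i, w i * Real.log (w i) ≤ Real.log (∑ i, y i) := by
  set T := ∑ i, y i with hTdef
  have key : ∀ i, w i * Real.log (y i) - w i * Real.log (w i) - w i * Real.log T
      ≤ y i / T - w i := by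
    intro i
    rcases eq_or_lt_of_le (hw i) with h0 | h0
    · rw [← h0]
      simp only [zero_mul, sub_zero, sub_self]
      have := div_nonneg (hy i) hT.le
      linarith
    · have hyi := hwy i h0
      have h1 : Real.log (y i) - Real.log (w i) - Real.log T
          = Real.log (y i / (w i * T)) := by
        rw [Real.log_div (ne_of_gt hyi) (by positivity), Real.log_mul (ne_of_gt h0) (ne_of_gt hT)]
        ring
      have h2 : Real.log (y i / (w i * T)) ≤ y i / (w i * T) - 1 :=
        Real.log_le_sub_one_of_pos (by positivity)
      have h3 : w i * Real.log (y i / (w i * T)) ≤ w i * (y i / (w i * T) - 1) :=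
        mul_le_mul_of_nonneg_left h2 h0.le
      calc w i * Real.log (y i) - w i * Real.log (w i) - w i * Real.log T
          = w i * Real.log (y i / (w i * T)) := by rw [← h1]; ring
        _ ≤ w i * (y i / (w i * T) - 1) := h3
        _ = y i / T - w i := by
            field_simp
  have hsum2 : ∑ i, (w i * Real.log (y i) - w i * Real.log (w i) - w i * Real.log T)
      ≤ ∑ i, (y i / T - w i) := Finset.sum_le_sum (fun i _ => key i)
  have e1 : ∑ i, (w i * Real.log (y i) - w i * Real.log (w i) - w i * Real.log T)
      = ∑ i, w i * Real.log (y i) - ∑ i, w i * Real.log (w i) - Real.log T := by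
    rw [Finset.sum_sub_distrib, Finset.sum_sub_distrib, ← Finset.sum_mul, hsum, one_mul]
  have e2 : ∑ i, (y i / T - w i) = 0 := by
    rw [Finset.sum_sub_distrib, hsum, ← Finset.sum_div, ← hTdef, div_self (ne_of_gt hT)]
    ring
  rw [e1, e2] at hsum2
  linarith

lemma sSup_eq_of_mutual {A B : Set ℝ} (hB : B.Nonempty)
    (h1 : ∀ a ∈ A, ∃ b ∈ B, a ≤ b) (h2 : ∀ b ∈ B, ∃ a ∈ A, b ≤ a) :
    sSup A = sSup B := by
  obtain ⟨b0, hb0⟩ := hB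
  obtain ⟨a0, ha0, _⟩ := h2 b0 hb0
  have hA : A.Nonempty := ⟨a0, ha0⟩
  by_cases hbB : BddAbove B
  · obtain ⟨M, hM⟩ := hbB
    have hbA : BddAbove A := ⟨M, fun a ha => by
      obtain ⟨b, hb, hab⟩ := h1 a ha
      exact hab.trans (hM hb)⟩
    apply le_antisymm
    · exact csSup_le hA (fun a ha => by
        obtain ⟨b, hb, hab⟩ := h1 a ha
        exact hab.trans (le_csSup ⟨M, hM⟩ hb))
    · exact csSup_le ⟨b0, hb0⟩ (fun b hb => by
        obtain ⟨a, ha, hba⟩ := h2 b hb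
        exact hba.trans (le_csSup hbA ha))
  · have hbA : ¬ BddAbove A := by
      rintro ⟨M, hM⟩
      exact hbB ⟨M, fun b hb => by
        obtain ⟨a, ha, hba⟩ := h2 b hb
        exact hba.trans (hM ha)⟩
    rw [Real.sSup_of_not_bddAbove hbA, Real.sSup_of_not_bddAbove hbB]

lemma exists_pos_of_sum_pos {ι : Type*} [Fintype ι] {f : ι → ℝ} (h : 0 < ∑ i, f i) :
    ∃ i, 0 < f i := by
  by_contra hc
  push_neg at hc
  have := Finset.sum_nonpos (fun i (_ : i ∈ Finset.univ) => hc i)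
  linarith

/-- The supremum of the first-moment function Υ₁ over its feasible
region equals the supremum of Φ(r,c) over nonnegative vectors r,c with rᵀBc > 0. -/
theorem first_moment_sup_eq_Phi_sup
    (q Δ : ℕ) (hq : 1 ≤ q) (hΔ : 3 ≤ Δ)
    (B : Matrix (Fin q) (Fin q) ℝ) (hBsymm : B.IsSymm)
    (hBnonneg : ∀ i j, 0 ≤ B i j) (hBpos : ∃ i j, 0 < B i j) :
    sSup { v : ℝ | ∃ (α β : Fin q → ℝ) (x : Fin q → Fin q → ℝ),
        (∀ i, 0 ≤ α i) ∧ (∀ j, 0 ≤ β j) ∧ (∑ i, α i) = 1 ∧ (∑ j, β j) = 1 ∧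
        (∀ i j, 0 ≤ x i j) ∧ (∀ i j, B i j = 0 → x i j = 0) ∧
        (∀ i, (∑ j, x i j) = α i) ∧ (∀ j, (∑ i, x i j) = β j) ∧
        v = ((Δ : ℝ) - 1) * ((∑ i, α i * Real.log (α i)) + ∑ j, β j * Real.log (β j))
            + (Δ : ℝ) * ((∑ i, ∑ j, x i j * Real.log (B i j))
                - ∑ i, ∑ j, x i j * Real.log (x i j)) } =
    sSup { v : ℝ | ∃ r c : Fin q → ℝ,
        (∀ i, 0 ≤ r i) ∧ (∀ j, 0 ≤ c j) ∧
        0 < (∑ i, ∑ j, r i * B i j * c j) ∧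
        v = (Δ : ℝ) * Real.log (∑ i, ∑ j, r i * B i j * c j)
            - ((Δ : ℝ) - 1) * (Real.log (∑ i, r i ^ ((Δ : ℝ) / ((Δ : ℝ) - 1)))
                + Real.log (∑ j, c j ^ ((Δ : ℝ) / ((Δ : ℝ) - 1)))) } := by
  have hΔR : (3:ℝ) ≤ (Δ:ℝ) := by exact_mod_cast hΔ
  have hΔ1 : (0:ℝ) < (Δ:ℝ) - 1 := by linarith
  have hΔ0 : (0:ℝ) < (Δ:ℝ) := by linarith
  have hΔne : (Δ:ℝ) ≠ 0 := ne_of_gt hΔ0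
  have hΔ1ne : (Δ:ℝ) - 1 ≠ 0 := ne_of_gt hΔ1
  set p : ℝ := (Δ:ℝ) / ((Δ:ℝ) - 1) with hpdef
  set e : ℝ := ((Δ:ℝ) - 1) / (Δ:ℝ) with hedef
  have hep : e * p = 1 := by rw [hedef, hpdef]; field_simp
  have hde : (Δ:ℝ) * e = (Δ:ℝ) - 1 := by rw [hedef]; field_simp
  have hdp : ((Δ:ℝ) - 1) * p = (Δ:ℝ) := by rw [hpdef]; field_simp
  clear_value p e
  apply sSup_eq_of_mutual
  -- B-set nonempty
  · obtain ⟨i0, j0, hij⟩ := hBpos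
    refine ⟨_, ⟨(fun _ => 1), (fun _ => 1), fun i => zero_le_one, fun j => zero_le_one, ?_, rfl⟩⟩
    refine Finset.sum_pos'
      (fun i _ => Finset.sum_nonneg (fun j _ => by
        simpa using hBnonneg i j)) ⟨i0, Finset.mem_univ _, ?_⟩
    exact Finset.sum_pos' (fun j _ => by simpa using hBnonneg i0 j)
      ⟨j0, Finset.mem_univ _, by simpa using hij⟩
  -- direction 1 : every feasible value is dominated by a Φ value
  · rintro v ⟨α, β, x, hα, hβ, hαs, hβs, hx, hBx, hxα, hxβ, hv⟩
    set r : Fin q → ℝ := fun i => α i ^ e with hrdef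
    set c : Fin q → ℝ := fun j => β j ^ e with hcdef
    have hrval : ∀ i, r i = α i ^ e := fun i => rfl
    have hcval : ∀ j, c j = β j ^ e := fun j => rfl
    have hr : ∀ i, 0 ≤ r i := fun i => Real.rpow_nonneg (hα i) e
    have hc : ∀ j, 0 ≤ c j := fun j => Real.rpow_nonneg (hβ j) e
    have hrp : ∀ i, r i ^ p = α i := by
      intro i
      rw [hrval, ← Real.rpow_mul (hα i), hep, Real.rpow_one]
    have hcp : ∀ j, c j ^ p = β j := by
      intro j
      rw [hcval, ← Real.rpow_mul (hβ j), hep, Real.rpow_one]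
    have hrpsum : ∑ i, r i ^ p = 1 := by
      rw [Finset.sum_congr rfl fun i _ => hrp i]; exact hαs
    have hcpsum : ∑ j, c j ^ p = 1 := by
      rw [Finset.sum_congr rfl fun j _ => hcp j]; exact hβs
    have hxsum : ∑ i, ∑ j, x i j = 1 := by
      rw [Finset.sum_congr rfl fun i _ => hxα i]; exact hαs
    have hxle : ∀ i j, x i j ≤ α i := fun i j => by
      rw [← hxα i]; exact Finset.single_le_sum (fun k _ => hx i k) (Finset.mem_univ j)
    have hxleβ : ∀ i j, x i j ≤ β j := fun i j => by
      rw [← hxβ j]; exact Finset.single_le_sum (fun k _ => hx k j) (Finset.mem_univ i)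
    have hxB : ∀ i j, 0 < x i j → 0 < B i j := by
      intro i j hxij
      rcases (hBnonneg i j).lt_or_eq with h | h
      · exact h
      · rw [hBx i j h.symm] at hxij; exact absurd hxij (lt_irrefl 0)
    have hrpos : ∀ i j, 0 < x i j → 0 < r i := fun i j h =>
      hrval i ▸ Real.rpow_pos_of_pos (h.trans_le (hxle i j)) e
    have hcpos : ∀ i j, 0 < x i j → 0 < c j := fun i j h =>
      hcval j ▸ Real.rpow_pos_of_pos (h.trans_le (hxleβ i j)) e
    have hex : ∃ i j, 0 < x i j := by
      have h0 : (0:ℝ) < ∑ i, ∑ j, x i j := by rw [hxsum]; norm_num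
      obtain ⟨i1, hi1⟩ := exists_pos_of_sum_pos h0
      obtain ⟨j1, hj1⟩ := exists_pos_of_sum_pos hi1
      exact ⟨i1, j1, hj1⟩
    set S : ℝ := ∑ i, ∑ j, r i * B i j * c j with hSdef
    have hS : 0 < S := by
      obtain ⟨i1, j1, hx1⟩ := hex
      rw [hSdef]
      refine Finset.sum_pos' (fun i _ => Finset.sum_nonneg (fun j _ =>
        mul_nonneg (mul_nonneg (hr i) (hBnonneg i j)) (hc j))) ⟨i1, Finset.mem_univ _, ?_⟩
      refine Finset.sum_pos' (fun j _ =>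
        mul_nonneg (mul_nonneg (hr i1) (hBnonneg i1 j)) (hc j)) ⟨j1, Finset.mem_univ _, ?_⟩
      exact mul_pos (mul_pos (hrpos i1 j1 hx1) (hxB i1 j1 hx1)) (hcpos i1 j1 hx1)
    -- Gibbs inequality over the product type
    have G := gibbs_aux (ι := Fin q × Fin q) (fun m => x m.1 m.2)
      (fun m => r m.1 * B m.1 m.2 * c m.2)
      (fun m => hx m.1 m.2)
      (fun m => mul_nonneg (mul_nonneg (hr m.1) (hBnonneg m.1 m.2)) (hc m.2))
      (fun m hm => mul_pos (mul_pos (hrpos m.1 m.2 hm) (hxB m.1 m.2 hm)) (hcpos m.1 m.2 hm))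
      (by rw [Fintype.sum_prod_type]; exact hxsum)
      (by rw [Fintype.sum_prod_type]; exact hSdef ▸ hS)
    simp only [Fintype.sum_prod_type] at G
    -- rewrite the log of the product
    have keyA : ∀ i j, x i j * Real.log (r i * B i j * c j)
        = x i j * Real.log (r i) + x i j * Real.log (B i j) + x i j * Real.log (c j) := by
      intro i j
      rcases (hx i j).lt_or_eq with h | h
      · have hB0 := hxB i j h
        have hri := hrpos i j h
        have hcj := hcpos i j h
        rw [Real.log_mul (by positivity) (ne_of_gt hcj), Real.log_mul (ne_of_gt hri) (ne_of_gt hB0)]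
        ring
      · rw [← h]; ring
    have eA : ∑ i, ∑ j, x i j * Real.log (r i * B i j * c j)
        = (∑ i, ∑ j, x i j * Real.log (r i)) + (∑ i, ∑ j, x i j * Real.log (B i j))
          + (∑ i, ∑ j, x i j * Real.log (c j)) := by
      simp only [← Finset.sum_add_distrib]
      exact Finset.sum_congr rfl fun i _ => Finset.sum_congr rfl fun j _ => keyA i j
    have eB : ∑ i, ∑ j, x i j * Real.log (r i) = e * ∑ i, α i * Real.log (α i) := by
      rw [Finset.mul_sum]
      refine Finset.sum_congr rfl fun i _ => ?_
      rw [← Finset.sum_mul, hxα i]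
      rcases (hα i).lt_or_eq with h | h
      · rw [hrval, Real.log_rpow h]; ring
      · rw [← h]; ring
    have eC : ∑ i, ∑ j, x i j * Real.log (c j) = e * ∑ j, β j * Real.log (β j) := by
      rw [Finset.sum_comm, Finset.mul_sum]
      refine Finset.sum_congr rfl fun j _ => ?_
      rw [← Finset.sum_mul, hxβ j]
      rcases (hβ j).lt_or_eq with h | h
      · rw [hcval, Real.log_rpow h]; ring
      · rw [← h]; ring
    rw [eA, eB, eC, ← hSdef] at G
    refine ⟨(Δ:ℝ) * Real.log S - ((Δ:ℝ) - 1) * (Real.log (∑ i, r i ^ p) + Real.log (∑ j, c j ^ p)),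
      ⟨r, c, hr, hc, hSdef ▸ hS, by rw [hSdef]⟩, ?_⟩
    rw [hrpsum, hcpsum, Real.log_one]
    have hmul := mul_le_mul_of_nonneg_left G hΔ0.le
    rw [hv]
    calc ((Δ:ℝ) - 1) * ((∑ i, α i * Real.log (α i)) + ∑ j, β j * Real.log (β j))
          + (Δ:ℝ) * ((∑ i, ∑ j, x i j * Real.log (B i j)) - ∑ i, ∑ j, x i j * Real.log (x i j))
        = (Δ:ℝ) * ((e * ∑ i, α i * Real.log (α i)) + (∑ i, ∑ j, x i j * Real.log (B i j))
            + (e * ∑ j, β j * Real.log (β j)) - ∑ i, ∑ j, x i j * Real.log (x i j)) := by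
          linear_combination (-((∑ i, α i * Real.log (α i)) + ∑ j, β j * Real.log (β j))) * hde
      _ ≤ (Δ:ℝ) * Real.log S := hmul
      _ = (Δ:ℝ) * Real.log S - ((Δ:ℝ) - 1) * (0 + 0) := by ring
  -- direction 2 : every Φ value is dominated by a feasible value
  · rintro v ⟨r, c, hr, hc, hS, hv⟩
    set S : ℝ := ∑ i, ∑ j, r i * B i j * c j with hSdef
    set x : Fin q → Fin q → ℝ := fun i j => r i * B i j * c j / S with hxdef
    have hxval : ∀ i j, x i j = r i * B i j * c j / S := fun i j => rfl
    set α : Fin q → ℝ := fun i => ∑ j, x i j with hαdef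
    set β : Fin q → ℝ := fun j => ∑ i, x i j with hβdef
    have hαval : ∀ i, α i = ∑ j, x i j := fun i => rfl
    have hβval : ∀ j, β j = ∑ i, x i j := fun j => rfl
    have hx : ∀ i j, 0 ≤ x i j := fun i j =>
      div_nonneg (mul_nonneg (mul_nonneg (hr i) (hBnonneg i j)) (hc j)) hS.le
    have hα : ∀ i, 0 ≤ α i := fun i => Finset.sum_nonneg fun j _ => hx i j
    have hβ : ∀ j, 0 ≤ β j := fun j => Finset.sum_nonneg fun i _ => hx i j
    have hxsum : ∑ i, ∑ j, x i j = 1 := by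
      have h0 : ∑ i, ∑ j, x i j = (∑ i, ∑ j, r i * B i j * c j) / S := by
        simp only [hxval, ← Finset.sum_div]
      rw [h0, ← hSdef, div_self (ne_of_gt hS)]
    have hαs : ∑ i, α i = 1 := hxsum
    have hβs : ∑ j, β j = 1 := by
      rw [Finset.sum_congr rfl fun j (_ : j ∈ Finset.univ) => hβval j, Finset.sum_comm]
      exact hxsum
    have hBx : ∀ i j, B i j = 0 → x i j = 0 := by
      intro i j h
      rw [hxval, h]
      ring
    -- positivity of factors where x > 0
    have hfact : ∀ i j, 0 < x i j → 0 < r i ∧ 0 < B i j ∧ 0 < c j := by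
      intro i j hxij
      have hprod : 0 < r i * B i j * c j := by
        have h1 : r i * B i j * c j = x i j * S := by
          rw [hxval, div_mul_cancel₀ _ (ne_of_gt hS)]
        rw [h1]; exact mul_pos hxij hS
      refine ⟨?_, ?_, ?_⟩
      · rcases (hr i).lt_or_eq with h | h
        · exact h
        · exfalso; rw [← h] at hprod; simp at hprod
      · rcases (hBnonneg i j).lt_or_eq with h | h
        · exact h
        · exfalso; rw [← h] at hprod; simp at hprod
      · rcases (hc j).lt_or_eq with h | h
        · exact h
        · exfalso; rw [← h] at hprod; simp at hprod
    have hαr : ∀ i, 0 < α i → 0 < r i := by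
      intro i hαi
      obtain ⟨j, hj⟩ := exists_pos_of_sum_pos (by rw [← hαval]; exact hαi)
      exact (hfact i j hj).1
    have hβc : ∀ j, 0 < β j → 0 < c j := by
      intro j hβj
      obtain ⟨i, hi⟩ := exists_pos_of_sum_pos (by rw [← hβval]; exact hβj)
      exact (hfact i j hi).2.2
    -- some r positive, some c positive
    have hrcpos : (∃ i, 0 < r i) ∧ (∃ j, 0 < c j) := by
      obtain ⟨i1, hi1⟩ := exists_pos_of_sum_pos (hSdef ▸ hS)
      obtain ⟨j1, hj1⟩ := exists_pos_of_sum_pos hi1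
      have h1 : 0 < x i1 j1 := by
        rw [hxval]; exact div_pos hj1 hS
      exact ⟨⟨i1, (hfact i1 j1 h1).1⟩, ⟨j1, (hfact i1 j1 h1).2.2⟩⟩
    have hNr : 0 < ∑ i, r i ^ p := by
      obtain ⟨⟨i1, hi1⟩, _⟩ := hrcpos
      exact Finset.sum_pos' (fun i _ => Real.rpow_nonneg (hr i) p)
        ⟨i1, Finset.mem_univ _, Real.rpow_pos_of_pos hi1 p⟩
    have hNc : 0 < ∑ j, c j ^ p := by
      obtain ⟨_, ⟨j1, hj1⟩⟩ := hrcpos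
      exact Finset.sum_pos' (fun j _ => Real.rpow_nonneg (hc j) p)
        ⟨j1, Finset.mem_univ _, Real.rpow_pos_of_pos hj1 p⟩
    -- Gibbs for α against r^p
    have Gr := gibbs_aux (ι := Fin q) α (fun i => r i ^ p) hα
      (fun i => Real.rpow_nonneg (hr i) p)
      (fun i hi => Real.rpow_pos_of_pos (hαr i hi) p) hαs hNr
    have Gc := gibbs_aux (ι := Fin q) β (fun j => c j ^ p) hβ
      (fun j => Real.rpow_nonneg (hc j) p)
      (fun j hj => Real.rpow_pos_of_pos (hβc j hj) p) hβs hNc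
    have eGr : ∑ i, α i * Real.log (r i ^ p) = p * ∑ i, α i * Real.log (r i) := by
      rw [Finset.mul_sum]
      refine Finset.sum_congr rfl fun i _ => ?_
      rcases (hα i).lt_or_eq with h | h
      · rw [Real.log_rpow (hαr i h)]; ring
      · rw [← h]; ring
    have eGc : ∑ j, β j * Real.log (c j ^ p) = p * ∑ j, β j * Real.log (c j) := by
      rw [Finset.mul_sum]
      refine Finset.sum_congr rfl fun j _ => ?_
      rcases (hβ j).lt_or_eq with h | h
      · rw [Real.log_rpow (hβc j h)]; ring
      · rw [← h]; ring
    rw [eGr] at Gr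
    rw [eGc] at Gc
    -- the entropy identity
    have key1 : ∀ i j, x i j * Real.log (B i j) - x i j * Real.log (x i j)
        = x i j * Real.log S - x i j * Real.log (r i) - x i j * Real.log (c j) := by
      intro i j
      rcases (hx i j).lt_or_eq with h | h
      · obtain ⟨hri, hBij, hcj⟩ := hfact i j h
        rw [hxval i j, Real.log_div (by positivity) (ne_of_gt hS),
          Real.log_mul (by positivity) (ne_of_gt hcj), Real.log_mul (ne_of_gt hri) (ne_of_gt hBij)]
        ring
      · rw [← h]; ring
    have eq2 : (∑ i, ∑ j, x i j * Real.log (B i j)) - (∑ i, ∑ j, x i j * Real.log (x i j))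
        = Real.log S - (∑ i, α i * Real.log (r i)) - (∑ j, β j * Real.log (c j)) := by
      have step1 : (∑ i, ∑ j, x i j * Real.log (B i j)) - (∑ i, ∑ j, x i j * Real.log (x i j))
          = ∑ i, ∑ j, (x i j * Real.log (B i j) - x i j * Real.log (x i j)) := by
        simp only [Finset.sum_sub_distrib]
      have step2 : ∑ i, ∑ j, (x i j * Real.log S - x i j * Real.log (r i) - x i j * Real.log (c j))
          = (∑ i, ∑ j, x i j * Real.log S) - (∑ i, ∑ j, x i j * Real.log (r i))
            - (∑ i, ∑ j, x i j * Real.log (c j)) := by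
        simp only [Finset.sum_sub_distrib]
      have s1 : ∑ i, ∑ j, x i j * Real.log S = Real.log S := by
        have : ∀ i, ∑ j, x i j * Real.log S = α i * Real.log S := by
          intro i; rw [← Finset.sum_mul, ← hαval]
        rw [Finset.sum_congr rfl fun i _ => this i, ← Finset.sum_mul, hαs, one_mul]
      have s2 : ∑ i, ∑ j, x i j * Real.log (r i) = ∑ i, α i * Real.log (r i) := by
        refine Finset.sum_congr rfl fun i _ => ?_
        rw [← Finset.sum_mul, ← hαval]
      have s3 : ∑ i, ∑ j, x i j * Real.log (c j) = ∑ j, β j * Real.log (c j) := by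
        rw [Finset.sum_comm]
        refine Finset.sum_congr rfl fun j _ => ?_
        rw [← Finset.sum_mul, ← hβval]
      rw [step1, Finset.sum_congr rfl fun i _ => Finset.sum_congr rfl fun j _ => key1 i j,
        step2, s1, s2, s3]
    refine ⟨((Δ:ℝ) - 1) * ((∑ i, α i * Real.log (α i)) + ∑ j, β j * Real.log (β j))
        + (Δ:ℝ) * ((∑ i, ∑ j, x i j * Real.log (B i j)) - ∑ i, ∑ j, x i j * Real.log (x i j)),
      ⟨α, β, x, hα, hβ, hαs, hβs, hx, hBx, fun i => (hαval i).symm, fun j => (hβval j).symm, rfl⟩, ?_⟩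
    rw [hv, eq2]
    have h1 : (Δ:ℝ) * (∑ i, α i * Real.log (r i)) - ((Δ:ℝ) - 1) * (∑ i, α i * Real.log (α i))
        ≤ ((Δ:ℝ) - 1) * Real.log (∑ i, r i ^ p) := by
      have h := mul_le_mul_of_nonneg_left Gr hΔ1.le
      calc (Δ:ℝ) * (∑ i, α i * Real.log (r i)) - ((Δ:ℝ) - 1) * (∑ i, α i * Real.log (α i))
          = ((Δ:ℝ) - 1) * (p * (∑ i, α i * Real.log (r i)) - ∑ i, α i * Real.log (α i)) := by
            linear_combination (-(∑ i, α i * Real.log (r i))) * hdp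
        _ ≤ ((Δ:ℝ) - 1) * Real.log (∑ i, r i ^ p) := h
    have h2 : (Δ:ℝ) * (∑ j, β j * Real.log (c j)) - ((Δ:ℝ) - 1) * (∑ j, β j * Real.log (β j))
        ≤ ((Δ:ℝ) - 1) * Real.log (∑ j, c j ^ p) := by
      have h := mul_le_mul_of_nonneg_left Gc hΔ1.le
      calc (Δ:ℝ) * (∑ j, β j * Real.log (c j)) - ((Δ:ℝ) - 1) * (∑ j, β j * Real.log (β j))
          = ((Δ:ℝ) - 1) * (p * (∑ j, β j * Real.log (c j)) - ∑ j, β j * Real.log (β j)) := by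
            linear_combination (-(∑ j, β j * Real.log (c j))) * hdp
        _ ≤ ((Δ:ℝ) - 1) * Real.log (∑ j, c j ^ p) := h
    linarith [h1, h2]
end

section
/- Let q ≥ 1 and Δ ≥ 3 be integers, set p = Δ/(Δ−1), and let B be a symmetric invertible q×q real matrix with nonnegative entries. Suppose R is a q×q real matrix with nonnegative entries, not identically zero, which maximizes the tensorized norm ratio: for every q×q real matrix S with nonnegative entries, not identically zero, N_Δ(T(S))·N_p(R) ≤ N_Δ(T(R))·N_p(S). Then R has rank at most one; that is, there exist vectors u, v ∈ ℝ^q with nonnegative entries such that R_{jl} = u_j·v_l for all j,l. -/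
/-!
Testing maximality on the rank-one matrices `x xᵀ` gives `‖B x‖_Δ ≤ c ‖x‖_p` for `x ≥ 0`,
where `c²` is the maximal ratio. Column `k` of `T(R)` is `B` applied to `Σ_l B_kl R_{·l}`, so
with `w` the vector of column `p`-norms of `R`, this bound and Minkowski's inequality give
`N_Δ(T R) ≤ c ‖B w‖_Δ ≤ c² ‖w‖_p = N_Δ(T R)`: every step is an equality. Equality in Minkowski
makes the columns of `R` met by a common row of `B` positively proportional. Splitting `w`
along one proportionality class and the rest splits `B w` into disjointly supported parts, on
which `‖·‖_Δ ^ Δ` is additive while `‖·‖_p ^ Δ = (‖·‖_p ^ p) ^ (Δ - 1)` is strictly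
superadditive; so equality in `‖B w‖_Δ ≤ c ‖w‖_p` forces the class to contain every nonzero
column.
-/

open Matrix

/-- The entrywise t-norm N_t(S) = (∑_{j,l} |S_{jl}|^t)^{1/t} of a q×q matrix. -/
noncomputable def matEntryNorm {q : ℕ} (t : ℝ) (S : Matrix (Fin q) (Fin q) ℝ) : ℝ :=
  (∑ j, ∑ l, |S j l| ^ t) ^ (1 / t)

/-- The action T(S)_{ik} = ∑_{j,l} B_{ij} B_{kl} S_{jl} of the Kronecker product B⊗B. -/
noncomputable def tensorAct {q : ℕ} (B S : Matrix (Fin q) (Fin q) ℝ) :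
    Matrix (Fin q) (Fin q) ℝ :=
  Matrix.of fun i k => ∑ j, ∑ l, B i j * B k l * S j l

open Finset

noncomputable def lpNorm {ι : Type*} [Fintype ι] (p : ℝ) (x : ι → ℝ) : ℝ :=
  (∑ i, |x i| ^ p) ^ (1 / p)

section lpNorm

variable {ι : Type*} [Fintype ι] {p : ℝ} {x y : ι → ℝ}

lemma lpNorm_nonneg : 0 ≤ lpNorm p x :=
  Real.rpow_nonneg (sum_nonneg fun _ _ => Real.rpow_nonneg (abs_nonneg _) p) _

lemma lpNorm_rpow (hp : p ≠ 0) (x : ι → ℝ) : lpNorm p x ^ p = ∑ i, |x i| ^ p := by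
  rw [lpNorm, ← Real.rpow_mul (sum_nonneg fun i _ => Real.rpow_nonneg (abs_nonneg _) p),
    one_div_mul_cancel hp, Real.rpow_one]

lemma lpNorm_eq_zero_iff (hp : 0 < p) : lpNorm p x = 0 ↔ x = 0 := by
  have hsum : 0 ≤ ∑ i, |x i| ^ p := sum_nonneg fun i _ => Real.rpow_nonneg (abs_nonneg _) p
  rw [lpNorm, Real.rpow_eq_zero hsum (one_div_pos.2 hp).ne',
    sum_eq_zero_iff_of_nonneg fun i _ => Real.rpow_nonneg (abs_nonneg _) p, funext_iff]
  simp [Real.rpow_eq_zero (abs_nonneg _) hp.ne']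

lemma lpNorm_pos (hp : 0 < p) (hx : x ≠ 0) : 0 < lpNorm p x :=
  lpNorm_nonneg.lt_of_ne' ((lpNorm_eq_zero_iff hp).not.2 hx)

lemma lpNorm_smul (hp : p ≠ 0) (a : ℝ) (x : ι → ℝ) : lpNorm p (a • x) = |a| * lpNorm p x := by
  simp only [lpNorm, Pi.smul_apply, smul_eq_mul, abs_mul,
    Real.mul_rpow (abs_nonneg a) (abs_nonneg _), ← mul_sum]
  rw [Real.mul_rpow (Real.rpow_nonneg (abs_nonneg a) p)
    (sum_nonneg fun i _ => Real.rpow_nonneg (abs_nonneg _) p), ← Real.rpow_mul (abs_nonneg a),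
    mul_one_div_cancel hp, Real.rpow_one]

lemma lpNorm_add_le (hp : 1 ≤ p) (x y : ι → ℝ) : lpNorm p (x + y) ≤ lpNorm p x + lpNorm p y :=
  Real.Lp_add_le univ x y hp

lemma lpNorm_sum_le {κ : Type*} (hp : 1 ≤ p) (s : Finset κ) (v : κ → ι → ℝ) :
    lpNorm p (∑ l ∈ s, v l) ≤ ∑ l ∈ s, lpNorm p (v l) := by
  classical
  induction s using Finset.induction_on with
  | empty => simp [(lpNorm_eq_zero_iff (zero_lt_one.trans_le hp)).2]
  | insert l s hl ih =>
    rw [sum_insert hl, sum_insert hl]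
    exact (lpNorm_add_le hp _ _).trans (add_le_add_right ih _)

lemma lpNorm_le_lpNorm (hp : 0 < p) (hx : 0 ≤ x) (hxy : x ≤ y) : lpNorm p x ≤ lpNorm p y := by
  refine Real.rpow_le_rpow (sum_nonneg fun i _ => Real.rpow_nonneg (abs_nonneg _) p)
    (sum_le_sum fun i _ => ?_) (one_div_pos.2 hp).le
  rw [abs_of_nonneg (hx i), abs_of_nonneg ((hx i).trans (hxy i))]
  exact Real.rpow_le_rpow (hx i) (hxy i) hp.le

lemma eq_of_le_of_lpNorm_eq (hp : 0 < p) (hx : 0 ≤ x) (hxy : x ≤ y)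
    (h : lpNorm p x = lpNorm p y) : x = y := by
  have hy : 0 ≤ y := hx.trans hxy
  have hle : ∀ i ∈ univ, |x i| ^ p ≤ |y i| ^ p := fun i _ => by
    rw [abs_of_nonneg (hx i), abs_of_nonneg (hy i)]
    exact Real.rpow_le_rpow (hx i) (hxy i) hp.le
  have hsum : ∑ i, |x i| ^ p = ∑ i, |y i| ^ p := by
    rw [← lpNorm_rpow hp.ne', ← lpNorm_rpow hp.ne', h]
  funext i
  have := (sum_eq_sum_iff_of_le hle).1 hsum i (mem_univ i)
  rwa [abs_of_nonneg (hx i), abs_of_nonneg (hy i),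
    Real.rpow_left_inj (hx i) (hy i) hp.ne'] at this

lemma lpNorm_rpow_of_nonneg (hp : p ≠ 0) (hx : 0 ≤ x) : lpNorm p x ^ p = ∑ i, x i ^ p := by
  simp only [lpNorm_rpow hp, abs_of_nonneg (hx _)]

/-- Equality in Minkowski's inequality: by strict convexity of `t ↦ t ^ p`, the unit vectors
`x / ‖x‖` and `y / ‖y‖` agree. -/
lemma sameRay_of_lpNorm_add_eq (hp : 1 < p) (hx : 0 ≤ x) (hy : 0 ≤ y)
    (h : lpNorm p (x + y) = lpNorm p x + lpNorm p y) : SameRay ℝ x y := by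
  rcases eq_or_ne x 0 with rfl | hx0
  · exact SameRay.zero_left y
  rcases eq_or_ne y 0 with rfl | hy0
  · exact SameRay.zero_right x
  have hp0 : 0 < p := zero_lt_one.trans hp
  have sum_smul_rpow {z : ι → ℝ} (hz : 0 ≤ z) {c : ℝ} (hc : 0 < c) :
      ∑ i, (c • z) i ^ p = (c * lpNorm p z) ^ p := by
    rw [← lpNorm_rpow_of_nonneg hp0.ne' (smul_nonneg hc.le hz), lpNorm_smul hp0.ne',
      abs_of_pos hc]
  set a := lpNorm p x
  set b := lpNorm p y
  have ha : 0 < a := lpNorm_pos hp0 hx0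
  have hb : 0 < b := lpNorm_pos hp0 hy0
  have hab : 0 < a + b := add_pos ha hb
  set u : ι → ℝ := a⁻¹ • x
  set v : ι → ℝ := b⁻¹ • y
  set θ := a / (a + b)
  have hθ : 1 - θ = b / (a + b) := by simp only [θ]; field_simp; ring
  have hu : ∑ i, u i ^ p = 1 := by
    rw [sum_smul_rpow hx (inv_pos.2 ha), inv_mul_cancel₀ ha.ne', Real.one_rpow]
  have hv : ∑ i, v i ^ p = 1 := by
    rw [sum_smul_rpow hy (inv_pos.2 hb), inv_mul_cancel₀ hb.ne', Real.one_rpow]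
  have hcomb (i : ι) : θ * u i + (1 - θ) * v i = ((a + b)⁻¹ • (x + y)) i := by
    simp only [u, v, θ, hθ, Pi.smul_apply, Pi.add_apply, smul_eq_mul]
    field_simp
  have hcomb_sum :
      ∑ i, (θ * u i + (1 - θ) * v i) ^ p = ∑ i, (θ * u i ^ p + (1 - θ) * v i ^ p) := by
    rw [sum_add_distrib, ← mul_sum, ← mul_sum, hu, hv, sum_congr rfl fun i _ => by rw [hcomb i],
      sum_smul_rpow (add_nonneg hx hy) (inv_pos.2 hab), h, inv_mul_cancel₀ hab.ne',
      Real.one_rpow]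
    ring
  have hθ0 : 0 < θ := div_pos ha hab
  have hθ1 : 0 < 1 - θ := hθ ▸ div_pos hb hab
  have hu0 : 0 ≤ u := smul_nonneg (inv_nonneg.2 ha.le) hx
  have hv0 : 0 ≤ v := smul_nonneg (inv_nonneg.2 hb.le) hy
  have hstrict := strictConvexOn_rpow hp
  have hle : ∀ i ∈ univ, (θ * u i + (1 - θ) * v i) ^ p ≤ θ * u i ^ p + (1 - θ) * v i ^ p :=
    fun i _ => hstrict.convexOn.2 (Set.mem_Ici.2 (hu0 i)) (Set.mem_Ici.2 (hv0 i)) hθ0.le hθ1.le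
      (by ring)
  have huv : u = v := funext fun i => by
    by_contra hne
    have hlt := hstrict.2 (Set.mem_Ici.2 (hu0 i)) (Set.mem_Ici.2 (hv0 i)) hne hθ0 hθ1 (by ring)
    exact hlt.ne ((sum_eq_sum_iff_of_le hle).1 hcomb_sum i (mem_univ i))
  exact Or.inr (Or.inr ⟨a⁻¹, b⁻¹, inv_pos.2 ha, inv_pos.2 hb, huv⟩)

lemma lpNorm_add_eq_of_lpNorm_sum_eq {κ : Type*} (hp : 1 ≤ p) {s : Finset κ} {v : κ → ι → ℝ}
    (h : lpNorm p (∑ l ∈ s, v l) = ∑ l ∈ s, lpNorm p (v l)) {l l' : κ} (hl : l ∈ s)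
    (hl' : l' ∈ s) (hne : l ≠ l') :
    lpNorm p (v l + v l') = lpNorm p (v l) + lpNorm p (v l') := by
  classical
  have hl'' : l' ∈ s.erase l := mem_erase.2 ⟨hne.symm, hl'⟩
  refine le_antisymm (lpNorm_add_le hp _ _) ?_
  have hsum : ∑ m ∈ s, v m = (v l + v l') + ∑ m ∈ (s.erase l).erase l', v m := by
    rw [← add_sum_erase _ _ hl, ← add_sum_erase _ _ hl'', add_assoc]
  have hnorms : ∑ m ∈ s, lpNorm p (v m) =
      lpNorm p (v l) + lpNorm p (v l') + ∑ m ∈ (s.erase l).erase l', lpNorm p (v m) := by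
    rw [← add_sum_erase _ _ hl, ← add_sum_erase _ _ hl'', add_assoc]
  have := calc ∑ m ∈ s, lpNorm p (v m) = lpNorm p (∑ m ∈ s, v m) := h.symm
    _ ≤ lpNorm p (v l + v l') + lpNorm p (∑ m ∈ (s.erase l).erase l', v m) := by
      rw [hsum]; exact lpNorm_add_le hp _ _
    _ ≤ lpNorm p (v l + v l') + ∑ m ∈ (s.erase l).erase l', lpNorm p (v m) :=
      add_le_add_right (lpNorm_sum_le hp _ v) _
  linarith

lemma lpNorm_add_rpow_of_disjoint (hp : 0 < p) (h : ∀ i, x i = 0 ∨ y i = 0) :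
    lpNorm p (x + y) ^ p = lpNorm p x ^ p + lpNorm p y ^ p := by
  rw [lpNorm_rpow hp.ne', lpNorm_rpow hp.ne', lpNorm_rpow hp.ne', ← sum_add_distrib]
  refine sum_congr rfl fun i _ => ?_
  rcases h i with h | h <;> simp [h, Real.zero_rpow hp.ne']

lemma lpNorm_rpow_add_le (hp : 1 ≤ p) (hx : 0 ≤ x) (hy : 0 ≤ y) :
    lpNorm p x ^ p + lpNorm p y ^ p ≤ lpNorm p (x + y) ^ p := by
  have hp0 : p ≠ 0 := (zero_lt_one.trans_le hp).ne'
  rw [lpNorm_rpow_of_nonneg hp0 hx, lpNorm_rpow_of_nonneg hp0 hy,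
    lpNorm_rpow_of_nonneg hp0 (add_nonneg hx hy), ← sum_add_distrib]
  exact sum_le_sum fun i _ => Real.add_rpow_le_rpow_add (hx i) (hy i) hp

end lpNorm

lemma add_rpow_lt_rpow_add {a b s : ℝ} (ha : 0 < a) (hb : 0 < b) (hs : 1 < s) :
    a ^ s + b ^ s < (a + b) ^ s := by
  have hab : 0 < a + b := add_pos ha hb
  have hsplit {t : ℝ} (ht : 0 < t) : t ^ s = t ^ (s - 1) * t := by
    rw [← Real.rpow_add_one ht.ne', sub_add_cancel]
  have hlt {t : ℝ} (ht : 0 < t) (hts : t < a + b) : t ^ (s - 1) < (a + b) ^ (s - 1) :=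
    Real.rpow_lt_rpow ht.le hts (sub_pos.2 hs)
  rw [hsplit ha, hsplit hb, hsplit hab, mul_add]
  exact add_lt_add (mul_lt_mul_of_pos_right (hlt ha (by linarith)) ha)
    (mul_lt_mul_of_pos_right (hlt hb (by linarith)) hb)

lemma eq_zero_or_eq_zero_of_lpNorm_split {ι κ : Type*} [Fintype ι] [Fintype κ]
    {p d c : ℝ} {y z : ι → ℝ} {a b : κ → ℝ} (hp : 1 ≤ p) (hpd : p < d) (hc : 0 < c)
    (hy : 0 ≤ y) (hz : 0 ≤ z) (hab : ∀ k, a k = 0 ∨ b k = 0)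
    (ha : lpNorm d a ≤ c * lpNorm p y) (hb : lpNorm d b ≤ c * lpNorm p z)
    (h : c * lpNorm p (y + z) ≤ lpNorm d (a + b)) : y = 0 ∨ z = 0 := by
  have hp0 : 0 < p := zero_lt_one.trans_le hp
  have hd0 : 0 < d := hp0.trans hpd
  set s := d / p
  have hs : 1 < s := (one_lt_div hp0).2 hpd
  have hpow (w : ι → ℝ) : lpNorm p w ^ d = (lpNorm p w ^ p) ^ s := by
    rw [← Real.rpow_mul lpNorm_nonneg, mul_div_cancel₀ _ hp0.ne']
  have hmul (w : ι → ℝ) : (c * lpNorm p w) ^ d = c ^ d * (lpNorm p w ^ p) ^ s := by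
    rw [Real.mul_rpow hc.le lpNorm_nonneg, hpow]
  have hpow_le {u v : ℝ} (hu : 0 ≤ u) (huv : u ≤ v) : u ^ d ≤ v ^ d :=
    Real.rpow_le_rpow hu huv hd0.le
  have key : c ^ d * (lpNorm p y ^ p + lpNorm p z ^ p) ^ s ≤
      c ^ d * ((lpNorm p y ^ p) ^ s + (lpNorm p z ^ p) ^ s) := calc
    _ ≤ c ^ d * (lpNorm p (y + z) ^ p) ^ s := by
      gcongr
      · exact add_nonneg (Real.rpow_nonneg lpNorm_nonneg p) (Real.rpow_nonneg lpNorm_nonneg p)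
      · exact lpNorm_rpow_add_le hp hy hz
    _ = (c * lpNorm p (y + z)) ^ d := (hmul _).symm
    _ ≤ lpNorm d (a + b) ^ d := hpow_le (mul_nonneg hc.le lpNorm_nonneg) h
    _ = lpNorm d a ^ d + lpNorm d b ^ d := lpNorm_add_rpow_of_disjoint hd0 hab
    _ ≤ (c * lpNorm p y) ^ d + (c * lpNorm p z) ^ d :=
      add_le_add (hpow_le lpNorm_nonneg ha) (hpow_le lpNorm_nonneg hb)
    _ = _ := by rw [hmul, hmul, mul_add]
  by_contra hne
  obtain ⟨hy0, hz0⟩ := not_or.1 hne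
  have hY : 0 < lpNorm p y ^ p := Real.rpow_pos_of_pos (lpNorm_pos hp0 hy0) p
  have hZ : 0 < lpNorm p z ^ p := Real.rpow_pos_of_pos (lpNorm_pos hp0 hz0) p
  exact (le_of_mul_le_mul_left key (by positivity)).not_gt (add_rpow_lt_rpow_add hY hZ hs)

section Matrix

variable {m n : Type*} {p : ℝ}

noncomputable def colNorms [Fintype m] (p : ℝ) (R : Matrix m n ℝ) : n → ℝ :=
  fun l => lpNorm p (Rᵀ l)

lemma mulVec_eq_sum_smul_col [Fintype n] (R : Matrix m n ℝ) (v : n → ℝ) :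
    R *ᵥ v = ∑ l, v l • Rᵀ l := by
  simp [mulVec_eq_sum]

lemma mulVec_nonneg [Fintype n] {B : Matrix m n ℝ} (hB : ∀ i j, 0 ≤ B i j) {v : n → ℝ}
    (hv : 0 ≤ v) : 0 ≤ B *ᵥ v :=
  fun i => sum_nonneg fun j _ => mul_nonneg (hB i j) (hv j)

lemma lpNorm_mulVec_le_dotProduct [Fintype m] [Fintype n] (hp : 1 ≤ p) (R : Matrix m n ℝ)
    {v : n → ℝ} (hv : 0 ≤ v) : lpNorm p (R *ᵥ v) ≤ v ⬝ᵥ colNorms p R := by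
  rw [mulVec_eq_sum_smul_col]
  refine (lpNorm_sum_le hp _ _).trans_eq (sum_congr rfl fun l _ => ?_)
  rw [lpNorm_smul (zero_lt_one.trans_le hp).ne', abs_of_nonneg (hv l), colNorms]

lemma sameRay_col_of_lpNorm_mulVec_eq [Fintype m] [Fintype n] (hp : 1 < p) {R : Matrix m n ℝ}
    (hR : ∀ j l, 0 ≤ R j l) {v : n → ℝ} (hv : 0 ≤ v) (h : lpNorm p (R *ᵥ v) = v ⬝ᵥ colNorms p R)
    {l l' : n} (hl : v l ≠ 0) (hl' : v l' ≠ 0) : SameRay ℝ (Rᵀ l) (Rᵀ l') := by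
  rcases eq_or_ne l l' with rfl | hne
  · exact SameRay.refl _
  have hp0 : p ≠ 0 := (zero_lt_one.trans hp).ne'
  have hnorm (l : n) : lpNorm p (v l • Rᵀ l) = v l * lpNorm p (Rᵀ l) := by
    rw [lpNorm_smul hp0, abs_of_nonneg (hv l)]
  have hcol (l : n) : 0 ≤ v l • Rᵀ l := smul_nonneg (hv l) fun j => hR j l
  rw [mulVec_eq_sum_smul_col] at h
  have hsum := lpNorm_add_eq_of_lpNorm_sum_eq hp.le
    (h.trans (sum_congr rfl fun l _ => (hnorm l).symm)) (mem_univ l) (mem_univ l') hne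
  have hray := sameRay_of_lpNorm_add_eq hp (hcol l) (hcol l') hsum
  have hpos (l : n) (hl : v l ≠ 0) : 0 < (v l)⁻¹ := inv_pos.2 ((hv l).lt_of_ne' hl)
  simpa [inv_smul_smul₀ hl, inv_smul_smul₀ hl'] using
    (hray.pos_smul_left (hpos l hl)).pos_smul_right (hpos l' hl')

lemma exists_eq_mul_of_forall_sameRay_col {R : Matrix m n ℝ} (hR : ∀ j l, 0 ≤ R j l) {l₀ : n}
    (hl₀ : Rᵀ l₀ ≠ 0) (h : ∀ l, SameRay ℝ (Rᵀ l₀) (Rᵀ l)) :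
    ∃ u : m → ℝ, ∃ v : n → ℝ, (∀ j, 0 ≤ u j) ∧ (∀ l, 0 ≤ v l) ∧ ∀ j l, R j l = u j * v l := by
  choose v hv hRv using fun l => (h l).exists_nonneg_left hl₀
  exact ⟨Rᵀ l₀, v, fun j => hR j l₀, hv, fun j l => by
    rw [← transpose_apply R, ← hRv l, Pi.smul_apply, smul_eq_mul, mul_comm]⟩

lemma sameRay_col_of_split {κ : Type*} [Fintype m] [Fintype n] (hp : 0 < p) {B : Matrix κ n ℝ}
    {R : Matrix m n ℝ} (hray : ∀ k l l', B k l ≠ 0 → B k l' ≠ 0 → SameRay ℝ (Rᵀ l) (Rᵀ l'))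
    (hsplit : ∀ y z : n → ℝ, 0 ≤ y → 0 ≤ z → y + z = colNorms p R →
      (∀ k, (B *ᵥ y) k = 0 ∨ (B *ᵥ z) k = 0) → y = 0 ∨ z = 0)
    {l₀ : n} (hl₀ : Rᵀ l₀ ≠ 0) (l : n) : SameRay ℝ (Rᵀ l₀) (Rᵀ l) := by
  classical
  set C : Set n := {l | SameRay ℝ (Rᵀ l₀) (Rᵀ l)}
  set w := colNorms p R
  have hw : 0 ≤ w := fun _ => lpNorm_nonneg
  have hw0 {l : n} : w l = 0 ↔ Rᵀ l = 0 := lpNorm_eq_zero_iff hp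
  have hdisj (k : κ) : (B *ᵥ C.indicator w) k = 0 ∨ (B *ᵥ Cᶜ.indicator w) k = 0 := by
    by_contra! h
    obtain ⟨l, -, hl⟩ := exists_ne_zero_of_sum_ne_zero h.1
    obtain ⟨l', -, hl'⟩ := exists_ne_zero_of_sum_ne_zero h.2
    have hlC : l ∈ C := Set.mem_of_indicator_ne_zero (right_ne_zero_of_mul hl)
    have hl'C : l' ∈ Cᶜ := Set.mem_of_indicator_ne_zero (right_ne_zero_of_mul hl')
    have hwl : w l ≠ 0 := by simpa [Set.indicator_of_mem hlC] using right_ne_zero_of_mul hl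
    exact hl'C (hlC.trans (hray k l l' (left_ne_zero_of_mul hl) (left_ne_zero_of_mul hl'))
      fun h0 => absurd (hw0.2 h0) hwl)
  rcases hsplit _ _ (Set.indicator_nonneg fun l _ => hw l) (Set.indicator_nonneg fun l _ => hw l)
    (Set.indicator_self_add_compl C w) hdisj with h | h
  · have hl₀C : l₀ ∈ C := SameRay.refl _
    exact absurd (hw0.1 (by simpa [Set.indicator_of_mem hl₀C] using congrFun h l₀)) hl₀
  · by_contra hl
    have hlC : l ∈ Cᶜ := hl
    have hRl : Rᵀ l = 0 := hw0.1 (by simpa [Set.indicator_of_mem hlC] using congrFun h l)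
    exact hl (hRl ▸ SameRay.zero_right _)

end Matrix

section Tensor

variable {q : ℕ}

lemma matEntryNorm_eq_lpNorm_colNorms {t : ℝ} (ht : t ≠ 0) (S : Matrix (Fin q) (Fin q) ℝ) :
    matEntryNorm t S = lpNorm t (colNorms t S) := by
  rw [matEntryNorm, lpNorm, sum_comm]
  congr 1
  refine sum_congr rfl fun l _ => ?_
  rw [colNorms, abs_of_nonneg lpNorm_nonneg, lpNorm_rpow ht]
  rfl

lemma matEntryNorm_pos {t : ℝ} (ht : 0 < t) {S : Matrix (Fin q) (Fin q) ℝ} (hS : S ≠ 0) :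
    0 < matEntryNorm t S := by
  rw [matEntryNorm_eq_lpNorm_colNorms ht.ne']
  refine lpNorm_pos ht fun h0 => hS (transpose_eq_zero.1 (funext fun l => ?_))
  exact (lpNorm_eq_zero_iff ht).1 (congrFun h0 l)

lemma matEntryNorm_vecMulVec (t : ℝ) (x y : Fin q → ℝ) :
    matEntryNorm t (vecMulVec x y) = lpNorm t x * lpNorm t y := by
  simp only [matEntryNorm, lpNorm, vecMulVec_apply, abs_mul,
    Real.mul_rpow (abs_nonneg _) (abs_nonneg _), ← mul_sum, ← sum_mul]
  exact Real.mul_rpow (sum_nonneg fun _ _ => Real.rpow_nonneg (abs_nonneg _) t)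
    (sum_nonneg fun _ _ => Real.rpow_nonneg (abs_nonneg _) t)

lemma tensorAct_vecMulVec (B : Matrix (Fin q) (Fin q) ℝ) (x y : Fin q → ℝ) :
    tensorAct B (vecMulVec x y) = vecMulVec (B *ᵥ x) (B *ᵥ y) := by
  ext i k
  simp only [tensorAct, of_apply, vecMulVec_apply, mulVec, dotProduct, sum_mul_sum]
  exact sum_congr rfl fun j _ => sum_congr rfl fun l _ => by ring

lemma tensorAct_eq_mul_mul_transpose (B S : Matrix (Fin q) (Fin q) ℝ) :
    tensorAct B S = B * S * Bᵀ := by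
  ext i k
  simp only [tensorAct, of_apply, mul_apply, transpose_apply, sum_mul]
  rw [sum_comm]
  exact sum_congr rfl fun l _ => sum_congr rfl fun j _ => by ring

lemma tensorAct_ne_zero {B S : Matrix (Fin q) (Fin q) ℝ} (hB : IsUnit B) (hS : S ≠ 0) :
    tensorAct B S ≠ 0 := by
  rwa [tensorAct_eq_mul_mul_transpose, Ne, (B.isUnit_transpose.2 hB).mul_left_eq_zero,
    hB.mul_right_eq_zero]

lemma transpose_tensorAct (B S : Matrix (Fin q) (Fin q) ℝ) (k : Fin q) :
    (tensorAct B S)ᵀ k = B *ᵥ (S *ᵥ B k) := by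
  ext i
  simp only [transpose_apply, tensorAct, of_apply, mulVec, dotProduct, mul_sum]
  exact sum_congr rfl fun j _ => sum_congr rfl fun l _ => by ring

lemma lpNorm_mulVec_le_of_maximizer {B R : Matrix (Fin q) (Fin q) ℝ} {p d : ℝ} (hd : 0 < d)
    (hR : 0 < matEntryNorm p R)
    (hmax : ∀ S : Matrix (Fin q) (Fin q) ℝ, (∀ j l, 0 ≤ S j l) → S ≠ 0 →
      matEntryNorm d (tensorAct B S) * matEntryNorm p R ≤
      matEntryNorm d (tensorAct B R) * matEntryNorm p S)
    {x : Fin q → ℝ} (hx : 0 ≤ x) :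
    lpNorm d (B *ᵥ x) ≤ √(matEntryNorm d (tensorAct B R) / matEntryNorm p R) * lpNorm p x := by
  rcases eq_or_ne x 0 with rfl | hx0
  · rw [mulVec_zero, (lpNorm_eq_zero_iff hd).2 rfl]
    exact mul_nonneg (Real.sqrt_nonneg _) lpNorm_nonneg
  have h := hmax (vecMulVec x x) (fun j l => mul_nonneg (hx j) (hx l)) (by simpa using hx0)
  rw [tensorAct_vecMulVec, matEntryNorm_vecMulVec, matEntryNorm_vecMulVec, ← le_div_iff₀ hR,
    mul_div_right_comm] at h
  rw [← Real.sqrt_sq (lpNorm_nonneg (p := p) (x := x)), ← Real.sqrt_mul' _ (sq_nonneg _)]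
  exact Real.le_sqrt_of_sq_le (by simpa [sq] using h)

lemma minkowski_eq_and_bound_eq_of_tensorAct_attains {B R : Matrix (Fin q) (Fin q) ℝ}
    {p d c : ℝ}
    (hB : ∀ i j, 0 ≤ B i j) (hR : ∀ j l, 0 ≤ R j l) (hp : 1 ≤ p) (hd : 0 < d) (hc : 0 < c)
    (hbound : ∀ x : Fin q → ℝ, 0 ≤ x → lpNorm d (B *ᵥ x) ≤ c * lpNorm p x)
    (hattain : c * c * matEntryNorm p R ≤ matEntryNorm d (tensorAct B R)) :
    (∀ k, lpNorm p (R *ᵥ B k) = B k ⬝ᵥ colNorms p R) ∧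
      lpNorm d (B *ᵥ colNorms p R) = c * lpNorm p (colNorms p R) := by
  set w := colNorms p R
  set G : Fin q → ℝ := fun k => lpNorm d (B *ᵥ (R *ᵥ B k))
  have hw : 0 ≤ w := fun _ => lpNorm_nonneg
  have hG0 : 0 ≤ G := fun _ => lpNorm_nonneg
  have hRB (k : Fin q) : 0 ≤ R *ᵥ B k := mulVec_nonneg hR (hB k)
  have hmink (k : Fin q) : lpNorm p (R *ᵥ B k) ≤ (B *ᵥ w) k :=
    lpNorm_mulVec_le_dotProduct hp R (hB k)
  have hGw : G ≤ c • (B *ᵥ w) := fun k =>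
    (hbound _ (hRB k)).trans (mul_le_mul_of_nonneg_left (hmink k) hc.le)
  have hupper : lpNorm d G ≤ c * lpNorm d (B *ᵥ w) := by
    rw [← abs_of_pos hc, ← lpNorm_smul hd.ne']
    exact lpNorm_le_lpNorm hd hG0 hGw
  have hlower : c * (c * lpNorm p w) ≤ lpNorm d G := by
    have hG : colNorms d (tensorAct B R) = G := funext fun k => by
      rw [colNorms, transpose_tensorAct]
    rw [← mul_assoc, ← matEntryNorm_eq_lpNorm_colNorms (zero_lt_one.trans_le hp).ne', ← hG,
      ← matEntryNorm_eq_lpNorm_colNorms hd.ne']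
    exact hattain
  have hBw : lpNorm d (B *ᵥ w) = c * lpNorm p w :=
    le_antisymm (hbound w hw) (le_of_mul_le_mul_left (hlower.trans hupper) hc)
  have hGeq : G = c • (B *ᵥ w) := by
    refine eq_of_le_of_lpNorm_eq hd hG0 hGw (le_antisymm (lpNorm_le_lpNorm hd hG0 hGw) ?_)
    rw [lpNorm_smul hd.ne', abs_of_pos hc, hBw]
    exact hlower
  refine ⟨fun k => le_antisymm (hmink k) (le_of_mul_le_mul_left ?_ hc), hBw⟩
  exact (congrFun hGeq k).symm.le.trans (hbound _ (hRB k))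

end Tensor

theorem tensor_norm_maximizer_rank_one_general
    (q Δ : ℕ) (hΔ : 3 ≤ Δ)
    (B : Matrix (Fin q) (Fin q) ℝ)
    (hBnonneg : ∀ i j, 0 ≤ B i j) (hBinv : IsUnit B)
    (R : Matrix (Fin q) (Fin q) ℝ) (hRnonneg : ∀ j l, 0 ≤ R j l) (hRne : R ≠ 0)
    (hmax : ∀ S : Matrix (Fin q) (Fin q) ℝ, (∀ j l, 0 ≤ S j l) → S ≠ 0 →
      matEntryNorm (Δ : ℝ) (tensorAct B S) * matEntryNorm ((Δ : ℝ) / ((Δ : ℝ) - 1)) R ≤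
      matEntryNorm (Δ : ℝ) (tensorAct B R) * matEntryNorm ((Δ : ℝ) / ((Δ : ℝ) - 1)) S) :
    ∃ u v : Fin q → ℝ, (∀ j, 0 ≤ u j) ∧ (∀ l, 0 ≤ v l) ∧ ∀ j l, R j l = u j * v l := by
  set d : ℝ := (Δ : ℝ)
  set p : ℝ := d / (d - 1)
  have hd : 2 < d := by simp only [d]; exact_mod_cast hΔ
  have hp : 1 < p := (one_lt_div (by linarith)).2 (by linarith)
  have hpd : p < d := (div_lt_iff₀ (by linarith)).2 (by nlinarith)
  have hP : 0 < matEntryNorm p R := matEntryNorm_pos (by linarith) hRne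
  have hA : 0 < matEntryNorm d (tensorAct B R) :=
    matEntryNorm_pos (by linarith) (tensorAct_ne_zero hBinv hRne)
  set c := √(matEntryNorm d (tensorAct B R) / matEntryNorm p R)
  have hc : 0 < c := Real.sqrt_pos.2 (div_pos hA hP)
  have hbound (x : Fin q → ℝ) (hx : 0 ≤ x) : lpNorm d (B *ᵥ x) ≤ c * lpNorm p x :=
    lpNorm_mulVec_le_of_maximizer (by linarith) hP hmax hx
  have hattain : c * c * matEntryNorm p R ≤ matEntryNorm d (tensorAct B R) := by
    rw [Real.mul_self_sqrt (div_nonneg hA.le hP.le), div_mul_cancel₀ _ hP.ne']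
  obtain ⟨hrow, hw⟩ := minkowski_eq_and_bound_eq_of_tensorAct_attains hBnonneg hRnonneg hp.le
    (by linarith) hc hbound hattain
  obtain ⟨l₀, hl₀⟩ : ∃ l, Rᵀ l ≠ 0 := by
    by_contra! h
    exact hRne (transpose_eq_zero.1 (funext h))
  refine exists_eq_mul_of_forall_sameRay_col hRnonneg hl₀ (sameRay_col_of_split (p := p)
    (by linarith) (fun k l l' hl hl' => sameRay_col_of_lpNorm_mulVec_eq hp hRnonneg (hBnonneg k)
      (hrow k) hl hl') (fun y z hy hz hyz hdisj => ?_) hl₀)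
  refine eq_zero_or_eq_zero_of_lpNorm_split hp.le hpd hc hy hz hdisj (hbound y hy) (hbound z hz)
    ?_
  rw [← mulVec_add, hyz, hw]

/-- A nonnegative maximizer of the tensorized norm ratio
N_Δ(T(·))/N_p(·), with p = Δ/(Δ−1), has rank at most one. -/
theorem tensor_norm_maximizer_rank_one
    (q Δ : ℕ) (hq : 1 ≤ q) (hΔ : 3 ≤ Δ)
    (B : Matrix (Fin q) (Fin q) ℝ) (hBsymm : B.IsSymm)
    (hBnonneg : ∀ i j, 0 ≤ B i j) (hBinv : IsUnit B)
    (R : Matrix (Fin q) (Fin q) ℝ) (hRnonneg : ∀ j l, 0 ≤ R j l) (hRne : R ≠ 0)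
    (hmax : ∀ S : Matrix (Fin q) (Fin q) ℝ, (∀ j l, 0 ≤ S j l) → S ≠ 0 →
      matEntryNorm (Δ : ℝ) (tensorAct B S) * matEntryNorm ((Δ : ℝ) / ((Δ : ℝ) - 1)) R ≤
      matEntryNorm (Δ : ℝ) (tensorAct B R) * matEntryNorm ((Δ : ℝ) / ((Δ : ℝ) - 1)) S) :
    ∃ u v : Fin q → ℝ, (∀ j, 0 ≤ u j) ∧ (∀ l, 0 ≤ v l) ∧ ∀ j l, R j l = u j * v l :=
  tensor_norm_maximizer_rank_one_general q Δ hΔ B hBnonneg hBinv R hRnonneg hRne hmax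
end

section
/- Let q ≥ 1 be an integer, B a q×q real matrix with nonnegative entries, and R, C ∈ ℝ^q vectors with nonnegative entries. Define x*_{ij} = B_{ij}·R_i·C_j, α_i = ∑_j x*_{ij} and β_j = ∑_i x*_{ij}. Then for every x : [q]×[q] → ℝ with x_{ij} ≥ 0 for all i,j, x_{ij} = 0 whenever B_{ij} = 0, ∑_j x_{ij} = α_i for all i and ∑_i x_{ij} = β_j for all j, one has ∑_{i,j} x_{ij}(ln B_{ij} − ln x_{ij}) ≤ ∑_{i,j} x*_{ij}(ln B_{ij} − ln x*_{ij}) = −∑_{i,j} B_{ij}·R_i·C_j·ln(R_i·C_j), with equality if and only if x = x*. -/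
/-!
Margins force the support of `x` into that of `x* = B R C`, and there
`ln B_{ij} = ln x*_{ij} - ln R_i - ln C_j`. So the objective of any admissible `x` is
`∑ x (ln x* - ln x)` minus `∑ x_{ij} (ln R_i + ln C_j)`, and the latter depends only on the
margins. The objective of `x` thus falls short of that of `x*` by `-∑ x (ln x* - ln x)`, which
by Gibbs' inequality is at least `∑ x - ∑ x* = 0`, with equality only for `x = x*`.
-/

open Real Finset

theorem mul_log_sub_log_lt_sub {a b : ℝ} (ha : 0 ≤ a) (hb : 0 ≤ b) (hab : a ≠ b)
    (hsupp : a ≠ 0 → b ≠ 0) : a * (log b - log a) < b - a := by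
  rcases ha.eq_or_lt with rfl | ha
  · simpa using hb.lt_of_ne hab
  have hb : 0 < b := hb.lt_of_ne (hsupp ha.ne').symm
  have hlog : log (b / a) < b / a - 1 :=
    log_lt_sub_one_of_pos (div_pos hb ha) (by rwa [ne_eq, div_eq_one_iff_eq ha.ne', eq_comm])
  rw [log_div hb.ne' ha.ne'] at hlog
  calc a * (log b - log a) < a * (b / a - 1) := mul_lt_mul_of_pos_left hlog ha
    _ = b - a := by field_simp

theorem mul_log_sub_log_le_sub {a b : ℝ} (ha : 0 ≤ a) (hb : 0 ≤ b)
    (hsupp : a ≠ 0 → b ≠ 0) : a * (log b - log a) ≤ b - a := by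
  rcases eq_or_ne a b with rfl | hab
  · simp
  · exact (mul_log_sub_log_lt_sub ha hb hab hsupp).le

section Gibbs

variable {ι : Type*} [Fintype ι] {x y : ι → ℝ}

theorem sum_mul_log_sub_log_le (hx : 0 ≤ x) (hy : 0 ≤ y) (hsupp : ∀ i, x i ≠ 0 → y i ≠ 0) :
    ∑ i, x i * (log (y i) - log (x i)) ≤ ∑ i, y i - ∑ i, x i := by
  rw [← sum_sub_distrib]
  exact sum_le_sum fun i _ => mul_log_sub_log_le_sub (hx i) (hy i) (hsupp i)

theorem sum_mul_log_sub_log_eq_iff (hx : 0 ≤ x) (hy : 0 ≤ y) (hsupp : ∀ i, x i ≠ 0 → y i ≠ 0) :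
    ∑ i, x i * (log (y i) - log (x i)) = ∑ i, y i - ∑ i, x i ↔ x = y := by
  refine ⟨fun heq => ?_, by rintro rfl; simp⟩
  by_contra hne
  obtain ⟨i, hi⟩ := Function.ne_iff.mp hne
  rw [← sum_sub_distrib] at heq
  exact heq.not_lt (sum_lt_sum (fun i _ => mul_log_sub_log_le_sub (hx i) (hy i) (hsupp i))
    ⟨i, mem_univ i, mul_log_sub_log_lt_sub (hx i) (hy i) hi (hsupp i)⟩)

end Gibbs

theorem mul_log_sub_log_eq_mul_log_sub_log_mul_sub {a b r c : ℝ}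
    (hsupp : a ≠ 0 → b * r * c ≠ 0) :
    a * (log b - log a) = a * (log (b * r * c) - log a) - a * (log r + log c) := by
  rcases eq_or_ne a 0 with rfl | ha
  · simp
  obtain ⟨⟨hb, hr⟩, hc⟩ := mul_ne_zero_iff.mp (hsupp ha) |>.imp_left mul_ne_zero_iff.mp
  rw [log_mul (mul_ne_zero hb hr) hc, log_mul hb hr]
  ring

theorem mul_log_sub_log_mul_self (b r c : ℝ) :
    b * r * c * (log b - log (b * r * c)) = -(b * r * c * log (r * c)) := by
  rcases eq_or_ne (b * r * c) 0 with h | h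
  · simp [h]
  obtain ⟨hb, hrc⟩ := mul_ne_zero_iff.mp (mul_assoc b r c ▸ h)
  rw [mul_assoc b r c, log_mul hb hrc]
  ring

section Margins

variable {ι κ : Type*} [Fintype ι] [Fintype κ]

theorem sum_sum_mul_add_eq_of_margins_eq {z w : ι → κ → ℝ} (hrow : ∀ i, ∑ j, z i j = ∑ j, w i j)
    (hcol : ∀ j, ∑ i, z i j = ∑ i, w i j) (u : ι → ℝ) (v : κ → ℝ) :
    ∑ i, ∑ j, z i j * (u i + v j) = ∑ i, ∑ j, w i j * (u i + v j) := by
  simp only [mul_add, sum_add_distrib, ← sum_mul]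
  rw [sum_comm (f := fun i j => z i j * v j), sum_comm (f := fun i j => w i j * v j)]
  simp only [← sum_mul, hrow, hcol]

theorem sum_sum_mul_log_sub_log_eq (B : ι → κ → ℝ) (R : ι → ℝ) (C : κ → ℝ) {z : ι → κ → ℝ}
    (hsupp : ∀ i j, z i j ≠ 0 → B i j * R i * C j ≠ 0) :
    ∑ i, ∑ j, z i j * (log (B i j) - log (z i j)) =
      ∑ i, ∑ j, z i j * (log (B i j * R i * C j) - log (z i j)) -
        ∑ i, ∑ j, z i j * (log (R i) + log (C j)) := by
  simp only [← sum_sub_distrib, mul_log_sub_log_eq_mul_log_sub_log_mul_sub (hsupp _ _)]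

theorem mul_mul_ne_zero_of_margins_eq {B x : ι → κ → ℝ} {R : ι → ℝ} {C : κ → ℝ}
    (hx : ∀ i j, 0 ≤ x i j) (hxB : ∀ i j, B i j = 0 → x i j = 0)
    (hrow : ∀ i, ∑ j, x i j = ∑ j, B i j * R i * C j)
    (hcol : ∀ j, ∑ i, x i j = ∑ i, B i j * R i * C j) {i : ι} {j : κ} (hij : x i j ≠ 0) :
    B i j * R i * C j ≠ 0 := by
  refine mul_ne_zero (mul_ne_zero (mt (hxB i j) hij) fun hR => hij ?_) fun hC => hij ?_
  · exact (sum_eq_zero_iff_of_nonneg fun k _ => hx i k).mp (by simp [hrow, hR]) j (mem_univ j)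
  · exact (sum_eq_zero_iff_of_nonneg fun k _ => hx k j).mp (by simp [hcol, hC]) i (mem_univ i)

end Margins

theorem max_entropy_configuration_general
    (q : ℕ) (B : Matrix (Fin q) (Fin q) ℝ)
    (hBnonneg : ∀ i j, 0 ≤ B i j)
    (R C : Fin q → ℝ) (hR : ∀ i, 0 ≤ R i) (hC : ∀ j, 0 ≤ C j) :
    ∀ x : Fin q → Fin q → ℝ,
      (∀ i j, 0 ≤ x i j) →
      (∀ i j, B i j = 0 → x i j = 0) →
      (∀ i, (∑ j, x i j) = ∑ j, B i j * R i * C j) →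
      (∀ j, (∑ i, x i j) = ∑ i, B i j * R i * C j) →
      ((∑ i, ∑ j, x i j * (Real.log (B i j) - Real.log (x i j)) ≤
          ∑ i, ∑ j, (B i j * R i * C j) * (Real.log (B i j) - Real.log (B i j * R i * C j))) ∧
        (∑ i, ∑ j, (B i j * R i * C j) * (Real.log (B i j) - Real.log (B i j * R i * C j)) =
          -∑ i, ∑ j, B i j * R i * C j * Real.log (R i * C j)) ∧
        ((∑ i, ∑ j, x i j * (Real.log (B i j) - Real.log (x i j)) =
            ∑ i, ∑ j, (B i j * R i * C j) * (Real.log (B i j) - Real.log (B i j * R i * C j)))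
          ↔ x = fun i j => B i j * R i * C j)) := by
  intro x hx hxB hrow hcol
  have hsupp i j : x i j ≠ 0 → B i j * R i * C j ≠ 0 :=
    mul_mul_ne_zero_of_margins_eq hx hxB hrow hcol
  have hy : 0 ≤ fun p : Fin q × Fin q => B p.1 p.2 * R p.1 * C p.2 := fun p =>
    mul_nonneg (mul_nonneg (hBnonneg _ _) (hR _)) (hC _)
  have gibbs_le := sum_mul_log_sub_log_le (fun p => hx p.1 p.2) hy fun p => hsupp p.1 p.2
  have gibbs_eq := sum_mul_log_sub_log_eq_iff (fun p => hx p.1 p.2) hy fun p => hsupp p.1 p.2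
  have hmass : ∑ i, ∑ j, x i j = ∑ i, ∑ j, B i j * R i * C j := sum_congr rfl fun i _ => hrow i
  simp only [Fintype.sum_prod_type, hmass, sub_self] at gibbs_le gibbs_eq
  have hclosed : ∑ i, ∑ j, B i j * R i * C j * (log (B i j) - log (B i j * R i * C j)) =
      -∑ i, ∑ j, B i j * R i * C j * log (R i * C j) := by
    simp only [mul_log_sub_log_mul_self, sum_neg_distrib]
  have hgap : ∑ i, ∑ j, x i j * (log (B i j) - log (x i j)) =
      ∑ i, ∑ j, x i j * (log (B i j * R i * C j) - log (x i j)) +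
        ∑ i, ∑ j, B i j * R i * C j * (log (B i j) - log (B i j * R i * C j)) := by
    rw [sum_sum_mul_log_sub_log_eq B R C hsupp, sum_sum_mul_log_sub_log_eq B R C fun _ _ h => h,
      sum_sum_mul_add_eq_of_margins_eq hrow hcol]
    simp only [sub_self, mul_zero, sum_const_zero]
    ring
  refine ⟨by linarith, hclosed, ?_⟩
  rw [hgap, add_eq_right, gibbs_eq]
  simp [funext_iff]

/-- maximum-entropy property of x*_{ij} = B_{ij} R_i C_j among all
nonnegative x with the same row and column margins, with uniqueness of the maximizer,
and the closed form of the maximum value. -/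
theorem max_entropy_configuration
    (q : ℕ) (hq : 1 ≤ q) (B : Matrix (Fin q) (Fin q) ℝ)
    (hBnonneg : ∀ i j, 0 ≤ B i j)
    (R C : Fin q → ℝ) (hR : ∀ i, 0 ≤ R i) (hC : ∀ j, 0 ≤ C j) :
    ∀ x : Fin q → Fin q → ℝ,
      (∀ i j, 0 ≤ x i j) →
      (∀ i j, B i j = 0 → x i j = 0) →
      (∀ i, (∑ j, x i j) = ∑ j, B i j * R i * C j) →
      (∀ j, (∑ i, x i j) = ∑ i, B i j * R i * C j) →
      ((∑ i, ∑ j, x i j * (Real.log (B i j) - Real.log (x i j)) ≤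
          ∑ i, ∑ j, (B i j * R i * C j) * (Real.log (B i j) - Real.log (B i j * R i * C j))) ∧
        (∑ i, ∑ j, (B i j * R i * C j) * (Real.log (B i j) - Real.log (B i j * R i * C j)) =
          -∑ i, ∑ j, B i j * R i * C j * Real.log (R i * C j)) ∧
        ((∑ i, ∑ j, x i j * (Real.log (B i j) - Real.log (x i j)) =
            ∑ i, ∑ j, (B i j * R i * C j) * (Real.log (B i j) - Real.log (B i j * R i * C j)))
          ↔ x = fun i j => B i j * R i * C j)) :=
  max_entropy_configuration_general q B hBnonneg R C hR hC
end

section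
/- Let q ≥ 1 and Δ ≥ 3 be integers and let B be a symmetric q×q real matrix with nonnegative entries. Suppose R, C ∈ ℝ^q have all entries positive and there exist constants λ, μ > 0 such that R_i = λ·(∑_j B_{ij}C_j)^{Δ−1} for every i and C_j = μ·(∑_i B_{ij}R_i)^{Δ−1} for every j, and suppose ∑_{i,j} B_{ij}·R_i·C_j = 1. Define α_i = R_i·∑_j B_{ij}C_j, β_j = C_j·∑_i B_{ij}R_i, and x_{ij} = B_{ij}·R_i·C_j. Then (α,β,x) is feasible for the first moment and Υ₁(α,β,x) = −(Δ−1)·( ln(∑_i R_i^{Δ/(Δ−1)}) + ln(∑_j C_j^{Δ/(Δ−1)}) ). -/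
/-!
At a fixpoint, `ln R_i = ln λ + (Δ-1) ln S_i` with `S_i = ∑_j B_ij C_j`, so the entropy term of
`α_i = R_i S_i` collapses to `Δ ∑ α_i ln R_i - ln λ`, and symmetrically for `β`. Since
`ln x_ij = ln B_ij + ln R_i + ln C_j`, the `B`-weighted entropy of `x` is
`-∑ α_i ln R_i - ∑ β_j ln C_j`, which cancels the `ln R`, `ln C` terms after scaling by `Δ`.
Finally `R_i ^ (Δ/(Δ-1)) = λ ^ (1/(Δ-1)) α_i` sums to `λ ^ (1/(Δ-1))`, which identifies `ln λ`
with `(Δ-1) ln ∑ R_i ^ (Δ/(Δ-1))`.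
-/

open Finset Real

section Fixpoint

variable {Δ lam r s : ℝ}

lemma pos_of_eq_mul_rpow (hΔ : 1 < Δ) (hr : 0 < r) (hs : 0 ≤ s) (h : r = lam * s ^ (Δ - 1)) :
    0 < s := by
  refine hs.lt_of_ne fun hs0 => hr.ne' ?_
  rw [h, ← hs0, zero_rpow (by linarith), mul_zero]

lemma mul_log_mul_eq_of_eq_mul_rpow (hΔ : 1 < Δ) (hlam : 0 < lam) (hr : 0 < r) (hs : 0 ≤ s)
    (h : r = lam * s ^ (Δ - 1)) :
    (Δ - 1) * log (r * s) = Δ * log r - log lam := by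
  have hs' := pos_of_eq_mul_rpow hΔ hr hs h
  have hlog : log r = log lam + (Δ - 1) * log s := by
    rw [h, log_mul hlam.ne' (rpow_pos_of_pos hs' _).ne', log_rpow hs']
  rw [log_mul hr.ne' hs'.ne']
  linear_combination -hlog

lemma rpow_div_sub_one_eq_of_eq_mul_rpow (hΔ : 1 < Δ) (hlam : 0 < lam) (hr : 0 < r)
    (hs : 0 ≤ s) (h : r = lam * s ^ (Δ - 1)) :
    r ^ (Δ / (Δ - 1)) = lam ^ (Δ - 1)⁻¹ * (r * s) := by
  have hd : Δ - 1 ≠ 0 := by linarith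
  have hexp : Δ / (Δ - 1) = 1 + (Δ - 1)⁻¹ := by field_simp; ring
  have hroot : r ^ (Δ - 1)⁻¹ = lam ^ (Δ - 1)⁻¹ * s := by
    rw [h, mul_rpow hlam.le (rpow_nonneg hs _), rpow_rpow_inv hs hd]
  rw [hexp, rpow_add hr, rpow_one, hroot]
  ring

variable {ι : Type*} [Fintype ι] {R S : ι → ℝ}

lemma mul_sum_mul_log_eq_of_fixpoint (hΔ : 1 < Δ) (hlam : 0 < lam) (hR : ∀ i, 0 < R i)
    (hS : ∀ i, 0 ≤ S i) (hfix : ∀ i, R i = lam * S i ^ (Δ - 1))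
    (hsum : ∑ i, R i * S i = 1) :
    (Δ - 1) * ∑ i, R i * S i * log (R i * S i)
      = Δ * ∑ i, R i * S i * log (R i) - (Δ - 1) * log (∑ i, R i ^ (Δ / (Δ - 1))) := by
  have hentropy : (Δ - 1) * ∑ i, R i * S i * log (R i * S i)
      = Δ * ∑ i, R i * S i * log (R i) - log lam := by
    calc (Δ - 1) * ∑ i, R i * S i * log (R i * S i)
        = ∑ i, (Δ * (R i * S i * log (R i)) - log lam * (R i * S i)) := by
          rw [mul_sum]
          refine sum_congr rfl fun i _ => ?_
          linear_combination (R i * S i) *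
            mul_log_mul_eq_of_eq_mul_rpow hΔ hlam (hR i) (hS i) (hfix i)
      _ = Δ * ∑ i, R i * S i * log (R i) - log lam := by
          rw [sum_sub_distrib, ← mul_sum, ← mul_sum, hsum, mul_one]
  have hpowsum : (Δ - 1) * log (∑ i, R i ^ (Δ / (Δ - 1))) = log lam := by
    rw [sum_congr rfl fun i _ => rpow_div_sub_one_eq_of_eq_mul_rpow hΔ hlam (hR i) (hS i) (hfix i),
      ← mul_sum, hsum, mul_one, log_rpow hlam]
    field_simp [(by linarith : Δ - 1 ≠ 0)]
  linear_combination hentropy + hpowsum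

end Fixpoint

section Coupling

variable {ι κ : Type*} (B : ι → κ → ℝ) (R : ι → ℝ) (C : κ → ℝ)

lemma sum_mul_mul_right_eq [Fintype κ] (i : ι) : ∑ j, B i j * R i * C j = R i * ∑ j, B i j * C j := by
  rw [mul_sum]
  exact sum_congr rfl fun j _ => by ring

lemma sum_mul_mul_left_eq [Fintype ι] (j : κ) : ∑ i, B i j * R i * C j = C j * ∑ i, B i j * R i := by
  rw [mul_sum]
  exact sum_congr rfl fun i _ => by ring

variable {B R C} [Fintype ι] [Fintype κ]

lemma sum_mul_log_sub_sum_mul_log_eq (hB : ∀ i j, 0 ≤ B i j) (hR : ∀ i, 0 < R i)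
    (hC : ∀ j, 0 < C j) :
    ∑ i, ∑ j, B i j * R i * C j * log (B i j)
        - ∑ i, ∑ j, B i j * R i * C j * log (B i j * R i * C j)
      = -∑ i, R i * (∑ j, B i j * C j) * log (R i)
        - ∑ j, C j * (∑ i, B i j * R i) * log (C j) := by
  have hpoint : ∀ i j, B i j * R i * C j * log (B i j)
      - B i j * R i * C j * log (B i j * R i * C j)
      = -(B i j * R i * C j * log (R i)) - B i j * R i * C j * log (C j) := by
    intro i j
    rcases (hB i j).eq_or_lt with h | h
    · simp [← h]
    · rw [log_mul (mul_pos h (hR i)).ne' (hC j).ne', log_mul h.ne' (hR i).ne']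
      ring
  calc _ = ∑ i, ∑ j, (-(B i j * R i * C j * log (R i)) - B i j * R i * C j * log (C j)) := by
        rw [← sum_sub_distrib]
        refine sum_congr rfl fun i _ => ?_
        rw [← sum_sub_distrib]
        exact sum_congr rfl fun j _ => hpoint i j
    _ = -∑ i, (∑ j, B i j * R i * C j) * log (R i)
          - ∑ j, (∑ i, B i j * R i * C j) * log (C j) := by
        simp only [sum_sub_distrib, sum_neg_distrib, sum_mul]
        rw [sum_comm (f := fun i j => B i j * R i * C j * log (C j))]
    _ = _ := by
        simp only [sum_mul_mul_right_eq, sum_mul_mul_left_eq]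

end Coupling

theorem tree_fixpoint_first_moment_value_general
    (q Δ : ℕ) (hΔ : 3 ≤ Δ)
    (B : Matrix (Fin q) (Fin q) ℝ)
    (hBnonneg : ∀ i j, 0 ≤ B i j)
    (R C : Fin q → ℝ) (hR : ∀ i, 0 < R i) (hC : ∀ j, 0 < C j)
    (lam mu : ℝ) (hlam : 0 < lam) (hmu : 0 < mu)
    (hfixR : ∀ i, R i = lam * (∑ j, B i j * C j) ^ (Δ - 1))
    (hfixC : ∀ j, C j = mu * (∑ i, B i j * R i) ^ (Δ - 1))
    (hnorm : (∑ i, ∑ j, B i j * R i * C j) = 1) :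
    ((∀ i, 0 ≤ R i * ∑ j, B i j * C j) ∧
     (∀ j, 0 ≤ C j * ∑ i, B i j * R i) ∧
     (∑ i, R i * ∑ j, B i j * C j) = 1 ∧
     (∑ j, C j * ∑ i, B i j * R i) = 1 ∧
     (∀ i j, 0 ≤ B i j * R i * C j) ∧
     (∀ i j, B i j = 0 → B i j * R i * C j = 0) ∧
     (∀ i, (∑ j, B i j * R i * C j) = R i * ∑ j, B i j * C j) ∧
     (∀ j, (∑ i, B i j * R i * C j) = C j * ∑ i, B i j * R i)) ∧
    ((Δ : ℝ) - 1) *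
        ((∑ i, (R i * ∑ j, B i j * C j) * Real.log (R i * ∑ j, B i j * C j))
          + ∑ j, (C j * ∑ i, B i j * R i) * Real.log (C j * ∑ i, B i j * R i))
      + (Δ : ℝ) *
        ((∑ i, ∑ j, (B i j * R i * C j) * Real.log (B i j))
          - ∑ i, ∑ j, (B i j * R i * C j) * Real.log (B i j * R i * C j))
      = -((Δ : ℝ) - 1) *
          (Real.log (∑ i, R i ^ ((Δ : ℝ) / ((Δ : ℝ) - 1)))
            + Real.log (∑ j, C j ^ ((Δ : ℝ) / ((Δ : ℝ) - 1)))) := by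
  have hΔ' : (1 : ℝ) < Δ := by exact_mod_cast (by omega : 1 < Δ)
  have hexp : ((Δ - 1 : ℕ) : ℝ) = (Δ : ℝ) - 1 := by rw [Nat.cast_sub (by omega), Nat.cast_one]
  have hS : ∀ i, 0 ≤ ∑ j, B i j * C j := fun i =>
    sum_nonneg fun j _ => mul_nonneg (hBnonneg i j) (hC j).le
  have hT : ∀ j, 0 ≤ ∑ i, B i j * R i := fun j =>
    sum_nonneg fun i _ => mul_nonneg (hBnonneg i j) (hR i).le
  have hα : ∑ i, R i * ∑ j, B i j * C j = 1 := by
    rw [← hnorm]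
    exact sum_congr rfl fun i _ => (sum_mul_mul_right_eq B R C i).symm
  have hβ : ∑ j, C j * ∑ i, B i j * R i = 1 := by
    rw [← hnorm, sum_comm]
    exact sum_congr rfl fun j _ => (sum_mul_mul_left_eq B R C j).symm
  have hrow := mul_sum_mul_log_eq_of_fixpoint hΔ' hlam hR hS
    (fun i => by rw [hfixR i, ← hexp, rpow_natCast]) hα
  have hcol := mul_sum_mul_log_eq_of_fixpoint hΔ' hmu hC hT
    (fun j => by rw [hfixC j, ← hexp, rpow_natCast]) hβ
  refine ⟨⟨fun i => mul_nonneg (hR i).le (hS i), fun j => mul_nonneg (hC j).le (hT j), hα, hβ,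
    fun i j => mul_nonneg (mul_nonneg (hBnonneg i j) (hR i).le) (hC j).le,
    fun i j h => by rw [h, zero_mul, zero_mul],
    sum_mul_mul_right_eq B R C, sum_mul_mul_left_eq B R C⟩, ?_⟩
  linear_combination hrow + hcol + (Δ : ℝ) * sum_mul_log_sub_sum_mul_log_eq hBnonneg hR hC

/-- a normalized positive fixpoint of the tree recursions yields a
feasible triple (α,β,x) for the first moment, with
Υ₁(α,β,x) = −(Δ−1)(ln ∑ R_i^{Δ/(Δ−1)} + ln ∑ C_j^{Δ/(Δ−1)}). -/
theorem tree_fixpoint_first_moment_value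
    (q Δ : ℕ) (hq : 1 ≤ q) (hΔ : 3 ≤ Δ)
    (B : Matrix (Fin q) (Fin q) ℝ) (hBsymm : B.IsSymm)
    (hBnonneg : ∀ i j, 0 ≤ B i j)
    (R C : Fin q → ℝ) (hR : ∀ i, 0 < R i) (hC : ∀ j, 0 < C j)
    (lam mu : ℝ) (hlam : 0 < lam) (hmu : 0 < mu)
    (hfixR : ∀ i, R i = lam * (∑ j, B i j * C j) ^ (Δ - 1))
    (hfixC : ∀ j, C j = mu * (∑ i, B i j * R i) ^ (Δ - 1))
    (hnorm : (∑ i, ∑ j, B i j * R i * C j) = 1) :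
    ((∀ i, 0 ≤ R i * ∑ j, B i j * C j) ∧
     (∀ j, 0 ≤ C j * ∑ i, B i j * R i) ∧
     (∑ i, R i * ∑ j, B i j * C j) = 1 ∧
     (∑ j, C j * ∑ i, B i j * R i) = 1 ∧
     (∀ i j, 0 ≤ B i j * R i * C j) ∧
     (∀ i j, B i j = 0 → B i j * R i * C j = 0) ∧
     (∀ i, (∑ j, B i j * R i * C j) = R i * ∑ j, B i j * C j) ∧
     (∀ j, (∑ i, B i j * R i * C j) = C j * ∑ i, B i j * R i)) ∧
    ((Δ : ℝ) - 1) *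
        ((∑ i, (R i * ∑ j, B i j * C j) * Real.log (R i * ∑ j, B i j * C j))
          + ∑ j, (C j * ∑ i, B i j * R i) * Real.log (C j * ∑ i, B i j * R i))
      + (Δ : ℝ) *
        ((∑ i, ∑ j, (B i j * R i * C j) * Real.log (B i j))
          - ∑ i, ∑ j, (B i j * R i * C j) * Real.log (B i j * R i * C j))
      = -((Δ : ℝ) - 1) *
          (Real.log (∑ i, R i ^ ((Δ : ℝ) / ((Δ : ℝ) - 1)))
            + Real.log (∑ j, C j ^ ((Δ : ℝ) / ((Δ : ℝ) - 1)))) :=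
  tree_fixpoint_first_moment_value_general q Δ hΔ B hBnonneg R C hR hC lam mu hlam hmu hfixR hfixC
    hnorm
end

section
/- Let q ≥ 1 and Δ ≥ 3 be integers and let B be a symmetric q×q real matrix with nonnegative entries that is primitive, i.e., there is a positive integer k such that every entry of B^k is positive. Let D = {(r,c) ∈ ℝ^q × ℝ^q : all entries of r and c are nonnegative and rᵀBc > 0}, and let Φ(r,c) = Δ·ln(rᵀBc) − (Δ−1)·( ln(∑_i r_i^{Δ/(Δ−1)}) + ln(∑_j c_j^{Δ/(Δ−1)}) ) on D. If (r,c) ∈ D is a local maximum of Φ relative to D, then r_i > 0 for every i and c_j > 0 for every j. -/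
/-!
If `r i = 0` while `(B c)_i > 0`, raising `r i` to a small `ε > 0` increases `rᵀBc` by order `ε`
but `∑ r_k ^ p`, `p = Δ/(Δ-1) > 1`, only by `ε ^ p`, so `Φ` increases; since `Φ` is invariant under
`(r, c) ↦ (c, r)` the same holds with the roles of `r` and `c` exchanged. Hence at a local maximum,
for every positive entry `B i j` we have `r i > 0 ↔ c j > 0`. Composing along products, an entry of
`B ^ (2m)` links `r`-support to `r`-support and `c`-support to `c`-support, and an entry of
`B ^ (2m+1)` links `r`- and `c`-supports; a power of `B` with all entries positive therefore
spreads both supports from one index to all of them.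
-/

open Matrix Filter Topology Function

def Matrix.PosEntriesLink {ι R : Type*} [Zero R] [LT R] (A : Matrix ι ι R) (P Q : ι → Prop) :
    Prop :=
  ∀ i j, 0 < A i j → (P i ↔ Q j)

namespace Matrix.PosEntriesLink

variable {ι R : Type*} [Semiring R] [PartialOrder R] {A B : Matrix ι ι R} {P Q T : ι → Prop}

theorem one [DecidableEq ι] : PosEntriesLink (1 : Matrix ι ι R) P P := by
  intro i j h
  obtain rfl : i = j := by
    by_contra hij
    simp [one_apply_ne hij] at h
  rfl

theorem symm_of_isSymm (hA : A.IsSymm) (h : PosEntriesLink A P Q) : PosEntriesLink A Q P :=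
  fun i j hij => (h j i (by rwa [hA.apply])).symm

theorem mul [Fintype ι] [IsOrderedRing R] (hA : ∀ i j, 0 ≤ A i j) (hB : ∀ i j, 0 ≤ B i j)
    (hAPQ : PosEntriesLink A P Q) (hBQT : PosEntriesLink B Q T) :
    PosEntriesLink (A * B) P T := by
  intro i j hAB
  rw [mul_apply, Finset.sum_pos_iff_of_nonneg fun m _ => mul_nonneg (hA i m) (hB m j)] at hAB
  obtain ⟨m, -, hm⟩ := hAB
  have hAim : 0 < A i m := (hA i m).lt_of_ne fun h => by simp [← h] at hm
  have hBmj : 0 < B m j := (hB m j).lt_of_ne fun h => by simp [← h] at hm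
  exact (hAPQ i m hAim).trans (hBQT m j hBmj)

theorem pow [Fintype ι] [DecidableEq ι] [IsOrderedRing R] (hA : ∀ i j, 0 ≤ A i j)
    (h : PosEntriesLink A P P) (n : ℕ) : PosEntriesLink (A ^ n) P P := by
  induction n with
  | zero => exact pow_zero A ▸ one
  | succ n ih => exact pow_succ A n ▸ ih.mul (pow_apply_nonneg hA n) hA h

theorem forall_of_pow_pos [Fintype ι] [DecidableEq ι] [IsOrderedRing R]
    (hA : ∀ i j, 0 ≤ A i j) (hPQ : PosEntriesLink A P Q) (hQP : PosEntriesLink A Q P) {k : ℕ}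
    (hk : ∀ i j, 0 < (A ^ k) i j) {i₀ j₀ : ι} (hP : P i₀) (hQ : Q j₀) (i : ι) :
    P i ∧ Q i := by
  have hA2 : ∀ i j, 0 ≤ (A ^ 2) i j := pow_apply_nonneg hA 2
  have hPP : PosEntriesLink (A ^ 2) P P := pow_two A ▸ hPQ.mul hA hA hQP
  have hQQ : PosEntriesLink (A ^ 2) Q Q := pow_two A ▸ hQP.mul hA hA hPQ
  obtain ⟨m, rfl | rfl⟩ := Nat.even_or_odd' k
  · rw [pow_mul] at hk
    exact ⟨(hPP.pow hA2 m i₀ i (hk i₀ i)).mp hP, (hQQ.pow hA2 m j₀ i (hk j₀ i)).mp hQ⟩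
  · rw [pow_succ, pow_mul] at hk
    have hA2m : ∀ i j, 0 ≤ ((A ^ 2) ^ m) i j := pow_apply_nonneg hA2 m
    exact ⟨((hQQ.pow hA2 m).mul hA2m hA hQP j₀ i (hk j₀ i)).mp hQ,
      ((hPP.pow hA2 m).mul hA2m hA hPQ i₀ i (hk i₀ i)).mp hP⟩

end Matrix.PosEntriesLink

theorem Matrix.mulVec_apply_pos {ι R : Type*} [Fintype ι] [Semiring R] [PartialOrder R]
    [IsStrictOrderedRing R] {B : Matrix ι ι R} {v : ι → R} (hB : ∀ i j, 0 ≤ B i j)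
    (hv : ∀ j, 0 ≤ v j) {i j : ι} (hBij : 0 < B i j) (hvj : 0 < v j) : 0 < (B *ᵥ v) i :=
  Finset.sum_pos' (fun k _ => mul_nonneg (hB i k) (hv k)) ⟨j, Finset.mem_univ j, mul_pos hBij hvj⟩

theorem Fintype.sum_apply_update_of_eq_zero {ι α M : Type*} [Fintype ι] [DecidableEq ι]
    [AddCommMonoid M] (f : ι → α → M) (x : ι → α) {i : ι} (hi : f i (x i) = 0) (a : α) :
    ∑ k, f k (update x i a k) = f i a + ∑ k, f k (x k) := by
  simp_rw [apply_update f x i a, Finset.sum_update_of_mem (Finset.mem_univ i),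
    Finset.sum_eq_sum_sdiff_singleton_add (Finset.mem_univ i) (fun k => f k (x k)), hi, add_zero]

theorem Matrix.sum_sum_update_mul_mul {ι R : Type*} [Fintype ι] [DecidableEq ι] [CommSemiring R]
    (B : Matrix ι ι R) {r : ι → R} {i : ι} (hri : r i = 0) (c : ι → R) (ε : R) :
    ∑ k, ∑ j, update r i ε k * B k j * c j = ∑ k, ∑ j, r k * B k j * c j + ε * (B *ᵥ c) i := by
  have hrow (x : ι → R) : ∑ k, ∑ j, x k * B k j * c j = ∑ k, x k * (B *ᵥ c) k := by
    simp only [mulVec, dotProduct, Finset.mul_sum, mul_assoc]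
  rw [hrow, hrow, Fintype.sum_apply_update_of_eq_zero (fun k t => t * (B *ᵥ c) k) r
    (by simp [hri]), add_comm]

theorem Real.sum_update_rpow {ι : Type*} [Fintype ι] [DecidableEq ι] {r : ι → ℝ} {i : ι}
    (hri : r i = 0) {p : ℝ} (hp : p ≠ 0) (ε : ℝ) :
    ∑ k, update r i ε k ^ p = ∑ k, r k ^ p + ε ^ p := by
  rw [Fintype.sum_apply_update_of_eq_zero (fun _ t => t ^ p) r (by simp [hri, zero_rpow hp]),
    add_comm]

namespace Real

theorem log_add_sub_log_le {x h : ℝ} (hx : 0 < x) (hh : 0 ≤ h) :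
    log (x + h) - log x ≤ h / x := by
  have := log_le_sub_one_of_pos (show 0 < (x + h) / x by positivity)
  rw [log_div (by positivity) hx.ne', add_div, div_self hx.ne'] at this
  linarith

theorem div_add_le_log_add_sub_log {x h : ℝ} (hx : 0 < x) (hh : 0 ≤ h) :
    h / (x + h) ≤ log (x + h) - log x := by
  have := one_sub_inv_le_log_of_pos (show 0 < (x + h) / x by positivity)
  rwa [log_div (by positivity) hx.ne', inv_div, one_sub_div (by positivity : x + h ≠ 0),
    add_sub_cancel_left] at this

theorem eventually_log_lt_log_add_sub_log_add_rpow {α β S a N p : ℝ} (hα : 0 < α) (hβ : 0 ≤ β)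
    (hS : 0 < S) (ha : 0 < a) (hN : 0 < N) (hp : 1 < p) :
    ∀ᶠ ε in 𝓝[>] 0,
      α * log S - β * log N < α * log (S + ε * a) - β * log (N + ε ^ p) := by
  have hsmall : Tendsto (fun ε : ℝ => (ε * a, 2 * S * β * ε ^ (p - 1))) (𝓝[>] 0) (𝓝 (0, 0)) := by
    refine Tendsto.mono_left ?_ nhdsWithin_le_nhds
    have hcont : ContinuousAt (fun ε : ℝ => (ε * a, 2 * S * β * ε ^ (p - 1))) 0 := by
      have := continuousAt_rpow_const 0 (p - 1) (Or.inr (by linarith))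
      fun_prop
    simpa [zero_rpow (by linarith : p - 1 ≠ 0)] using hcont.tendsto
  filter_upwards [self_mem_nhdsWithin, hsmall.eventually
    (prod_mem_nhds (Iio_mem_nhds hS) (Iio_mem_nhds (by positivity : 0 < α * a * N)))]
    with ε (hε : 0 < ε) ⟨(hεa : ε * a < S), (hεp : 2 * S * β * ε ^ (p - 1) < α * a * N)⟩
  have hεp' : ε ^ p = ε * ε ^ (p - 1) := by
    rw [← rpow_one_add' hε.le (by linarith)]
    ring_nf
  have hgain : α * (ε * a) / (2 * S) < α * (log (S + ε * a) - log S) := by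
    calc α * (ε * a) / (2 * S) < α * ((ε * a) / (S + ε * a)) := by
          rw [mul_div_assoc]
          gcongr
          linarith
      _ ≤ α * (log (S + ε * a) - log S) := by
          gcongr
          exact div_add_le_log_add_sub_log hS (by positivity)
  have hloss : β * (log (N + ε ^ p) - log N) ≤ α * (ε * a) / (2 * S) := by
    calc β * (log (N + ε ^ p) - log N) ≤ β * (ε ^ p / N) := by
          gcongr
          exact log_add_sub_log_le hN (by positivity)
      _ ≤ α * (ε * a) / (2 * S) := by
          rw [hεp', le_div_iff₀ (by positivity)]
          calc β * (ε * ε ^ (p - 1) / N) * (2 * S) = ε * (2 * S * β * ε ^ (p - 1)) / N := by ring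
            _ ≤ ε * (α * a * N) / N := by gcongr
            _ = α * (ε * a) := by field_simp
  linarith

end Real

section Phi

variable {ι : Type*} [Fintype ι]

noncomputable def phi (Δ : ℝ) (B : Matrix ι ι ℝ) (x : (ι → ℝ) × (ι → ℝ)) : ℝ :=
  Δ * Real.log (∑ i, ∑ j, x.1 i * B i j * x.2 j)
    - (Δ - 1) * (Real.log (∑ i, x.1 i ^ (Δ / (Δ - 1))) + Real.log (∑ j, x.2 j ^ (Δ / (Δ - 1))))

def phiDomain (B : Matrix ι ι ℝ) : Set ((ι → ℝ) × (ι → ℝ)) :=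
  {x | (∀ i, 0 ≤ x.1 i) ∧ (∀ j, 0 ≤ x.2 j) ∧ 0 < ∑ i, ∑ j, x.1 i * B i j * x.2 j}

variable {Δ : ℝ} {B : Matrix ι ι ℝ}

theorem sum_sum_mul_mul_comm (hB : B.IsSymm) (r c : ι → ℝ) :
    ∑ i, ∑ j, c i * B i j * r j = ∑ i, ∑ j, r i * B i j * c j := by
  rw [Finset.sum_comm]
  exact Fintype.sum_congr _ _ fun i => Fintype.sum_congr _ _ fun j => by rw [hB.apply i j]; ring

theorem phi_swap (hB : B.IsSymm) (x : (ι → ℝ) × (ι → ℝ)) : phi Δ B x.swap = phi Δ B x := by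
  simp only [phi, Prod.fst_swap, Prod.snd_swap, sum_sum_mul_mul_comm hB x.1 x.2]
  ring

theorem swap_mem_phiDomain (hB : B.IsSymm) {x : (ι → ℝ) × (ι → ℝ)} (hx : x ∈ phiDomain B) :
    x.swap ∈ phiDomain B := by
  obtain ⟨h₁, h₂, hS⟩ := hx
  exact ⟨h₂, h₁, by simpa only [Prod.fst_swap, Prod.snd_swap, sum_sum_mul_mul_comm hB] using hS⟩

theorem isLocalMaxOn_phi_swap (hB : B.IsSymm) {r c : ι → ℝ}
    (hmax : IsLocalMaxOn (phi Δ B) (phiDomain B) (r, c)) :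
    IsLocalMaxOn (phi Δ B) (phiDomain B) (c, r) := by
  have hswap : Tendsto Prod.swap (𝓝[phiDomain B] (c, r)) (𝓝[phiDomain B] (r, c)) :=
    continuous_swap.continuousWithinAt.tendsto_nhdsWithin fun _ => swap_mem_phiDomain hB
  have hphi : phi Δ B ∘ Prod.swap = phi Δ B := funext (phi_swap hB)
  exact hphi ▸ hmax.comp_tendsto (g := Prod.swap) (b := (c, r)) hswap

theorem exists_pos_of_sum_sum_mul_mul_pos {r c : ι → ℝ} (hr : ∀ i, 0 ≤ r i) (hc : ∀ j, 0 ≤ c j)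
    (hS : 0 < ∑ i, ∑ j, r i * B i j * c j) : (∃ i, 0 < r i) ∧ ∃ j, 0 < c j := by
  constructor <;> by_contra! h
  · obtain rfl : r = 0 := funext fun i => (h i).antisymm (hr i)
    simp at hS
  · obtain rfl : c = 0 := funext fun j => (h j).antisymm (hc j)
    simp at hS

theorem tendsto_update_nhdsWithin_phiDomain [DecidableEq ι] {r c : ι → ℝ}
    (hmem : (r, c) ∈ phiDomain B) {i : ι} (hri : r i = 0) (hBc : 0 ≤ (B *ᵥ c) i) :
    Tendsto (fun ε => (update r i ε, c)) (𝓝[>] 0) (𝓝[phiDomain B] (r, c)) := by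
  obtain ⟨hr, hc, hS⟩ := hmem
  rw [tendsto_nhdsWithin_iff]
  constructor
  · have hcont : Continuous fun ε : ℝ => (update r i ε, c) := by fun_prop
    simpa [← hri] using (hcont.tendsto 0).mono_left nhdsWithin_le_nhds
  · filter_upwards [self_mem_nhdsWithin] with ε (hε : 0 < ε)
    refine ⟨fun k => ?_, hc, ?_⟩
    · rcases eq_or_ne k i with rfl | hk
      · simpa using hε.le
      · simpa [hk] using hr k
    · rw [B.sum_sum_update_mul_mul hri]
      exact add_pos_of_pos_of_nonneg hS (mul_nonneg hε.le hBc)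

theorem mulVec_apply_eq_zero_of_isLocalMaxOn_phi [DecidableEq ι] (hΔ : 1 < Δ)
    (hB : ∀ i j, 0 ≤ B i j) {r c : ι → ℝ} (hmem : (r, c) ∈ phiDomain B)
    (hmax : IsLocalMaxOn (phi Δ B) (phiDomain B) (r, c)) {i : ι} (hri : r i = 0) :
    (B *ᵥ c) i = 0 := by
  obtain ⟨hr, hc, hS⟩ : (∀ i, 0 ≤ r i) ∧ (∀ j, 0 ≤ c j) ∧ 0 < ∑ i, ∑ j, r i * B i j * c j := hmem
  set p := Δ / (Δ - 1) with hp_def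
  have hp : 1 < p := (one_lt_div (by linarith)).2 (by linarith)
  have hBc : 0 ≤ (B *ᵥ c) i := Finset.sum_nonneg fun j _ => mul_nonneg (hB i j) (hc j)
  by_contra ha
  have hN : 0 < ∑ k, r k ^ p := by
    obtain ⟨⟨k, hk⟩, -⟩ := exists_pos_of_sum_sum_mul_mul_pos hr hc hS
    exact Finset.sum_pos' (fun k _ => Real.rpow_nonneg (hr k) p)
      ⟨k, Finset.mem_univ k, Real.rpow_pos_of_pos hk p⟩
  obtain ⟨ε, hgain, hle⟩ := ((Real.eventually_log_lt_log_add_sub_log_add_rpow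
    (by linarith : 0 < Δ) (by linarith : 0 ≤ Δ - 1) hS (hBc.lt_of_ne' ha) hN hp).and
    ((tendsto_update_nhdsWithin_phiDomain ⟨hr, hc, hS⟩ hri hBc).eventually hmax)).exists
  simp only [phi, B.sum_sum_update_mul_mul hri, ← hp_def,
    Real.sum_update_rpow hri (by positivity : p ≠ 0)] at hle
  linarith

theorem posEntriesLink_of_isLocalMaxOn_phi [DecidableEq ι] (hΔ : 1 < Δ)
    (hB : ∀ i j, 0 ≤ B i j) (hBsymm : B.IsSymm) {r c : ι → ℝ} (hmem : (r, c) ∈ phiDomain B)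
    (hmax : IsLocalMaxOn (phi Δ B) (phiDomain B) (r, c)) :
    B.PosEntriesLink (0 < r ·) (0 < c ·) := by
  have hr : ∀ i, 0 ≤ r i := hmem.1
  have hc : ∀ j, 0 ≤ c j := hmem.2.1
  intro i j hBij
  constructor
  · intro hri
    by_contra! hcj
    have := mulVec_apply_eq_zero_of_isLocalMaxOn_phi hΔ hB (swap_mem_phiDomain hBsymm hmem)
      (isLocalMaxOn_phi_swap hBsymm hmax) (hcj.antisymm (hc j))
    exact (mulVec_apply_pos hB hr (hBsymm.apply i j ▸ hBij) hri).ne' this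
  · intro hcj
    by_contra! hri
    have := mulVec_apply_eq_zero_of_isLocalMaxOn_phi hΔ hB hmem hmax (hri.antisymm (hr i))
    exact (mulVec_apply_pos hB hc hBij hcj).ne' this

end Phi

theorem Phi_local_max_interior_general
    (q Δ : ℕ) (hΔ : 3 ≤ Δ)
    (B : Matrix (Fin q) (Fin q) ℝ) (hBsymm : B.IsSymm)
    (hBnonneg : ∀ i j, 0 ≤ B i j)
    (hprim : ∃ k : ℕ, 0 < k ∧ ∀ i j, 0 < (B ^ k) i j)
    (r c : Fin q → ℝ)
    (hmem : (r, c) ∈ {p : (Fin q → ℝ) × (Fin q → ℝ) |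
        (∀ i, 0 ≤ p.1 i) ∧ (∀ j, 0 ≤ p.2 j) ∧ 0 < ∑ i, ∑ j, p.1 i * B i j * p.2 j})
    (hmax : IsLocalMaxOn
        (fun p : (Fin q → ℝ) × (Fin q → ℝ) =>
          (Δ : ℝ) * Real.log (∑ i, ∑ j, p.1 i * B i j * p.2 j)
            - ((Δ : ℝ) - 1) *
              (Real.log (∑ i, p.1 i ^ ((Δ : ℝ) / ((Δ : ℝ) - 1)))
                + Real.log (∑ j, p.2 j ^ ((Δ : ℝ) / ((Δ : ℝ) - 1)))))
        {p : (Fin q → ℝ) × (Fin q → ℝ) |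
          (∀ i, 0 ≤ p.1 i) ∧ (∀ j, 0 ≤ p.2 j) ∧ 0 < ∑ i, ∑ j, p.1 i * B i j * p.2 j}
        (r, c)) :
    (∀ i, 0 < r i) ∧ ∀ j, 0 < c j := by
  have hΔ' : (1 : ℝ) < Δ := by exact_mod_cast (by omega : 1 < Δ)
  have hlink := posEntriesLink_of_isLocalMaxOn_phi hΔ' hBnonneg hBsymm hmem hmax
  obtain ⟨k, -, hk⟩ := hprim
  obtain ⟨⟨i₀, hi₀⟩, j₀, hj₀⟩ := exists_pos_of_sum_sum_mul_mul_pos hmem.1 hmem.2.1 hmem.2.2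
  have hpos := hlink.forall_of_pow_pos hBnonneg (hlink.symm_of_isSymm hBsymm) hk hi₀ hj₀
  exact ⟨fun i => (hpos i).1, fun j => (hpos j).2⟩

/-- for a primitive symmetric nonnegative interaction matrix, any
local maximum of Φ relative to the domain D = {(r,c) : r,c ≥ 0, rᵀBc > 0}
has all coordinates strictly positive. -/
theorem Phi_local_max_interior
    (q Δ : ℕ) (hq : 1 ≤ q) (hΔ : 3 ≤ Δ)
    (B : Matrix (Fin q) (Fin q) ℝ) (hBsymm : B.IsSymm)
    (hBnonneg : ∀ i j, 0 ≤ B i j)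
    (hprim : ∃ k : ℕ, 0 < k ∧ ∀ i j, 0 < (B ^ k) i j)
    (r c : Fin q → ℝ)
    (hmem : (r, c) ∈ {p : (Fin q → ℝ) × (Fin q → ℝ) |
        (∀ i, 0 ≤ p.1 i) ∧ (∀ j, 0 ≤ p.2 j) ∧ 0 < ∑ i, ∑ j, p.1 i * B i j * p.2 j})
    (hmax : IsLocalMaxOn
        (fun p : (Fin q → ℝ) × (Fin q → ℝ) =>
          (Δ : ℝ) * Real.log (∑ i, ∑ j, p.1 i * B i j * p.2 j)
            - ((Δ : ℝ) - 1) *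
              (Real.log (∑ i, p.1 i ^ ((Δ : ℝ) / ((Δ : ℝ) - 1)))
                + Real.log (∑ j, p.2 j ^ ((Δ : ℝ) / ((Δ : ℝ) - 1)))))
        {p : (Fin q → ℝ) × (Fin q → ℝ) |
          (∀ i, 0 ≤ p.1 i) ∧ (∀ j, 0 ≤ p.2 j) ∧ 0 < ∑ i, ∑ j, p.1 i * B i j * p.2 j}
        (r, c)) :
    (∀ i, 0 < r i) ∧ ∀ j, 0 < c j :=
  Phi_local_max_interior_general q Δ hΔ B hBsymm hBnonneg hprim r c hmem hmax
end

section
/- Let q ≥ 1 be an integer, u ∈ ℝ^q a vector with positive entries, and P a real q×q matrix, and set B = u·uᵀ − Pᵀ·P. Assume B has nonnegative entries and is invertible. Then for all vectors z₁, z₂ ∈ ℝ^q with nonnegative entries satisfying ∑_i (z₁)_i = ∑_i (z₂)_i = 1, one has (z₁ᵀBz₁)·(z₂ᵀBz₂) ≤ (z₁ᵀBz₂)², with equality if and only if z₁ = z₂. -/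
open Matrix

private lemma dot_B_nonneg {q : ℕ} (B : Matrix (Fin q) (Fin q) ℝ)
    (hB : ∀ i j, 0 ≤ B i j) (x y : Fin q → ℝ) (hx : ∀ i, 0 ≤ x i) (hy : ∀ i, 0 ≤ y i) :
    0 ≤ x ⬝ᵥ B *ᵥ y := by
  simp only [dotProduct, mulVec]
  apply Finset.sum_nonneg
  intro i _
  apply mul_nonneg (hx i)
  apply Finset.sum_nonneg
  intro j _
  exact mul_nonneg (hB i j) (hy j)

private lemma dot_pos {q : ℕ} (u z : Fin q → ℝ) (hu : ∀ i, 0 < u i)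
    (hz : ∀ i, 0 ≤ z i) (hs : (∑ i, z i) = 1) : 0 < u ⬝ᵥ z := by
  have hex : ∃ i ∈ Finset.univ, 0 < z i := by
    by_contra h
    push_neg at h
    have : (∑ i, z i) ≤ 0 := Finset.sum_nonpos fun i _ => h i (Finset.mem_univ i)
    linarith
  obtain ⟨i, _, hi⟩ := hex
  exact Finset.sum_pos' (fun j _ => mul_nonneg (hu j).le (hz j))
    ⟨i, Finset.mem_univ i, mul_pos (hu i) hi⟩

/-- Aczél-type inequality for an antiferromagnetic interaction matrix
B = u uᵀ − Pᵀ P: for nonnegative probability vectors z₁, z₂,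
(z₁ᵀBz₁)(z₂ᵀBz₂) ≤ (z₁ᵀBz₂)², with equality iff z₁ = z₂. -/
theorem antiferromagnetic_aczel_inequality
    (q : ℕ) (hq : 1 ≤ q) (u : Fin q → ℝ) (hu : ∀ i, 0 < u i)
    (P : Matrix (Fin q) (Fin q) ℝ)
    (B : Matrix (Fin q) (Fin q) ℝ) (hB : B = vecMulVec u u - Pᵀ * P)
    (hBnonneg : ∀ i j, 0 ≤ B i j) (hBinv : IsUnit B)
    (z₁ z₂ : Fin q → ℝ) (h₁ : ∀ i, 0 ≤ z₁ i) (h₂ : ∀ i, 0 ≤ z₂ i)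
    (hs₁ : (∑ i, z₁ i) = 1) (hs₂ : (∑ i, z₂ i) = 1) :
    (z₁ ⬝ᵥ B.mulVec z₁) * (z₂ ⬝ᵥ B.mulVec z₂) ≤ (z₁ ⬝ᵥ B.mulVec z₂) ^ 2 ∧
    ((z₁ ⬝ᵥ B.mulVec z₁) * (z₂ ⬝ᵥ B.mulVec z₂) = (z₁ ⬝ᵥ B.mulVec z₂) ^ 2 ↔ z₁ = z₂) := by
  have hBsymm : Bᵀ = B := by
    rw [hB, transpose_sub, transpose_mul, transpose_transpose]
    congr 1
    ext i j
    simp [vecMulVec_apply, mul_comm]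
  have hsym : ∀ x y : Fin q → ℝ, x ⬝ᵥ B *ᵥ y = y ⬝ᵥ B *ᵥ x := by
    intro x y
    conv_lhs => rw [dotProduct_mulVec, ← hBsymm, vecMul_transpose]
    rw [dotProduct_comm]
  set a₁ : ℝ := u ⬝ᵥ z₁ with ha₁def
  set a₂ : ℝ := u ⬝ᵥ z₂ with ha₂def
  have ha₁ : 0 < a₁ := dot_pos u z₁ hu h₁ hs₁
  have ha₂ : 0 < a₂ := dot_pos u z₂ hu h₂ hs₂
  set Q₁ : ℝ := z₁ ⬝ᵥ B *ᵥ z₁ with hQ₁def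
  set Q₂ : ℝ := z₂ ⬝ᵥ B *ᵥ z₂ with hQ₂def
  set C : ℝ := z₁ ⬝ᵥ B *ᵥ z₂ with hCdef
  have hQ₁ : 0 ≤ Q₁ := dot_B_nonneg B hBnonneg z₁ z₁ h₁ h₁
  have hQ₂ : 0 ≤ Q₂ := dot_B_nonneg B hBnonneg z₂ z₂ h₂ h₂
  have hC : 0 ≤ C := dot_B_nonneg B hBnonneg z₁ z₂ h₁ h₂
  set w : Fin q → ℝ := a₂ • z₁ - a₁ • z₂ with hwdef
  clear_value a₁ a₂ Q₁ Q₂ C w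
  have huw : u ⬝ᵥ w = 0 := by
    simp only [hwdef, dotProduct_sub, dotProduct_smul, smul_eq_mul, ← ha₁def, ← ha₂def]
    ring
  have hvmv : vecMulVec u u *ᵥ w = (u ⬝ᵥ w) • u := by
    ext i
    simp only [mulVec, vecMulVec, of_apply, dotProduct, Pi.smul_apply, smul_eq_mul,
      Finset.sum_mul]
    exact Finset.sum_congr rfl fun j _ => by ring
  have hww : w ⬝ᵥ B *ᵥ w = -((P *ᵥ w) ⬝ᵥ (P *ᵥ w)) := by
    rw [hB, sub_mulVec, dotProduct_sub, hvmv, huw, zero_smul, dotProduct_zero,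
      ← mulVec_mulVec, dotProduct_mulVec, vecMul_transpose]
    ring
  have hww_le : w ⬝ᵥ B *ᵥ w ≤ 0 := by
    rw [hww]
    simp only [neg_nonpos]
    exact Finset.sum_nonneg fun i _ => mul_self_nonneg _
  have hexp : w ⬝ᵥ B *ᵥ w = a₂ ^ 2 * Q₁ - 2 * a₁ * a₂ * C + a₁ ^ 2 * Q₂ := by
    simp only [hwdef, mulVec_sub, mulVec_smul, dotProduct_sub, sub_dotProduct,
      dotProduct_smul, smul_dotProduct, smul_eq_mul]
    rw [hsym z₂ z₁]
    simp only [← hQ₁def, ← hQ₂def, ← hCdef]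
    ring
  have hkey : a₂ ^ 2 * Q₁ + a₁ ^ 2 * Q₂ ≤ 2 * a₁ * a₂ * C := by linarith [hexp ▸ hww_le]
  have hsumnn : 0 ≤ a₂ ^ 2 * Q₁ + a₁ ^ 2 * Q₂ := by positivity
  have hTnn : 0 ≤ 2 * a₁ * a₂ * C := by positivity
  have h1 : (a₂ ^ 2 * Q₁ + a₁ ^ 2 * Q₂) ^ 2 ≤ (2 * a₁ * a₂ * C) ^ 2 :=
    pow_le_pow_left₀ hsumnn hkey 2
  have h2 : 4 * (a₁ * a₂) ^ 2 * (Q₁ * Q₂) ≤ (a₂ ^ 2 * Q₁ + a₁ ^ 2 * Q₂) ^ 2 := by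
    nlinarith [sq_nonneg (a₂ ^ 2 * Q₁ - a₁ ^ 2 * Q₂)]
  have hpos : (0 : ℝ) < 4 * (a₁ * a₂) ^ 2 := by positivity
  have hineq : Q₁ * Q₂ ≤ C ^ 2 := by nlinarith [h1, h2, hpos]
  refine ⟨hineq, ⟨fun heq => ?_, fun heq => by rw [hQ₁def, hQ₂def, hCdef, heq]; ring⟩⟩
  -- equality case
  have hT2 : (2 * a₁ * a₂ * C) ^ 2 ≤ (a₂ ^ 2 * Q₁ + a₁ ^ 2 * Q₂) ^ 2 := by
    nlinarith [sq_nonneg (a₂ ^ 2 * Q₁ - a₁ ^ 2 * Q₂), heq]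
  have hge : 2 * a₁ * a₂ * C ≤ a₂ ^ 2 * Q₁ + a₁ ^ 2 * Q₂ :=
    (pow_le_pow_iff_left₀ hTnn hsumnn two_ne_zero).mp hT2
  have h0 : w ⬝ᵥ B *ᵥ w = 0 := by rw [hexp]; linarith
  have hPw : P *ᵥ w = 0 := by
    have : (P *ᵥ w) ⬝ᵥ (P *ᵥ w) = 0 := by rw [hww] at h0; linarith
    exact dotProduct_self_eq_zero.mp this
  have hBw : B *ᵥ w = 0 := by
    rw [hB, sub_mulVec, hvmv, huw, zero_smul, ← mulVec_mulVec, hPw, mulVec_zero, sub_zero]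
  have hdet : IsUnit B.det := (Matrix.isUnit_iff_isUnit_det B).mp hBinv
  have hw0 : w = 0 := by
    have h := congrArg (fun v => B⁻¹ *ᵥ v) hBw
    simpa [mulVec_mulVec, Matrix.nonsing_inv_mul B hdet] using h
  rw [hwdef] at hw0
  have hz : a₂ • z₁ = a₁ • z₂ := sub_eq_zero.mp hw0
  have haa : a₂ = a₁ := by
    have h := congrArg (fun v : Fin q → ℝ => ∑ i, v i) hz
    simpa [smul_eq_mul, ← Finset.mul_sum, hs₁, hs₂] using h
  funext i
  have := congrFun hz i
  simp only [Pi.smul_apply, smul_eq_mul, haa] at this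
  exact mul_left_cancel₀ ha₁.ne' this
end

section
/- Let q ≥ 2 and Δ ≥ 3 be integers, set d = Δ−1, and let B be a real parameter with 0 ≤ B < 1. Suppose (R₁,…,R_q, C₁,…,C_q, λ, μ) is a positive solution of the Potts tree recursions, and suppose in addition there is a constant ν > 0 with R_i = ν·C_i for every i. Then R₁ = R₂ = ⋯ = R_q and C₁ = C₂ = ⋯ = C_q. -/
/-- a positive solution of the antiferromagnetic Potts tree recursions
which is translation invariant (R = ν·C) must be constant. -/
theorem potts_translation_invariant_fixpoint_constant
    (q Δ : ℕ) (hq : 2 ≤ q) (hΔ : 3 ≤ Δ)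
    (B : ℝ) (hB0 : 0 ≤ B) (hB1 : B < 1)
    (R C : Fin q → ℝ) (lam mu : ℝ)
    (hR : ∀ i, 0 < R i) (hC : ∀ j, 0 < C j)
    (hlam : 0 < lam) (hmu : 0 < mu)
    (hrecR : ∀ i, R i = lam * (B * C i + ((∑ j, C j) - C i)) ^ (Δ - 1))
    (hrecC : ∀ j, C j = mu * (B * R j + ((∑ i, R i) - R j)) ^ (Δ - 1))
    (ν : ℝ) (hν : 0 < ν) (hprop : ∀ i, R i = ν * C i) :
    (∀ i j, R i = R j) ∧ (∀ i j, C i = C j) := by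
  have hd : Δ - 1 ≠ 0 := by omega
  haveI : Nontrivial (Fin q) := Fin.nontrivial_iff_two_le.mpr hq
  have hlt : ∀ i, C i < ∑ j, C j := by
    intro i
    obtain ⟨k, hk⟩ := exists_ne i
    exact Finset.single_lt_sum hk (Finset.mem_univ i) (Finset.mem_univ k)
      (hC k) (fun k _ _ => (hC k).le)
  have hbase : ∀ i, 0 < B * C i + ((∑ j, C j) - C i) := by
    intro i
    have := hlt i
    nlinarith [hC i]
  have key : ∀ i j, C i < C j → R j < R i := by
    intro i j hij
    rw [hrecR i, hrecR j]
    apply mul_lt_mul_of_pos_left _ hlam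
    apply pow_lt_pow_left₀ _ (hbase j).le hd
    nlinarith
  have hCconst : ∀ i j, C i = C j := by
    intro i j
    rcases lt_trichotomy (C i) (C j) with h | h | h
    · exfalso; have := key i j h; rw [hprop i, hprop j] at this; nlinarith
    · exact h
    · exfalso; have := key j i h; rw [hprop i, hprop j] at this; nlinarith
  exact ⟨fun i j => by rw [hprop i, hprop j, hCconst i j], hCconst⟩
end

section
/- Let q ≥ 3 and Δ ≥ 3 be integers, set d = Δ−1, and let B be a real parameter with 0 ≤ B < 1 and B ≥ (Δ−q)/Δ. Then every positive solution (R₁,…,R_q, C₁,…,C_q, λ, μ) of the Potts tree recursions satisfies R₁ = R₂ = ⋯ = R_q and C₁ = C₂ = ⋯ = C_q. -/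
/-!
Write `E = 1 - B`, `S = ∑ C` and `T = ∑ R`. Every `R i` is a fixed point of the two-step map
`Φ t = λ (S - E μ (T - E t) ^ d) ^ d`, so if two of them differ, the mean value theorem gives a
point `ξ` between them with `Φ' ξ = 1`. But `Φ' ξ = d² E² λ μ (a b) ^ (d - 1)` with `b = T - E ξ`
and `a + E μ b ^ d = S`. AM-GM bounds `(a b) ^ d` by a multiple of `S ^ (d + 1)`, the strict
power-mean inequality for the non-constant vectors `S - E C` and `T - E R` bounds `λ` and `μ`
in terms of `S` and `T`, and together with the threshold `(d + 1) E ≤ q` this forces `Φ' ξ < 1`.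
-/

open Finset

theorem succ_pow_succ_mul_mul_pow_le {d : ℕ} (hd : 0 < d) {z x : ℝ} (hz : 0 ≤ z) (hx : 0 ≤ x) :
    ((d : ℝ) + 1) ^ (d + 1) * (z * x ^ d) ≤ (d : ℝ) ^ d * (z + x) ^ (d + 1) := by
  rcases hx.eq_or_lt with rfl | hx
  · rw [zero_pow hd.ne', mul_zero, mul_zero]
    positivity
  have hd' : (0 : ℝ) < d := by exact_mod_cast hd
  obtain ⟨u, hux⟩ : ∃ u : ℝ, (d + 1) * x * u = d * (z + x) :=
    ⟨d * (z + x) / ((d + 1) * x), by field_simp⟩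
  have hu : 0 ≤ u :=
    le_of_mul_le_mul_left (a := (d + 1) * x) (by rw [mul_zero, hux]; positivity) (by positivity)
  -- Bernoulli at `u`, scaled by `((d + 1) x) ^ (d + 1)`, is `d` times the claim
  have bernoulli : 1 + (d + 1) * (u - 1) ≤ u ^ (d + 1) := by
    simpa using one_add_mul_le_pow (a := u - 1) (by linarith) (d + 1)
  refine le_of_mul_le_mul_left ?_ hd'
  calc (d : ℝ) * (((d : ℝ) + 1) ^ (d + 1) * (z * x ^ d))
      = ((d : ℝ) + 1) ^ (d + 1) * x ^ (d + 1) * (1 + (d + 1) * (u - 1)) := by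
        linear_combination (-(((d : ℝ) + 1) ^ (d + 1) * x ^ d)) * hux
    _ ≤ ((d : ℝ) + 1) ^ (d + 1) * x ^ (d + 1) * u ^ (d + 1) := by gcongr
    _ = ((d + 1) * x * u) ^ (d + 1) := by rw [mul_pow, mul_pow]
    _ = d * ((d : ℝ) ^ d * (z + x) ^ (d + 1)) := by rw [hux, mul_pow]; ring

theorem pow_sum_lt_card_mul_sum_pow {ι : Type*} {s : Finset ι} {f : ι → ℝ} (hf : ∀ i ∈ s, 0 ≤ f i)
    {i j : ι} (hi : i ∈ s) (hj : j ∈ s) (hij : f i ≠ f j) {n : ℕ} (hn : 0 < n) :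
    (∑ k ∈ s, f k) ^ (n + 1) < (#s : ℝ) ^ n * ∑ k ∈ s, f k ^ (n + 1) := by
  have hs : (0 : ℝ) < #s := by exact_mod_cast card_pos.2 ⟨i, hi⟩
  have jensen := (strictConvexOn_pow (n := n + 1) (by omega)).map_sum_lt (t := s)
    (w := fun _ => (#s : ℝ)⁻¹) (p := f) (fun _ _ => by positivity)
    (by simp [hs.ne']) hf ⟨i, hi, j, hj, hij⟩
  simp only [smul_eq_mul, ← mul_sum] at jensen
  calc (∑ k ∈ s, f k) ^ (n + 1) = (#s : ℝ) ^ (n + 1) * ((#s : ℝ)⁻¹ * ∑ k ∈ s, f k) ^ (n + 1) := by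
        rw [← mul_pow, mul_inv_cancel_left₀ hs.ne']
    _ < (#s : ℝ) ^ (n + 1) * ((#s : ℝ)⁻¹ * ∑ k ∈ s, f k ^ (n + 1)) := by gcongr
    _ = (#s : ℝ) ^ n * ∑ k ∈ s, f k ^ (n + 1) := by field_simp; ring

theorem exists_hasDerivAt_eq_one_of_isFixedPt {f f' : ℝ → ℝ} {p r : ℝ} (hpr : p < r)
    (hf : ∀ t, HasDerivAt f (f' t) t) (hp : Function.IsFixedPt f p) (hr : Function.IsFixedPt f r) :
    ∃ ξ ∈ Set.Ioo p r, f' ξ = 1 := by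
  obtain ⟨ξ, hξ, h⟩ := exists_hasDerivAt_eq_slope f f' hpr
    (fun t _ => (hf t).continuousAt.continuousWithinAt) (fun t _ => hf t)
  exact ⟨ξ, hξ, by rw [h, hp.eq, hr.eq, div_self (sub_pos.2 hpr).ne']⟩

theorem mul_le_sum_of_le_one {ι : Type*} [Fintype ι] {f : ι → ℝ} {E : ℝ} (hf : ∀ i, 0 ≤ f i)
    (hE : E ≤ 1) (i : ι) : E * f i ≤ ∑ j, f j :=
  (mul_le_of_le_one_left (hf i) hE).trans (single_le_sum (fun j _ => hf j) (mem_univ i))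

/-- The slope `Φ' ξ` of the two-step map, at `a = S - E μ b ^ d` and `b = T - E ξ`. -/
theorem recursion_slope_lt_one {d : ℕ} (hd : 0 < d) {q E lam mu S T a b : ℝ}
    (hE : 0 < E) (hlam : 0 < lam) (hmu : 0 < mu) (hS : 0 < S) (hT : 0 < T) (ha : 0 ≤ a)
    (hb : 0 ≤ b) (hq : (d + 1) * E ≤ q)
    (hjensenR : lam * ((q - E) * S) ^ d < q ^ (d - 1) * T)
    (hjensenC : mu * ((q - E) * T) ^ d < q ^ (d - 1) * S)
    (hamgm : ((d : ℝ) + 1) ^ (d + 1) * (E * mu * b ^ d * a ^ d) ≤ (d : ℝ) ^ d * S ^ (d + 1)) :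
    (d : ℝ) ^ 2 * E ^ 2 * lam * mu * (a * b) ^ (d - 1) < 1 := by
  have hD : (0 : ℝ) < d := by exact_mod_cast hd
  have hqE : 0 < q - E := by nlinarith
  have hθ : d * q ≤ (d + 1) * (q - E) := by linarith
  have hq0 : 0 < q := by linarith
  have hΔ : (0 : ℝ) < d + 1 := by linarith
  obtain ⟨n, rfl⟩ := Nat.exists_eq_add_of_lt hd
  rw [zero_add, Nat.add_sub_cancel] at *
  -- `ring` does not split powers of sums with symbolic exponents, so make the bases atoms
  generalize ((n + 1 : ℕ) : ℝ) + 1 = Δ at *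
  generalize ((n + 1 : ℕ) : ℝ) = D at *
  generalize q - E = Q at *
  -- the product of the two Jensen bounds, `n` copies of AM-GM and powers of the two forms of the
  -- threshold is the `(n + 1)`-st power of the slope times a positive factor
  have key : (D ^ 2 * E ^ 2 * lam * mu * (a * b) ^ n) ^ (n + 1) *
        (((D ^ (n + 1) * S ^ (n + 2)) ^ n * (Δ * Q) ^ ((n + 1) * (n + 2)) * q ^ (n + 2)) *
          ((q ^ n * T) ^ (n + 1) * (q ^ n * S)))
      = ((Δ ^ (n + 2) * (E * mu * b ^ (n + 1) * a ^ (n + 1))) ^ n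
          * (D * q) ^ ((n + 1) * (n + 2)) * (Δ * E) ^ (n + 2)) *
        ((lam * (Q * S) ^ (n + 1)) ^ (n + 1) * (mu * (Q * T) ^ (n + 1))) := by
    ring
  have hlt : ((Δ ^ (n + 2) * (E * mu * b ^ (n + 1) * a ^ (n + 1))) ^ n
          * (D * q) ^ ((n + 1) * (n + 2)) * (Δ * E) ^ (n + 2)) *
        ((lam * (Q * S) ^ (n + 1)) ^ (n + 1) * (mu * (Q * T) ^ (n + 1))) <
      ((D ^ (n + 1) * S ^ (n + 2)) ^ n * (Δ * Q) ^ ((n + 1) * (n + 2)) * q ^ (n + 2)) *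
          ((q ^ n * T) ^ (n + 1) * (q ^ n * S)) := by
    refine mul_lt_mul' ?_ (mul_lt_mul'' (pow_lt_pow_left₀ hjensenR (by positivity) (by omega))
      hjensenC (by positivity) (by positivity)) (by positivity) (by positivity)
    gcongr ?_ ^ n * ?_ ^ ((n + 1) * (n + 2)) * ?_ ^ (n + 2)
  rw [← key, mul_lt_iff_lt_one_left (by positivity)] at hlt
  exact (pow_lt_one_iff_of_nonneg (by positivity) (by omega)).mp hlt

/-- With `E = 1 - B`, `recursionMap d λ E (∑ j, C j) (C i) = λ (B C_i + ∑_{j ≠ i} C_j) ^ d`. -/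
def recursionMap (d : ℕ) (κ E S t : ℝ) : ℝ := κ * (S - E * t) ^ d

theorem hasDerivAt_recursionMap (d : ℕ) (κ E S t : ℝ) :
    HasDerivAt (recursionMap d κ E S) (-(d * κ * E * (S - E * t) ^ (d - 1))) t := by
  refine (((((hasDerivAt_id t).const_mul E).const_sub S).pow d).const_mul κ).congr_deriv ?_
  simp only [id]
  ring

section
variable {ι : Type*} [Fintype ι] {d : ℕ} {κ E : ℝ} {R C : ι → ℝ}

theorem mul_pow_lt_of_recursionMap (hd : 2 ≤ d) (hκ : 0 < κ) (hE0 : E ≠ 0) (hE1 : E ≤ 1)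
    (hC : ∀ i, 0 ≤ C i) (hRC : ∀ i, R i = recursionMap d κ E (∑ j, C j) (C i)) {i j : ι}
    (hij : C i ≠ C j) :
    κ * ((Fintype.card ι - E) * ∑ k, C k) ^ d < (Fintype.card ι : ℝ) ^ (d - 1) * ∑ k, R k := by
  obtain ⟨n, rfl⟩ : ∃ n, d = n + 1 := ⟨d - 1, by omega⟩
  have hsum : ∑ k, (∑ j, C j - E * C k) = (Fintype.card ι - E) * ∑ k, C k := by
    rw [sum_sub_distrib, ← mul_sum, sum_const, card_univ, nsmul_eq_mul]
    ring
  have jensen := pow_sum_lt_card_mul_sum_pow (s := univ) (f := fun k => ∑ j, C j - E * C k)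
    (fun k _ => sub_nonneg.2 (mul_le_sum_of_le_one hC hE1 k)) (mem_univ i) (mem_univ j)
    (by simpa [hE0] using hij) (by omega : 0 < n)
  rw [hsum, card_univ] at jensen
  simp only [hRC, recursionMap, ← mul_sum, Nat.add_sub_cancel]
  calc κ * ((Fintype.card ι - E) * ∑ k, C k) ^ (n + 1)
      < κ * ((Fintype.card ι : ℝ) ^ n * ∑ k, (∑ j, C j - E * C k) ^ (n + 1)) := by gcongr
    _ = _ := by ring

variable {lam mu : ℝ}

theorem not_lt_of_recursionMap (hd : 2 ≤ d) (hE0 : 0 < E) (hE1 : E ≤ 1)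
    (hq : (d + 1) * E ≤ Fintype.card ι) (hlam : 0 < lam) (hmu : 0 < mu)
    (hR : ∀ i, 0 < R i) (hC : ∀ i, 0 < C i)
    (hRC : ∀ i, R i = recursionMap d lam E (∑ j, C j) (C i))
    (hCR : ∀ i, C i = recursionMap d mu E (∑ j, R j) (R i)) (i j : ι) : ¬ R i < R j := by
  intro hij
  set S := ∑ k, C k
  set T := ∑ k, R k
  have hS : 0 < S := sum_pos (fun k _ => hC k) ⟨i, mem_univ i⟩
  have hT : 0 < T := sum_pos (fun k _ => hR k) ⟨i, mem_univ i⟩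
  have fixed (k : ι) :
      Function.IsFixedPt (recursionMap d lam E S ∘ recursionMap d mu E T) (R k) := by
    simp only [Function.IsFixedPt, Function.comp_apply, ← hCR, ← hRC]
  obtain ⟨ξ, ⟨hiξ, hξj⟩, hslope⟩ := exists_hasDerivAt_eq_one_of_isFixedPt hij
    (fun t => (hasDerivAt_recursionMap d lam E S _).comp t (hasDerivAt_recursionMap d mu E T t))
    (fixed i) (fixed j)
  set b := T - E * ξ
  set a := S - E * recursionMap d mu E T ξ
  have hb : 0 ≤ b := by
    have := mul_le_sum_of_le_one (fun k => (hR k).le) hE1 j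
    nlinarith
  have ha : 0 ≤ a := by
    have hCξ : recursionMap d mu E T ξ ≤ C i := by
      rw [hCR i, recursionMap, recursionMap]
      gcongr
    have := mul_le_sum_of_le_one (fun k => (hC k).le) hE1 i
    nlinarith
  have hamgm :=
    succ_pow_succ_mul_mul_pow_le (d := d) (by omega) (z := E * mu * b ^ d) (by positivity) ha
  rw [show E * mu * b ^ d + a = S by simp only [a, b, recursionMap]; ring] at hamgm
  have hCij : C i ≠ C j := fun h => hij.ne (by rw [hRC i, hRC j, h])
  refine (recursion_slope_lt_one (by omega) hE0 hlam hmu hS hT ha hb hq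
    (mul_pow_lt_of_recursionMap hd hlam hE0.ne' hE1 (fun k => (hC k).le) hRC hCij)
    (mul_pow_lt_of_recursionMap hd hmu hE0.ne' hE1 (fun k => (hR k).le) hCR hij.ne)
    (by linarith)).ne' ?_
  rw [← hslope, mul_pow]
  ring

end

theorem potts_semi_translation_uniqueness_general
    (q Δ : ℕ) (hΔ : 3 ≤ Δ)
    (B : ℝ) (hB0 : 0 ≤ B) (hB1 : B < 1) (hBc : ((Δ : ℝ) - q) / Δ ≤ B)
    (R C : Fin q → ℝ) (lam mu : ℝ)
    (hR : ∀ i, 0 < R i) (hC : ∀ j, 0 < C j)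
    (hlam : 0 < lam) (hmu : 0 < mu)
    (hrecR : ∀ i, R i = lam * (B * C i + ((∑ j, C j) - C i)) ^ (Δ - 1))
    (hrecC : ∀ j, C j = mu * (B * R j + ((∑ i, R i) - R j)) ^ (Δ - 1)) :
    (∀ i j, R i = R j) ∧ (∀ i j, C i = C j) := by
  obtain ⟨d, rfl⟩ : ∃ d, Δ = d + 1 := ⟨Δ - 1, by omega⟩
  have as_recursionMap (X Y : Fin q → ℝ) (κ : ℝ)
      (h : ∀ i, X i = κ * (B * Y i + ((∑ j, Y j) - Y i)) ^ (d + 1 - 1)) (i : Fin q) :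
      X i = recursionMap d κ (1 - B) (∑ j, Y j) (Y i) := by
    rw [h i, recursionMap, Nat.add_sub_cancel]
    ring
  have hthreshold : (d + 1) * (1 - B) ≤ Fintype.card (Fin q) := by
    rw [div_le_iff₀ (by positivity)] at hBc
    rw [Fintype.card_fin]
    push_cast at hBc ⊢
    linarith
  have hR_const (i j : Fin q) : R i = R j :=
    have := not_lt_of_recursionMap (d := d) (by omega) (by linarith) (by linarith) hthreshold
      hlam hmu hR hC (as_recursionMap R C lam hrecR) (as_recursionMap C R mu hrecC)
    le_antisymm (not_lt.1 (this j i)) (not_lt.1 (this i j))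
  exact ⟨hR_const, fun i j => by rw [hrecC i, hrecC j, hR_const i j]⟩

/-- in the uniqueness regime B ≥ (Δ−q)/Δ, every positive solution
of the antiferromagnetic Potts tree recursions is constant. -/
theorem potts_semi_translation_uniqueness
    (q Δ : ℕ) (hq : 3 ≤ q) (hΔ : 3 ≤ Δ)
    (B : ℝ) (hB0 : 0 ≤ B) (hB1 : B < 1) (hBc : ((Δ : ℝ) - q) / Δ ≤ B)
    (R C : Fin q → ℝ) (lam mu : ℝ)
    (hR : ∀ i, 0 < R i) (hC : ∀ j, 0 < C j)
    (hlam : 0 < lam) (hmu : 0 < mu)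
    (hrecR : ∀ i, R i = lam * (B * C i + ((∑ j, C j) - C i)) ^ (Δ - 1))
    (hrecC : ∀ j, C j = mu * (B * R j + ((∑ i, R i) - R j)) ^ (Δ - 1)) :
    (∀ i j, R i = R j) ∧ (∀ i j, C i = C j) :=
  potts_semi_translation_uniqueness_general q Δ hΔ B hB0 hB1 hBc R C lam mu hR hC hlam hmu hrecR
    hrecC
end

section
/- Let q ≥ 1 and Δ ≥ 3 be integers, set d = Δ−1, and let B be a real parameter with 0 ≤ B < 1. Let (R₁,…,R_q, C₁,…,C_q, λ, μ) be a positive solution of the Potts tree recursions. Then the set of values {R₁,…,R_q} has at most 3 elements, the set of values {C₁,…,C_q} has at most 3 elements, and these two sets have the same cardinality; moreover R_i = R_j if and only if C_i = C_j. -/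
/-!
Put `u i = B * C i + (∑ C - C i) = ∑ C - (1 - B) * C i`, `a = (1 - B) λ` and `c = (1 - B) μ`.
Substituting one recursion into the other shows that every `u i` is a fixed point of
`φ x = ∑ C - c (∑ R - a x ^ d) ^ d` in the region `0 ≤ x`, `a x ^ d ≤ ∑ R`. There
`φ' x = a c d² (ψ x) ^ (d - 1)` with `ψ x = x (∑ R - a x ^ d) ≥ 0`, so by the mean value theorem
between any two fixed points `ψ` takes the single value `(a c d²) ^ (-1 / (d - 1))`. Four fixed
points would give three such points, which the strict concavity of `ψ` forbids. Finally `R i`,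
`C i` and `u i` determine each other, so the three families take equally many values.
-/

open Set

theorem Set.ncard_range_eq_of_forall_eq_iff {ι α β : Type*} {f : ι → α} {g : ι → β}
    (h : ∀ i j, f i = f j ↔ g i = g j) : (range f).ncard = (range g).ncard := by
  have hker : Setoid.ker f = Setoid.ker g := Setoid.ext fun i j => by
    simp only [Setoid.ker_def, h]
  rw [← Nat.card_coe_set_eq, ← Nat.card_coe_set_eq,
    ← Nat.card_congr (Setoid.quotientKerEquivRange f),
    ← Nat.card_congr (Setoid.quotientKerEquivRange g), hker]

theorem Set.ncard_le_three_of_not_lt_lt_lt {α : Type*} [LinearOrder α] {s : Set α}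
    (hs : s.Finite)
    (h : ∀ x₀ ∈ s, ∀ x₁ ∈ s, ∀ x₂ ∈ s, ∀ x₃ ∈ s, x₀ < x₁ → x₁ < x₂ → x₂ < x₃ → False) :
    s.ncard ≤ 3 := by
  by_contra! hcard
  rw [ncard_eq_toFinset_card s hs] at hcard
  obtain ⟨t, hts, ht⟩ := Finset.exists_subset_card_eq (Nat.succ_le_of_lt hcard)
  let e := t.orderEmbOfFin ht
  have he : ∀ k, e k ∈ s := fun k => hs.mem_toFinset.mp (hts (t.orderEmbOfFin_mem ht k))
  exact h _ (he 0) _ (he 1) _ (he 2) _ (he 3)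
    (e.strictMono (by decide)) (e.strictMono (by decide)) (e.strictMono (by decide))

section

variable {d : ℕ} {a S : ℝ}

theorem strictConcaveOn_mul_sub_mul_pow (hd : 1 ≤ d) (ha : 0 < a) :
    StrictConcaveOn ℝ (Ici 0) fun x : ℝ => x * (S - a * x ^ d) := by
  refine ⟨convex_Ici 0, fun x hx y hy hxy s t hs ht hst => ?_⟩
  have hpow := (strictConvexOn_pow (n := d + 1) (by omega)).2 hx hy hxy hs ht hst
  simp only [smul_eq_mul] at hpow ⊢
  rw [pow_succ', pow_succ', pow_succ'] at hpow
  linear_combination a * hpow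

theorem hasDerivAt_sub_mul_sub_mul_pow_pow (c T x : ℝ) :
    HasDerivAt (fun x : ℝ => T - c * (S - a * x ^ d) ^ d)
      (a * c * d ^ 2 * (x * (S - a * x ^ d)) ^ (d - 1)) x := by
  have hinner := ((hasDerivAt_pow d x).const_mul a).const_sub S
  refine (((hinner.pow d).const_mul c).const_sub T).congr_deriv ?_
  rw [mul_pow]
  ring

end

theorem ncard_fixedPoints_sub_mul_sub_mul_pow_pow_le_three {d : ℕ} (hd : 2 ≤ d) {a c S T : ℝ}
    (ha : 0 < a) {s : Set ℝ} (hs : s.Finite) (hnonneg : ∀ x ∈ s, 0 ≤ x)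
    (hle : ∀ x ∈ s, a * x ^ d ≤ S) (hfix : ∀ x ∈ s, T - c * (S - a * x ^ d) ^ d = x) :
    s.ncard ≤ 3 := by
  set ψ : ℝ → ℝ := fun x => x * (S - a * x ^ d)
  have hslope : ∀ x ∈ s, ∀ y ∈ s, x < y → ∃ ξ ∈ Ioo x y, a * c * d ^ 2 * ψ ξ ^ (d - 1) = 1 := by
    intro x hx y hy hxy
    obtain ⟨ξ, hξ, hderiv⟩ := exists_hasDerivAt_eq_slope _ _ hxy
      (fun z _ => (hasDerivAt_sub_mul_sub_mul_pow_pow c T z).continuousAt.continuousWithinAt)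
      (fun z _ => hasDerivAt_sub_mul_sub_mul_pow_pow c T z)
    refine ⟨ξ, hξ, hderiv.trans ?_⟩
    rw [hfix x hx, hfix y hy, div_self (sub_ne_zero.mpr hxy.ne')]
  have hlevel : ∀ ξ η, 0 ≤ ψ ξ → 0 ≤ ψ η → a * c * d ^ 2 * ψ ξ ^ (d - 1) = 1 →
      a * c * d ^ 2 * ψ η ^ (d - 1) = 1 → ψ ξ = ψ η := by
    intro ξ η hξ hη hξ1 hη1
    have hK : a * c * d ^ 2 ≠ 0 := left_ne_zero_of_mul_eq_one hξ1
    exact (pow_left_inj₀ hξ hη (by omega)).mp (mul_left_cancel₀ hK (hξ1.trans hη1.symm))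
  refine Set.ncard_le_three_of_not_lt_lt_lt hs fun x₀ h₀ x₁ h₁ x₂ h₂ x₃ h₃ h₀₁ h₁₂ h₂₃ => ?_
  obtain ⟨ξ₁, ⟨hx₀ξ₁, hξ₁x₁⟩, hψ₁⟩ := hslope x₀ h₀ x₁ h₁ h₀₁
  obtain ⟨ξ₂, ⟨hx₁ξ₂, hξ₂x₂⟩, hψ₂⟩ := hslope x₁ h₁ x₂ h₂ h₁₂
  obtain ⟨ξ₃, ⟨hx₂ξ₃, hξ₃x₃⟩, hψ₃⟩ := hslope x₂ h₂ x₃ h₃ h₂₃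
  have hx₀ := hnonneg x₀ h₀
  have hpos : ∀ ξ, x₀ < ξ → ξ < x₃ → 0 ≤ ψ ξ := by
    intro ξ hx₀ξ hξx₃
    have : a * ξ ^ d ≤ a * x₃ ^ d := by gcongr; linarith
    exact mul_nonneg (by linarith) (by linarith [hle x₃ h₃])
  have hψ₁₂ : ψ ξ₁ = ψ ξ₂ :=
    hlevel _ _ (hpos _ (by linarith) (by linarith)) (hpos _ (by linarith) (by linarith)) hψ₁ hψ₂
  have hψ₂₃ : ψ ξ₂ = ψ ξ₃ :=
    hlevel _ _ (hpos _ (by linarith) (by linarith)) (hpos _ (by linarith) (by linarith)) hψ₂ hψ₃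
  have hξ₁₃ : ξ₁ < ξ₃ := by linarith
  have hξ₂ : ξ₂ ∈ openSegment ℝ ξ₁ ξ₃ := by
    rw [openSegment_eq_Ioo hξ₁₃]; exact ⟨by linarith, by linarith⟩
  have hconc : min (ψ ξ₁) (ψ ξ₃) < ψ ξ₂ :=
    (strictConcaveOn_mul_sub_mul_pow (by omega) ha).lt_on_openSegment
      (mem_Ici.mpr (by linarith)) (mem_Ici.mpr (by linarith)) hξ₁₃.ne hξ₂
  rw [← hψ₂₃, ← hψ₁₂, min_self] at hconc
  exact hconc.false

theorem ncard_range_potts_field_le_three {ι : Type*} [Fintype ι] {d : ℕ} (hd : 2 ≤ d)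
    {B lam mu : ℝ} (hB0 : 0 ≤ B) (hB1 : B < 1) (hlam : 0 < lam) {R C : ι → ℝ}
    (hR : ∀ i, 0 ≤ R i) (hC : ∀ j, 0 ≤ C j)
    (hrecR : ∀ i, R i = lam * (B * C i + ((∑ j, C j) - C i)) ^ d)
    (hrecC : ∀ j, C j = mu * (B * R j + ((∑ i, R i) - R j)) ^ d) :
    (range fun i => B * C i + ((∑ j, C j) - C i)).ncard ≤ 3 := by
  have hRi : ∀ i, (1 - B) * lam * (B * C i + ((∑ j, C j) - C i)) ^ d = (1 - B) * R i :=
    fun i => by rw [hrecR i]; ring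
  refine ncard_fixedPoints_sub_mul_sub_mul_pow_pow_le_three hd (a := (1 - B) * lam)
    (c := (1 - B) * mu) (S := ∑ i, R i) (T := ∑ j, C j)
    (mul_pos (by linarith) hlam) (finite_range _) ?_ ?_ ?_ <;> rintro _ ⟨i, rfl⟩
  · have := Finset.single_le_sum (fun j _ => hC j) (Finset.mem_univ i)
    nlinarith [hC i]
  · have := Finset.single_le_sum (fun j _ => hR j) (Finset.mem_univ i)
    nlinarith [hR i, hRi i]
  · rw [hRi i, mul_assoc, show ∑ i, R i - (1 - B) * R i = B * R i + (∑ i, R i - R i) by ring,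
      ← hrecC i]
    ring

theorem potts_fixpoint_at_most_three_values_general
    (q Δ : ℕ) (hΔ : 3 ≤ Δ)
    (B : ℝ) (hB0 : 0 ≤ B) (hB1 : B < 1)
    (R C : Fin q → ℝ) (lam mu : ℝ)
    (hR : ∀ i, 0 < R i) (hC : ∀ j, 0 < C j)
    (hlam : 0 < lam)
    (hrecR : ∀ i, R i = lam * (B * C i + ((∑ j, C j) - C i)) ^ (Δ - 1))
    (hrecC : ∀ j, C j = mu * (B * R j + ((∑ i, R i) - R j)) ^ (Δ - 1)) :
    (Set.range R).ncard ≤ 3 ∧ (Set.range C).ncard ≤ 3 ∧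
    (Set.range R).ncard = (Set.range C).ncard ∧
    (∀ i j, R i = R j ↔ C i = C j) := by
  have hRC : ∀ i j, R i = R j ↔ C i = C j := fun i j =>
    ⟨fun h => by rw [hrecC i, hrecC j, h], fun h => by rw [hrecR i, hrecR j, h]⟩
  have hCu : ∀ i j, C i = C j ↔
      B * C i + ((∑ k, C k) - C i) = B * C j + ((∑ k, C k) - C j) := fun i j =>
    ⟨fun h => by rw [h], fun h => by nlinarith⟩
  have hRu := ncard_range_eq_of_forall_eq_iff fun i j => (hRC i j).trans (hCu i j)
  have hucard := ncard_range_potts_field_le_three (by omega) hB0 hB1 hlam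
    (fun i => (hR i).le) (fun j => (hC j).le) hrecR hrecC
  have hRCcard := ncard_range_eq_of_forall_eq_iff hRC
  exact ⟨hRu ▸ hucard, hRCcard ▸ hRu ▸ hucard, hRCcard, hRC⟩

/-- a positive solution of the antiferromagnetic Potts tree recursions
takes at most 3 distinct values among the R_i, at most 3 among the C_j, these two
value sets have the same cardinality, and R_i = R_j iff C_i = C_j. -/
theorem potts_fixpoint_at_most_three_values
    (q Δ : ℕ) (hq : 1 ≤ q) (hΔ : 3 ≤ Δ)
    (B : ℝ) (hB0 : 0 ≤ B) (hB1 : B < 1)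
    (R C : Fin q → ℝ) (lam mu : ℝ)
    (hR : ∀ i, 0 < R i) (hC : ∀ j, 0 < C j)
    (hlam : 0 < lam) (hmu : 0 < mu)
    (hrecR : ∀ i, R i = lam * (B * C i + ((∑ j, C j) - C i)) ^ (Δ - 1))
    (hrecC : ∀ j, C j = mu * (B * R j + ((∑ i, R i) - R j)) ^ (Δ - 1)) :
    (Set.range R).ncard ≤ 3 ∧ (Set.range C).ncard ≤ 3 ∧
    (Set.range R).ncard = (Set.range C).ncard ∧
    (∀ i j, R i = R j ↔ C i = C j) :=
  potts_fixpoint_at_most_three_values_general q Δ hΔ B hB0 hB1 R C lam mu hR hC hlam hrecR hrecC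
end

section
/- Let d ≥ 2 be an integer and z > 1 a real number. Suppose r₂ and c₂ are real numbers with 1 < r₂ < z and 1 < c₂ < z satisfying the two equations r₂ = (z^{d+1} − 1 − c₂^d·(z−1)) / (z^d − 1) and r₂^d = (z^{d+1} − 1 − c₂·(z^d − 1)) / (z − 1). Then r₂ = c₂. -/
open Finset


private lemma refl_sum (x y : ℝ) (d : ℕ) :
    ∑ i ∈ range d, x ^ i * y ^ (d - 1 - i) = ∑ i ∈ range d, y ^ i * x ^ (d - 1 - i) := by
  rw [← Finset.sum_range_reflect (fun i => y ^ i * x ^ (d - 1 - i)) d]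
  refine Finset.sum_congr rfl fun i hi => ?_
  rw [Finset.mem_range] at hi
  have h : d - 1 - (d - 1 - i) = i := by omega
  rw [h, mul_comm]

private lemma core_ineq (d : ℕ) (hd : 2 ≤ d) (z r c : ℝ) (hz : 1 < z)
    (hr : 0 < r) (hrc : r < c) :
    (∑ i ∈ range d, z ^ i * c ^ (d - 1 - i)) * (∑ i ∈ range d, r ^ i)
      < (∑ i ∈ range d, z ^ i * r ^ (d - 1 - i)) * (∑ i ∈ range d, c ^ i) := by
  rw [refl_sum z c d, refl_sum z r d]
  have hterm : ∀ i j : ℕ,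
      0 ≤ (z ^ (d - 1 - i) - z ^ (d - 1 - j)) * (r ^ i * c ^ j - c ^ i * r ^ j) := by
    intro i j
    rcases le_total i j with hij | hij
    · obtain ⟨k, rfl⟩ : ∃ k, j = i + k := ⟨j - i, by omega⟩
      apply mul_nonneg
      · have : z ^ (d - 1 - (i + k)) ≤ z ^ (d - 1 - i) :=
          pow_le_pow_right₀ hz.le (by omega)
        linarith
      · rw [pow_add, pow_add]
        have h1 : r ^ k ≤ c ^ k := pow_le_pow_left₀ hr.le hrc.le k
        have h2 : (0:ℝ) < r ^ i := pow_pos hr i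
        have h3 : (0:ℝ) < c ^ i := pow_pos (hr.trans hrc) i
        nlinarith [mul_nonneg (mul_pos h2 h3).le (sub_nonneg.2 h1)]
    · obtain ⟨k, rfl⟩ : ∃ k, i = j + k := ⟨i - j, by omega⟩
      have ha : z ^ (d - 1 - (j + k)) - z ^ (d - 1 - j) ≤ 0 := by
        have : z ^ (d - 1 - (j + k)) ≤ z ^ (d - 1 - j) :=
          pow_le_pow_right₀ hz.le (by omega)
        linarith
      have hb : r ^ (j + k) * c ^ j - c ^ (j + k) * r ^ j ≤ 0 := by
        rw [pow_add, pow_add]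
        have h1 : r ^ k ≤ c ^ k := pow_le_pow_left₀ hr.le hrc.le k
        have h2 : (0:ℝ) < r ^ j := pow_pos hr j
        have h3 : (0:ℝ) < c ^ j := pow_pos (hr.trans hrc) j
        nlinarith [mul_nonneg (mul_pos h2 h3).le (sub_nonneg.2 h1)]
      nlinarith
  have hkey : ∑ i ∈ range d, ∑ j ∈ range d,
      (z ^ (d - 1 - i) - z ^ (d - 1 - j)) * (r ^ i * c ^ j - c ^ i * r ^ j)
      = 2 * ((∑ i ∈ range d, r ^ i * z ^ (d - 1 - i)) * (∑ i ∈ range d, c ^ i)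
          - (∑ i ∈ range d, c ^ i * z ^ (d - 1 - i)) * (∑ i ∈ range d, r ^ i)) := by
    have e1 := Finset.sum_mul_sum (range d) (range d)
      (fun i => r ^ i * z ^ (d - 1 - i)) (fun j => c ^ j)
    have e2 := Finset.sum_mul_sum (range d) (range d)
      (fun i => c ^ i * z ^ (d - 1 - i)) (fun j => r ^ j)
    have e3 := Finset.sum_mul_sum (range d) (range d)
      (fun i => r ^ i) (fun j => c ^ j * z ^ (d - 1 - j))
    have e4 := Finset.sum_mul_sum (range d) (range d)
      (fun i => c ^ i) (fun j => r ^ j * z ^ (d - 1 - j))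
    calc ∑ i ∈ range d, ∑ j ∈ range d,
        (z ^ (d - 1 - i) - z ^ (d - 1 - j)) * (r ^ i * c ^ j - c ^ i * r ^ j)
        = ∑ i ∈ range d, ∑ j ∈ range d,
          (r ^ i * z ^ (d - 1 - i) * c ^ j - c ^ i * z ^ (d - 1 - i) * r ^ j
            - r ^ i * (c ^ j * z ^ (d - 1 - j)) + c ^ i * (r ^ j * z ^ (d - 1 - j))) :=
          Finset.sum_congr rfl fun i _ => Finset.sum_congr rfl fun j _ => by ring
      _ = ((∑ i ∈ range d, ∑ j ∈ range d, r ^ i * z ^ (d - 1 - i) * c ^ j)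
            - (∑ i ∈ range d, ∑ j ∈ range d, c ^ i * z ^ (d - 1 - i) * r ^ j)
            - (∑ i ∈ range d, ∑ j ∈ range d, r ^ i * (c ^ j * z ^ (d - 1 - j))))
            + (∑ i ∈ range d, ∑ j ∈ range d, c ^ i * (r ^ j * z ^ (d - 1 - j))) := by
          simp only [Finset.sum_add_distrib, Finset.sum_sub_distrib]
      _ = 2 * ((∑ i ∈ range d, r ^ i * z ^ (d - 1 - i)) * (∑ i ∈ range d, c ^ i)
          - (∑ i ∈ range d, c ^ i * z ^ (d - 1 - i)) * (∑ i ∈ range d, r ^ i)) := by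
          rw [← e1, ← e2, ← e3, ← e4]; ring
  have h01 : 0 < (z ^ (d - 1 - 0) - z ^ (d - 1 - 1)) * (r ^ 0 * c ^ 1 - c ^ 0 * r ^ 1) := by
    have hzz : z ^ (d - 1 - 1) < z ^ (d - 1 - 0) := pow_lt_pow_right₀ hz (by omega)
    simp only [pow_zero, pow_one, one_mul, mul_one]
    exact mul_pos (by linarith) (by linarith)
  have hpos : 0 < ∑ i ∈ range d, ∑ j ∈ range d,
      (z ^ (d - 1 - i) - z ^ (d - 1 - j)) * (r ^ i * c ^ j - c ^ i * r ^ j) := by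
    refine Finset.sum_pos' (fun i _ => Finset.sum_nonneg fun j _ => hterm i j) ?_
    refine ⟨0, Finset.mem_range.2 (by omega), ?_⟩
    refine Finset.sum_pos' (fun j _ => hterm 0 j) ⟨1, Finset.mem_range.2 (by omega), h01⟩
  linarith [hkey ▸ hpos]

/-- in the symmetric specialization r₁ = c₃ = z of the 3-supported
fixpoint equations of the antiferromagnetic Potts tree recursions, the two middle
coordinates coincide: r₂ = c₂. -/
theorem potts_symmetric_specialization_middle_equal
    (d : ℕ) (hd : 2 ≤ d) (z r₂ c₂ : ℝ) (hz : 1 < z)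
    (hr : 1 < r₂) (hr' : r₂ < z) (hc : 1 < c₂) (hc' : c₂ < z)
    (h1 : r₂ = (z ^ (d + 1) - 1 - c₂ ^ d * (z - 1)) / (z ^ d - 1))
    (h2 : r₂ ^ d = (z ^ (d + 1) - 1 - c₂ * (z ^ d - 1)) / (z - 1)) :
    r₂ = c₂ := by
  have hz1 : (0:ℝ) < z - 1 := by linarith
  have hzd : (1:ℝ) < z ^ d := one_lt_pow₀ hz (by omega)
  have hzd1 : (0:ℝ) < z ^ d - 1 := by linarith
  rw [eq_div_iff (ne_of_gt hzd1)] at h1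
  rw [eq_div_iff (ne_of_gt hz1)] at h2
  have E1 : (r₂ - 1) * (z ^ d - 1) = (z ^ d - c₂ ^ d) * (z - 1) := by
    linear_combination h1
  have E2 : (z - c₂) * (z ^ d - 1) = (r₂ ^ d - 1) * (z - 1) := by
    linear_combination -h2
  have E1' : (c₂ - 1) * (z ^ d - 1) = (z ^ d - r₂ ^ d) * (z - 1) := by
    linear_combination h2
  have E2' : (z - r₂) * (z ^ d - 1) = (c₂ ^ d - 1) * (z - 1) := by
    linear_combination -h1
  have gzc : z ^ d - c₂ ^ d = (∑ i ∈ range d, z ^ i * c₂ ^ (d - 1 - i)) * (z - c₂) :=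
    (geom_sum₂_mul z c₂ d).symm
  have gzr : z ^ d - r₂ ^ d = (∑ i ∈ range d, z ^ i * r₂ ^ (d - 1 - i)) * (z - r₂) :=
    (geom_sum₂_mul z r₂ d).symm
  have gr : r₂ ^ d - 1 = (∑ i ∈ range d, r₂ ^ i) * (r₂ - 1) := (geom_sum_mul r₂ d).symm
  have gc : c₂ ^ d - 1 = (∑ i ∈ range d, c₂ ^ i) * (c₂ - 1) := (geom_sum_mul c₂ d).symm
  have M1 : ((r₂ - 1) * (z ^ d - 1)) * ((z - c₂) * (z ^ d - 1))
      = ((z ^ d - c₂ ^ d) * (z - 1)) * ((r₂ ^ d - 1) * (z - 1)) := by rw [E1, E2]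
  have M2 : ((c₂ - 1) * (z ^ d - 1)) * ((z - r₂) * (z ^ d - 1))
      = ((z ^ d - r₂ ^ d) * (z - 1)) * ((c₂ ^ d - 1) * (z - 1)) := by rw [E1', E2']
  rw [gzc, gr] at M1
  rw [gzr, gc] at M2
  have hne1 : (r₂ - 1) * (z - c₂) ≠ 0 :=
    ne_of_gt (mul_pos (by linarith) (by linarith))
  have hne2 : (c₂ - 1) * (z - r₂) ≠ 0 :=
    ne_of_gt (mul_pos (by linarith) (by linarith))
  have P1 : (z ^ d - 1) ^ 2
      = (∑ i ∈ range d, z ^ i * c₂ ^ (d - 1 - i)) * (∑ i ∈ range d, r₂ ^ i) * (z - 1) ^ 2 := by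
    refine mul_left_cancel₀ hne1 ?_
    linear_combination M1
  have P2 : (z ^ d - 1) ^ 2
      = (∑ i ∈ range d, z ^ i * r₂ ^ (d - 1 - i)) * (∑ i ∈ range d, c₂ ^ i) * (z - 1) ^ 2 := by
    refine mul_left_cancel₀ hne2 ?_
    linear_combination M2
  have key : (∑ i ∈ range d, z ^ i * c₂ ^ (d - 1 - i)) * (∑ i ∈ range d, r₂ ^ i)
      = (∑ i ∈ range d, z ^ i * r₂ ^ (d - 1 - i)) * (∑ i ∈ range d, c₂ ^ i) :=
    mul_right_cancel₀ (pow_ne_zero 2 (ne_of_gt hz1)) (P1.symm.trans P2)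
  rcases lt_trichotomy r₂ c₂ with h | h | h
  · exact absurd key (ne_of_lt (core_ineq d hd z r₂ c₂ hz (by linarith) h))
  · exact h
  · exact absurd key.symm (ne_of_lt (core_ineq d hd z c₂ r₂ hz (by linarith) h))
end

section
/- Let d ≥ 2 and q′ ≥ 2 be integers and let B be a real parameter with 0 ≤ B < (d+1−2q′)/(d+1). Then there exists exactly one real number x > 1 satisfying x·(q′ + (B+q′−1)·x^d) = B + q′ − 1 + q′·x^d. -/
/-!
Write `c = B + q' - 1` and `d = n + 2`. The equation is `h(x) = 0` for the polynomial
`h(x) = c x^(d+1) - q' x^d + q' x - c`, which vanishes at `1` and satisfies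
`h(1/x) = -h(x)/x^(d+1)`. The bound on `B` says exactly `h'(1) < 0`, so `h` becomes negative
right after `1`, and as `c > 0` it is eventually positive: a root `x > 1` exists.
Two roots `1 < a < b` would give the four zeros `1/a < 1 < a < b` of `h`, hence by Rolle two
distinct positive zeros of `h''(x) = d x^(d-2) (c (d+1) x - q' (d-1))`, which has only one.
-/

open Set

theorem exists_lt_second_deriv_eq_zero_of_four_zeros {f f' f'' : ℝ → ℝ}
    (hf : ∀ x, HasDerivAt f (f' x) x) (hf' : ∀ x, HasDerivAt f' (f'' x) x)
    {x₀ x₁ x₂ x₃ : ℝ} (h₀₁ : x₀ < x₁) (h₁₂ : x₁ < x₂) (h₂₃ : x₂ < x₃)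
    (hx₀ : f x₀ = 0) (hx₁ : f x₁ = 0) (hx₂ : f x₂ = 0) (hx₃ : f x₃ = 0) :
    ∃ s t, x₀ < s ∧ s < t ∧ f'' s = 0 ∧ f'' t = 0 := by
  have rolle : ∀ {g g' : ℝ → ℝ}, (∀ x, HasDerivAt g (g' x) x) → ∀ {a b}, a < b →
      g a = g b → ∃ c ∈ Ioo a b, g' c = 0 := fun hg _ _ hab hgab =>
    exists_hasDerivAt_eq_zero hab (fun x _ => (hg x).continuousAt.continuousWithinAt) hgab
      fun x _ => hg x
  obtain ⟨ξ₁, ⟨h₀ξ₁, hξ₁₁⟩, hξ₁⟩ := rolle hf h₀₁ (hx₀.trans hx₁.symm)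
  obtain ⟨ξ₂, ⟨h₁ξ₂, hξ₂₂⟩, hξ₂⟩ := rolle hf h₁₂ (hx₁.trans hx₂.symm)
  obtain ⟨ξ₃, ⟨h₂ξ₃, -⟩, hξ₃⟩ := rolle hf h₂₃ (hx₂.trans hx₃.symm)
  obtain ⟨s, ⟨hξ₁s, hsξ₂⟩, hs⟩ := rolle hf' (hξ₁₁.trans h₁ξ₂) (hξ₁.trans hξ₂.symm)
  obtain ⟨t, ⟨hξ₂t, -⟩, ht⟩ := rolle hf' (hξ₂₂.trans h₂ξ₃) (hξ₂.trans hξ₃.symm)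
  exact ⟨s, t, h₀ξ₁.trans hξ₁s, hsξ₂.trans hξ₂t, hs, ht⟩

namespace PottsHalfHalf

def poly (c q : ℝ) (n : ℕ) (x : ℝ) : ℝ := c * x ^ (n + 3) - q * x ^ (n + 2) + q * x - c

def polyDeriv (c q : ℝ) (n : ℕ) (x : ℝ) : ℝ :=
  c * (n + 3) * x ^ (n + 2) - q * (n + 2) * x ^ (n + 1) + q

def polyDeriv2 (c q : ℝ) (n : ℕ) (x : ℝ) : ℝ :=
  (n + 2) * x ^ n * (c * (n + 3) * x - q * (n + 1))

variable {c q : ℝ} {n : ℕ}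

theorem hasDerivAt_poly (x : ℝ) : HasDerivAt (poly c q n) (polyDeriv c q n x) x := by
  have := ((((hasDerivAt_pow (n + 3) x).const_mul c).sub
    ((hasDerivAt_pow (n + 2) x).const_mul q)).add ((hasDerivAt_id x).const_mul q)).sub_const c
  refine this.congr_deriv ?_
  simp only [polyDeriv]
  push_cast
  ring

theorem hasDerivAt_polyDeriv (x : ℝ) : HasDerivAt (polyDeriv c q n) (polyDeriv2 c q n x) x := by
  have := (((hasDerivAt_pow (n + 2) x).const_mul (c * (n + 3))).sub
    ((hasDerivAt_pow (n + 1) x).const_mul (q * (n + 2)))).add_const q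
  refine this.congr_deriv ?_
  simp only [polyDeriv2]
  push_cast
  ring

theorem poly_one : poly c q n 1 = 0 := by simp [poly]

theorem poly_inv {x : ℝ} (hx : x ≠ 0) : poly c q n x⁻¹ = -poly c q n x / x ^ (n + 3) := by
  simp only [poly, inv_pow]
  field_simp
  ring

theorem polyDeriv_one : polyDeriv c q n 1 = c * (n + 3) - q * (n + 1) := by
  simp only [polyDeriv, one_pow]
  ring

theorem eq_of_polyDeriv2_eq_zero (hc : c ≠ 0) {s t : ℝ} (hs : 0 < s) (ht : 0 < t)
    (hs₀ : polyDeriv2 c q n s = 0) (ht₀ : polyDeriv2 c q n t = 0) : s = t := by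
  have linear_of_zero : ∀ {x}, 0 < x → polyDeriv2 c q n x = 0 →
      c * (n + 3) * x = q * (n + 1) := by
    intro x hx h
    rcases mul_eq_zero.1 h with h | h
    · exact absurd h (by positivity)
    · linarith
  exact mul_left_cancel₀ (mul_ne_zero hc (by positivity))
    ((linear_of_zero hs hs₀).trans (linear_of_zero ht ht₀).symm)

theorem poly_pos {x : ℝ} (hq : 0 < q) (hcq : c ≤ q) (hx : 1 < x) (hqx : q ≤ c * x) :
    0 < poly c q n x := by
  have hxn : 0 ≤ x ^ (n + 2) * (c * x - q) := by
    have := pow_pos (zero_lt_one.trans hx) (n + 2)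
    exact mul_nonneg this.le (sub_nonneg.2 hqx)
  have : poly c q n x = x ^ (n + 2) * (c * x - q) + (q * x - c) := by
    simp only [poly]
    ring
  rw [this]
  nlinarith

theorem exists_poly_neg_of_polyDeriv_one_neg (h : polyDeriv c q n 1 < 0) :
    ∃ x, 1 < x ∧ poly c q n x < 0 := by
  have hslope := ((hasDerivAt_poly (c := c) (q := q) (n := n) 1).hasDerivWithinAt
    (s := Ioi 1)).limsup_slope_le' (lt_irrefl 1) h
  obtain ⟨x, hx, hx₁⟩ := (hslope.and self_mem_nhdsWithin).exists
  refine ⟨x, hx₁, ?_⟩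
  rw [slope_def_field, poly_one, sub_zero] at hx
  exact neg_of_div_neg_left hx (sub_pos.2 hx₁).le

theorem exists_one_lt_poly_eq_zero (hc : 0 < c) (hcq : c * (n + 3) < q * (n + 1)) :
    ∃ x, 1 < x ∧ poly c q n x = 0 := by
  have hq : 0 < q := by nlinarith
  obtain ⟨x₁, hx₁, hneg⟩ : ∃ x, 1 < x ∧ poly c q n x < 0 :=
    exists_poly_neg_of_polyDeriv_one_neg (by rw [polyDeriv_one]; linarith)
  have hx₁M : x₁ < x₁ + q / c := lt_add_of_pos_right x₁ (div_pos hq hc)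
  have hpos : 0 < poly c q n (x₁ + q / c) := by
    refine poly_pos hq (by nlinarith) (hx₁.trans hx₁M) ?_
    rw [mul_add, mul_div_cancel₀ _ hc.ne']
    nlinarith
  have hcont : Continuous (poly c q n) :=
    continuous_iff_continuousAt.2 fun x => (hasDerivAt_poly x).continuousAt
  obtain ⟨x, ⟨hx₁x, -⟩, hx⟩ :=
    intermediate_value_Ioo hx₁M.le hcont.continuousOn ⟨hneg, hpos⟩
  exact ⟨x, hx₁.trans hx₁x, hx⟩

theorem eq_of_poly_eq_zero (hc : c ≠ 0) {a b : ℝ} (ha : 1 < a) (hb : 1 < b)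
    (ha₀ : poly c q n a = 0) (hb₀ : poly c q n b = 0) : a = b := by
  wlog hab : a < b generalizing a b
  · rcases (not_lt.1 hab).lt_or_eq with h | h
    · exact (this hb ha hb₀ ha₀ h).symm
    · exact h.symm
  have ha₀' : poly c q n a⁻¹ = 0 := by
    rw [poly_inv (by positivity), ha₀, neg_zero, zero_div]
  obtain ⟨s, t, hs, hst, hs₀, ht₀⟩ := exists_lt_second_deriv_eq_zero_of_four_zeros
    hasDerivAt_poly hasDerivAt_polyDeriv (inv_lt_one_of_one_lt₀ ha) ha hab ha₀' poly_one ha₀ hb₀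
  have hs_pos : 0 < s := (inv_pos.2 (zero_lt_one.trans ha)).trans hs
  exact absurd (eq_of_polyDeriv2_eq_zero hc hs_pos (hs_pos.trans hst) hs₀ ht₀) hst.ne

end PottsHalfHalf

open PottsHalfHalf

/-- in the non-uniqueness regime 0 ≤ B < (d+1−2q′)/(d+1), the equation
x(q′ + (B+q′−1)x^d) = B + q′ − 1 + q′ x^d has exactly one real solution x > 1. -/
theorem potts_half_half_fixpoint_unique
    (d q' : ℕ) (hd : 2 ≤ d) (hq : 2 ≤ q')
    (B : ℝ) (hB0 : 0 ≤ B) (hB1 : B < ((d : ℝ) + 1 - 2 * (q' : ℝ)) / ((d : ℝ) + 1)) :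
    ∃! x : ℝ, 1 < x ∧
      x * ((q' : ℝ) + (B + (q' : ℝ) - 1) * x ^ d) = B + (q' : ℝ) - 1 + (q' : ℝ) * x ^ d := by
  obtain ⟨n, rfl⟩ := Nat.exists_eq_add_of_le' hd
  set c := B + (q' : ℝ) - 1
  have hc : 0 < c := by
    have : (2 : ℝ) ≤ q' := by exact_mod_cast hq
    linarith
  have hcq : c * (n + 3) < q' * (n + 1) := by
    push_cast at hB1
    rw [lt_div_iff₀ (by positivity)] at hB1
    linarith
  have equation_iff (x : ℝ) :
      x * (q' + c * x ^ (n + 2)) = c + q' * x ^ (n + 2) ↔ poly c q' n x = 0 := by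
    unfold poly
    constructor <;> intro h <;> linear_combination h
  simp only [equation_iff]
  obtain ⟨x, hx, hx₀⟩ := exists_one_lt_poly_eq_zero hc hcq
  exact ⟨x, ⟨hx, hx₀⟩, fun y ⟨hy, hy₀⟩ => eq_of_poly_eq_zero hc.ne' hy hx hy₀ hx₀⟩
end

section
/- For every integer d ≥ 2 and every real x > 1, one has x^{2d} − d²·x^{d+1} + 2(d²−1)·x^d − d²·x^{d−1} + 1 > 0. -/
open Finset

lemma sum_gt_amgm (y : ℝ) (hy : 1 < y) (e : ℕ) :
    ((e : ℝ) + 2) * y ^ (e + 1) < ∑ k ∈ Finset.range (e + 2), y ^ (2 * k) := by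
  have hy0 : 0 < y := by linarith
  have hrefl : ∑ k ∈ Finset.range (e + 2), y ^ (2 * (e + 1 - k))
      = ∑ k ∈ Finset.range (e + 2), y ^ (2 * k) := by
    have := Finset.sum_range_reflect (fun k => y ^ (2 * k)) (e + 2)
    simpa using this
  have hle : ∀ k ∈ Finset.range (e + 2),
      2 * y ^ (e + 1) ≤ y ^ (2 * k) + y ^ (2 * (e + 1 - k)) := by
    intro k hk
    have hk' : k ≤ e + 1 := by
      have := Finset.mem_range.mp hk; omega
    have hsplit : y ^ (e + 1) = y ^ k * y ^ (e + 1 - k) := by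
      rw [← pow_add]
      congr 1
      omega
    have h1 : y ^ (2 * k) = (y ^ k) ^ 2 := by
      rw [← pow_mul, Nat.mul_comm]
    have h2 : y ^ (2 * (e + 1 - k)) = (y ^ (e + 1 - k)) ^ 2 := by
      rw [← pow_mul, Nat.mul_comm]
    nlinarith [sq_nonneg (y ^ k - y ^ (e + 1 - k))]
  have hstrict : ∃ k ∈ Finset.range (e + 2),
      2 * y ^ (e + 1) < y ^ (2 * k) + y ^ (2 * (e + 1 - k)) := by
    refine ⟨0, Finset.mem_range.mpr (by omega), ?_⟩
    have hpow : 1 < y ^ (e + 1) := one_lt_pow₀ hy (by omega)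
    have h2 : y ^ (2 * (e + 1 - 0)) = (y ^ (e + 1)) ^ 2 := by
      rw [← pow_mul, Nat.mul_comm, Nat.sub_zero]
    rw [h2, Nat.mul_zero, pow_zero]
    nlinarith [sq_nonneg (y ^ (e + 1) - 1)]
  have hsum : ∑ k ∈ Finset.range (e + 2), (2 * y ^ (e + 1))
      < ∑ k ∈ Finset.range (e + 2), (y ^ (2 * k) + y ^ (2 * (e + 1 - k))) :=
    Finset.sum_lt_sum hle hstrict
  rw [Finset.sum_add_distrib, hrefl, Finset.sum_const, Finset.card_range] at hsum
  rw [nsmul_eq_mul] at hsum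
  push_cast at hsum
  linarith

/-- for every integer d ≥ 2 and every real x > 1,
x^{2d} − d²x^{d+1} + 2(d²−1)x^d − d²x^{d−1} + 1 > 0. -/
theorem quartic_root_polynomial_positive
    (d : ℕ) (hd : 2 ≤ d) (x : ℝ) (hx : 1 < x) :
    0 < x ^ (2 * d) - (d : ℝ) ^ 2 * x ^ (d + 1) + 2 * ((d : ℝ) ^ 2 - 1) * x ^ d
        - (d : ℝ) ^ 2 * x ^ (d - 1) + 1 := by
  obtain ⟨e, rfl⟩ : ∃ e, d = e + 2 := ⟨d - 2, by omega⟩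
  have hx0 : 0 < x := by linarith
  set y := Real.sqrt x with hy_def
  have hyx : y ^ 2 = x := Real.sq_sqrt hx0.le
  have hy : 1 < y := by
    have := Real.lt_sqrt (x := 1) (y := x) (by norm_num)
    simpa using this.mpr (by simpa using hx)
  have hkey := sum_gt_amgm y hy e
  -- S = geometric sum in x
  have hS : ∑ k ∈ Finset.range (e + 2), y ^ (2 * k)
      = ∑ k ∈ Finset.range (e + 2), x ^ k := by
    refine Finset.sum_congr rfl fun k _ => ?_
    rw [pow_mul, hyx]
  rw [hS] at hkey
  set S : ℝ := ∑ k ∈ Finset.range (e + 2), x ^ k with hS_def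
  have hgeom : S * (x - 1) = x ^ (e + 2) - 1 := geom_sum_mul x (e + 2)
  have hxe1 : x ^ (e + 1) = (y ^ (e + 1)) ^ 2 := by
    rw [← hyx, ← pow_mul, ← pow_mul, Nat.mul_comm]
  have hypos : 0 < y ^ (e + 1) := pow_pos (by linarith) _
  -- S^2 > (e+2)^2 * x^(e+1)
  have hsq : ((e : ℝ) + 2) ^ 2 * x ^ (e + 1) < S ^ 2 := by
    rw [hxe1]
    nlinarith [hkey, hypos, mul_pos (by positivity : (0:ℝ) < (e:ℝ) + 2) hypos]
  have hx1 : 0 < x - 1 := by linarith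
  have hfinal : 0 < (x - 1) ^ 2 * (S ^ 2 - ((e : ℝ) + 2) ^ 2 * x ^ (e + 1)) :=
    mul_pos (by positivity) (by linarith)
  have e1 : (x - 1) ^ 2 * S ^ 2 = (x ^ (e + 2) - 1) ^ 2 := by
    rw [← hgeom]; ring
  have hd1 : e + 2 - 1 = e + 1 := by omega
  rw [hd1]
  have e2 : x ^ (2 * (e + 2)) - ((e : ℝ) + 2) ^ 2 * x ^ (e + 2 + 1)
      + 2 * (((e : ℝ) + 2) ^ 2 - 1) * x ^ (e + 2) - ((e : ℝ) + 2) ^ 2 * x ^ (e + 1) + 1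
      = (x ^ (e + 2) - 1) ^ 2 - ((e : ℝ) + 2) ^ 2 * x ^ (e + 1) * (x - 1) ^ 2 := by
    ring
  push_cast
  rw [e2]
  nlinarith [hfinal, e1]
end
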